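/- For every HyperLTL_S quantifier-free formula ψ whose trace variables are among x₁,…,xₙ, there exists a Büchi nAAWA A_ψ over the alphabet 2^AP such that L(A_ψ) is exactly the set of n-tuples (π₁,…,πₙ) of traces satisfying {x₁ ↦ (π₁,0), …, xₙ ↦ (πₙ,0)} ⊨ ψ. -/

import Mathlib

set_option linter.unusedVariables false

open Classical

/-- A trace over a set `AP` of atomic propositions: an infinite word over `2^AP`. -/
abbrev Trace (AP : Type) : Type := ℕ → Set AP

/-- Syntax of LTL formulas over `AP` (with `⊤`). -/
inductive LTL (AP : Type) : Type where
  | tt   : LTL AP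
  | atom : AP → LTL AP
  | neg  : LTL AP → LTL AP
  | conj : LTL AP → LTL AP → LTL AP
  | next : LTL AP → LTL AP
  | untl : LTL AP → LTL AP → LTL AP
deriving DecidableEq

namespace LTL

/-- Satisfaction of an LTL formula on a pointed trace. -/
def Sat {AP : Type} : LTL AP → Trace AP → ℕ → Prop
  | tt, _, _ => True
  | atom p, π, i => p ∈ π i
  | neg θ, π, i => ¬ Sat θ π i
  | conj θ₁ θ₂, π, i => Sat θ₁ π i ∧ Sat θ₂ π i
  | next θ, π, i => Sat θ π (i + 1)
  | untl θ₁ θ₂, π, i => ∃ j, i ≤ j ∧ Sat θ₂ π j ∧ ∀ k, i ≤ k → k < j → Sat θ₁ π k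

def or {AP : Type} (a b : LTL AP) : LTL AP := neg (conj (neg a) (neg b))
def impl {AP : Type} (a b : LTL AP) : LTL AP := or (neg a) b
def iff {AP : Type} (a b : LTL AP) : LTL AP := conj (impl a b) (impl b a)
def ev {AP : Type} (a : LTL AP) : LTL AP := untl tt a
def alw {AP : Type} (a : LTL AP) : LTL AP := neg (ev (neg a))

def bigConj {AP : Type} : List (LTL AP) → LTL AP
  | [] => tt
  | θ :: l => conj θ (bigConj l)

def bigDisj {AP : Type} : List (LTL AP) → LTL AP
  | [] => neg tt
  | θ :: l => or θ (bigDisj l)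

/-- The subformulas of an LTL formula. -/
def subf {AP : Type} [DecidableEq AP] : LTL AP → Finset (LTL AP)
  | tt => {tt}
  | atom p => {atom p}
  | neg θ => insert (neg θ) (subf θ)
  | conj a b => insert (conj a b) (subf a ∪ subf b)
  | next θ => insert (next θ) (subf θ)
  | untl a b => insert (untl a b) (subf a ∪ subf b)

/-- Negation, identifying `¬¬θ` with `θ`. -/
def negId {AP : Type} : LTL AP → LTL AP
  | neg θ => θ
  | θ => neg θ

end LTL

/-- The closure of a finite set of LTL formulas: all subformulas and their
negations (identifying `¬¬θ` with `θ`). -/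
def clOf {AP : Type} [DecidableEq AP] (Γ : Finset (LTL AP)) : Finset (LTL AP) :=
  (Γ.biUnion LTL.subf) ∪ (Γ.biUnion LTL.subf).image LTL.negId

/-- Positions `h` and `k` of `π` disagree on the truth value of some formula of `Γ`. -/
def profDiff {AP : Type} (Γ : Set (LTL AP)) (π : Trace AP) (h k : ℕ) : Prop :=
  ∃ θ ∈ Γ, ¬ (LTL.Sat θ π h ↔ LTL.Sat θ π k)

/-- `IsStutterFact Γ π m f` : the increasing sequence of positions `f 0, f 1, …`
(of length `m + 1`, where `m ∈ ℕ∪{∞}`) is the Γ-stutter factorization of `π`: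
`f 0 = 0`; the sequence is strictly increasing (below `m`); the truth value of every
formula of `Γ` is constant on each segment `[f j, f (j+1))` for `j < m` and on the
final infinite segment `[f m, ∞)` when `m` is finite; and between two adjacent
segments the truth value of some formula of `Γ` changes. -/
def IsStutterFact {AP : Type} (Γ : Set (LTL AP)) (π : Trace AP) (m : ℕ∞) (f : ℕ → ℕ) : Prop :=
  f 0 = 0 ∧
  (∀ j : ℕ, (j : ℕ∞) < m → f j < f (j + 1)) ∧
  (∀ j : ℕ, (j : ℕ∞) < m → ∀ θ ∈ Γ, ∀ h k : ℕ,
      f j ≤ h → h < f (j + 1) → f j ≤ k → k < f (j + 1) →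
      (LTL.Sat θ π h ↔ LTL.Sat θ π k)) ∧
  (∀ mf : ℕ, m = (mf : ℕ∞) → ∀ θ ∈ Γ, ∀ h k : ℕ,
      f mf ≤ h → f mf ≤ k → (LTL.Sat θ π h ↔ LTL.Sat θ π k)) ∧
  (∀ j : ℕ, (j : ℕ∞) < m → ∃ θ ∈ Γ, (LTL.Sat θ π (f j) ↔ ¬ LTL.Sat θ π (f (j + 1))))

/-- The position component of the Γ-successor `succ_Γ(π, i)` of a pointed trace:
the first position of the segment (of the Γ-stutter factorization of `π`)
following the one containing `i`, if it exists, and `i + 1` otherwise. -/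
noncomputable def succPos {AP : Type} (Γ : Set (LTL AP)) (π : Trace AP) (i : ℕ) : ℕ :=
  if h : ∃ j, i < j ∧ profDiff Γ π i j then Nat.find h else i + 1

/-- The sequence of positions of `π` selected by the Γ-stutter trace of `π`. -/
noncomputable def stfrNth {AP : Type} (Γ : Set (LTL AP)) (π : Trace AP) : ℕ → ℕ
  | 0 => 0
  | k + 1 => succPos Γ π (stfrNth Γ π k)

/-- The Γ-stutter trace `stfr_Γ(π)` of `π`. -/
noncomputable def stfr {AP : Type} (Γ : Set (LTL AP)) (π : Trace AP) : Trace AP :=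
  fun k => π (stfrNth Γ π k)

/-- Syntax of LTL_S: LTL with stutter-relativized temporal modalities. -/
inductive LTLS (AP : Type) : Type where
  | tt    : LTLS AP
  | atom  : AP → LTLS AP
  | neg   : LTLS AP → LTLS AP
  | conj  : LTLS AP → LTLS AP → LTLS AP
  | nextR : Finset (LTL AP) → LTLS AP → LTLS AP
  | untlR : Finset (LTL AP) → LTLS AP → LTLS AP → LTLS AP

/-- Satisfaction of an LTL_S formula on a pointed trace. -/
def LTLS.Sat {AP : Type} : LTLS AP → Trace AP → ℕ → Prop
  | .tt, _, _ => True
  | .atom p, π, i => p ∈ π i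
  | .neg ψ, π, i => ¬ LTLS.Sat ψ π i
  | .conj a b, π, i => LTLS.Sat a π i ∧ LTLS.Sat b π i
  | .nextR Γ ψ, π, i => LTLS.Sat ψ π (succPos (↑Γ) π i)
  | .untlR Γ a b, π, i => ∃ j : ℕ,
      LTLS.Sat b π ((succPos (↑Γ : Set (LTL AP)) π)^[j] i) ∧
      ∀ k < j, LTLS.Sat a π ((succPos (↑Γ : Set (LTL AP)) π)^[k] i)

/-- A pointed trace assignment: maps each trace variable to a pointed trace. -/
abbrev PTA (AP V : Type) : Type := V → Trace AP × ℕ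

/-- The Γ-successor of a pointed trace assignment. -/
noncomputable def succA {AP V : Type} (Γ : Set (LTL AP)) (Δ : PTA AP V) : PTA AP V :=
  fun x => ((Δ x).1, succPos Γ (Δ x).1 (Δ x).2)

/-- Quantifier-free HyperLTL_S formulas over propositions `AP` and trace variables `V`. -/
inductive HSQF (AP V : Type) : Type where
  | tt    : HSQF AP V
  | atom  : AP → V → HSQF AP V
  | neg   : HSQF AP V → HSQF AP V
  | conj  : HSQF AP V → HSQF AP V → HSQF AP V
  | nextR : Finset (LTL AP) → HSQF AP V → HSQF AP V
  | untlR : Finset (LTL AP) → HSQF AP V → HSQF AP V → HSQF AP V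

namespace HSQF

/-- Satisfaction of a quantifier-free HyperLTL_S formula on a pointed trace assignment. -/
def Sat {AP V : Type} : HSQF AP V → PTA AP V → Prop
  | tt, _ => True
  | atom p x, Δ => p ∈ (Δ x).1 (Δ x).2
  | neg ψ, Δ => ¬ Sat ψ Δ
  | conj a b, Δ => Sat a Δ ∧ Sat b Δ
  | nextR Γ ψ, Δ => Sat ψ (succA (↑Γ) Δ)
  | untlR Γ a b, Δ => ∃ i : ℕ,
      Sat b ((succA (↑Γ : Set (LTL AP)))^[i] Δ) ∧
      ∀ k < i, Sat a ((succA (↑Γ : Set (LTL AP)))^[k] Δ)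

/-- Trace variables occurring in a quantifier-free HyperLTL_S formula. -/
def vars {AP V : Type} : HSQF AP V → Set V
  | tt => ∅
  | atom _ x => {x}
  | neg ψ => vars ψ
  | conj a b => vars a ∪ vars b
  | nextR _ ψ => vars ψ
  | untlR _ a b => vars a ∪ vars b

/-- The subscripts of the temporal modalities occurring in a formula. -/
def subs {AP V : Type} : HSQF AP V → Set (Finset (LTL AP))
  | tt => ∅
  | atom _ _ => ∅
  | neg ψ => subs ψ
  | conj a b => subs a ∪ subs b
  | nextR Γ ψ => insert Γ (subs ψ)
  | untlR Γ a b => insert Γ (subs a ∪ subs b)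

/-- `ψ` is in the fragment HyperLTL_S[Γ]: every modality subscript equals `Γ`. -/
def InFragment {AP V : Type} (Γ : Finset (LTL AP)) (ψ : HSQF AP V) : Prop :=
  ∀ s ∈ ψ.subs, s = Γ

/-- `ψ` is a one-variable formula. -/
def OneVar {AP V : Type} (ψ : HSQF AP V) : Prop := ∃ x : V, ψ.vars ⊆ {x}

/-- Replace every modality subscript by `∅`, yielding a HyperLTL formula. -/
def toHLTL {AP V : Type} : HSQF AP V → HSQF AP V
  | tt => tt
  | atom p x => atom p x
  | neg ψ => neg (toHLTL ψ)
  | conj a b => conj (toHLTL a) (toHLTL b)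
  | nextR _ ψ => nextR ∅ (toHLTL ψ)
  | untlR _ a b => untlR ∅ (toHLTL a) (toHLTL b)

end HSQF

/-- Boolean combinations of formulas satisfying a base predicate. -/
inductive BoolCombOf {AP V : Type} (P : HSQF AP V → Prop) : HSQF AP V → Prop
  | base {ψ} : P ψ → BoolCombOf P ψ
  | tt : BoolCombOf P .tt
  | neg {ψ} : BoolCombOf P ψ → BoolCombOf P (.neg ψ)
  | conj {a b} : BoolCombOf P a → BoolCombOf P b → BoolCombOf P (.conj a b)

/-- Trace quantifiers. -/
inductive Quant : Type where
  | ex  : Quant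
  | all : Quant
deriving DecidableEq

/-- Satisfaction of a block of trace quantifiers followed by a matrix `P`,
over a set `L` of traces, starting from the assignment `Δ`. -/
def SatPfx {AP V : Type} [DecidableEq V] (L : Set (Trace AP)) :
    List (Quant × V) → (PTA AP V → Prop) → PTA AP V → Prop
  | [], P, Δ => P Δ
  | (Quant.ex, x) :: qs, P, Δ => ∃ π ∈ L, SatPfx L qs P (Function.update Δ x (π, 0))
  | (Quant.all, x) :: qs, P, Δ => ∀ π ∈ L, SatPfx L qs P (Function.update Δ x (π, 0))

/-- A HyperLTL_S sentence: a quantifier prefix and a quantifier-free matrix. -/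
structure HSSentence (AP V : Type) : Type where
  pre : List (Quant × V)
  matrix : HSQF AP V

/-- The sentence is closed: quantified variables are pairwise distinct and
every trace variable of the matrix is bound by the prefix. -/
def HSSentence.Closed {AP V : Type} (φ : HSSentence AP V) : Prop :=
  (φ.pre.map Prod.snd).Nodup ∧ ∀ x ∈ φ.matrix.vars, x ∈ φ.pre.map Prod.snd

/-- `L ⊨ φ` for a HyperLTL_S sentence `φ` and a set `L` of traces. -/
def HSSentence.Models {AP V : Type} [DecidableEq V] (φ : HSSentence AP V)
    (L : Set (Trace AP)) : Prop :=
  ∀ Δ₀ : PTA AP V, SatPfx L φ.pre (fun Δ => φ.matrix.Sat Δ) Δ₀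

/-- A simple HyperLTL_S sentence: its matrix is a Boolean combination of
HyperLTL_S[Γ] formulas (for a common finite set `Γ` of LTL formulas) and of
one-variable quantifier-free formulas. -/
def HSSentence.Simple {AP V : Type} (φ : HSSentence AP V) : Prop :=
  ∃ Γ : Finset (LTL AP),
    BoolCombOf (fun ψ => ψ.InFragment Γ ∨ ψ.OneVar) φ.matrix

/-- A Kripke structure over `AP` with state type `S`. -/
structure Kripke (AP S : Type) : Type where
  init : Set S
  E : Set (S × S)
  total : ∀ s : S, ∃ t : S, (s, t) ∈ E
  V : S → Set AP

namespace Kripke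

/-- A path of a Kripke structure. -/
def IsPath {AP S : Type} (K : Kripke AP S) (ν : ℕ → S) : Prop :=
  ν 0 ∈ K.init ∧ ∀ i : ℕ, (ν i, ν (i + 1)) ∈ K.E

/-- The set of traces of a Kripke structure. -/
def Lang {AP S : Type} (K : Kripke AP S) : Set (Trace AP) :=
  {π | ∃ ν : ℕ → S, K.IsPath ν ∧ π = fun i => K.V (ν i)}

/-- The set of traces of `F`-fair paths of a Kripke structure. -/
def FairLang {AP S : Type} (K : Kripke AP S) (F : Set S) : Set (Trace AP) :=
  {π | ∃ ν : ℕ → S, K.IsPath ν ∧ (∀ N : ℕ, ∃ i, N ≤ i ∧ ν i ∈ F) ∧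
        π = fun i => K.V (ν i)}

end Kripke

/-- A finite Kripke structure over `AP` (states are `Fin n`). -/
structure FinKripke (AP : Type) : Type where
  n : ℕ
  K : Kripke AP (Fin n)

def FinKripke.Lang {AP : Type} (K : FinKripke AP) : Set (Trace AP) := K.K.Lang

def FinKripke.FairLang {AP : Type} (K : FinKripke AP) (F : Set (Fin K.n)) :
    Set (Trace AP) := K.K.FairLang F

/-- A nondeterministic Büchi automaton over alphabet `Sig` (finitely many states). -/
structure NBA (Sig : Type) : Type where
  n : ℕ
  init : Set (Fin n)
  trans : Set (Fin n × Sig × Fin n)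
  acc : Set (Fin n)

/-- The ω-language of an NBA. -/
def NBA.Lang {Sig : Type} (A : NBA Sig) : Set (ℕ → Sig) :=
  {w | ∃ ρ : ℕ → Fin A.n, ρ 0 ∈ A.init ∧ (∀ i : ℕ, (ρ i, w i, ρ (i + 1)) ∈ A.trans) ∧
        ∀ N : ℕ, ∃ i, N ≤ i ∧ ρ i ∈ A.acc}

/-- Positive Boolean formulas over `X`. -/
inductive PosBool (X : Type) : Type where
  | tt   : PosBool X
  | ff   : PosBool X
  | var  : X → PosBool X
  | por  : PosBool X → PosBool X → PosBool X
  | pand : PosBool X → PosBool X → PosBool X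

/-- Satisfaction of a positive Boolean formula by a set of variables. -/
def PosBool.SatBy {X : Type} (S : Set X) : PosBool X → Prop
  | .tt => True
  | .ff => False
  | .var x => x ∈ S
  | .por a b => a.SatBy S ∨ b.SatBy S
  | .pand a b => a.SatBy S ∧ b.SatBy S

/-- A Büchi alternating asynchronous word automaton with `m` directions (an `mAAWA`)
over alphabet `Sig`, with finitely many states. -/
structure AAWA (Sig : Type) (m : ℕ) : Type where
  n : ℕ
  init : Fin n
  trans : Fin n → (Fin m → Sig) → PosBool (Fin n × Fin m)
  acc : Set (Fin n)

/-- A run of an `mAAWA` over an `m`-tuple of infinite words: a `(Q × ℕ^m)`-labeled tree. -/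
structure AAWARun {Sig : Type} {m : ℕ} (A : AAWA Sig m) (w : Fin m → (ℕ → Sig)) : Type where
  T : Set (List ℕ)
  Lab : List ℕ → Fin A.n × (Fin m → ℕ)
  rootMem : [] ∈ T
  pclosed : ∀ τ ∈ T, ∀ σ : List ℕ, σ <+: τ → σ ∈ T
  rootLab : Lab [] = (A.init, fun _ => 0)
  step : ∀ τ ∈ T, ∃ (k : ℕ) (c : Fin k → Fin A.n × Fin m),
      (A.trans (Lab τ).1 (fun d => w d ((Lab τ).2 d))).SatBy (Set.range c) ∧
      (∀ j : ℕ, τ ++ [j] ∈ T ↔ j < k) ∧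
      ∀ j : Fin k, Lab (τ ++ [j.1]) =
        ((c j).1, fun d => if d = (c j).2 then (Lab τ).2 d + 1 else (Lab τ).2 d)

/-- The node of a branch at depth `i`. -/
def branchPrefix (b : ℕ → ℕ) (i : ℕ) : List ℕ := (List.range i).map b

/-- `b` describes an infinite branch of the run tree. -/
def AAWARun.IsBranch {Sig : Type} {m : ℕ} {A : AAWA Sig m} {w : Fin m → (ℕ → Sig)}
    (r : AAWARun A w) (b : ℕ → ℕ) : Prop :=
  ∀ i : ℕ, branchPrefix b i ∈ r.T

/-- A run is accepting if every infinite branch visits accepting states infinitely often. -/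
def AAWARun.Accepting {Sig : Type} {m : ℕ} {A : AAWA Sig m} {w : Fin m → (ℕ → Sig)}
    (r : AAWARun A w) : Prop :=
  ∀ b : ℕ → ℕ, r.IsBranch b → ∀ N : ℕ, ∃ i, N ≤ i ∧ (r.Lab (branchPrefix b i)).1 ∈ A.acc

/-- The language of an `mAAWA`: the `m`-tuples of infinite words admitting an accepting run. -/
def AAWA.Lang {Sig : Type} {m : ℕ} (A : AAWA Sig m) : Set (Fin m → (ℕ → Sig)) :=
  {w | ∃ r : AAWARun A w, r.Accepting}

/-- `A` is `k`-synchronous: in every run the reading heads stay within distance `k`. -/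
def AAWA.Synchronous {Sig : Type} {m : ℕ} (A : AAWA Sig m) (k : ℕ) : Prop :=
  ∀ (w : Fin m → (ℕ → Sig)) (r : AAWARun A w), ∀ τ ∈ r.T, ∀ d d' : Fin m,
    (r.Lab τ).2 d ≤ (r.Lab τ).2 d' + k

/-- Quantifier-free HyperLTL_C formulas over propositions `AP` and trace variables `V`:
HyperLTL extended with context modalities `⟨C⟩` for nonempty sets `C` of trace variables. -/
inductive HCQF (AP V : Type) : Type where
  | tt   : HCQF AP V
  | atom : AP → V → HCQF AP V
  | neg  : HCQF AP V → HCQF AP V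
  | conj : HCQF AP V → HCQF AP V → HCQF AP V
  | next : HCQF AP V → HCQF AP V
  | untl : HCQF AP V → HCQF AP V → HCQF AP V
  | ctx  : (C : Set V) → C.Nonempty → HCQF AP V → HCQF AP V

/-- `Δ +_C i` : advance by `i` the positions of the pointed traces assigned to
the variables in the context `C`, leaving the others unchanged. -/
noncomputable def shiftA {AP V : Type} (Δ : PTA AP V) (C : Set V) (i : ℕ) : PTA AP V :=
  fun x => if x ∈ C then ((Δ x).1, (Δ x).2 + i) else Δ x

namespace HCQF

/-- Satisfaction `(Δ, C) ⊨ ψ` of a quantifier-free HyperLTL_C formula. -/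
def Sat {AP V : Type} : HCQF AP V → PTA AP V → Set V → Prop
  | tt, _, _ => True
  | atom p x, Δ, _ => p ∈ (Δ x).1 (Δ x).2
  | neg ψ, Δ, C => ¬ Sat ψ Δ C
  | conj a b, Δ, C => Sat a Δ C ∧ Sat b Δ C
  | next ψ, Δ, C => Sat ψ (shiftA Δ C 1) C
  | untl a b, Δ, C => ∃ i : ℕ, Sat b (shiftA Δ C i) C ∧ ∀ k < i, Sat a (shiftA Δ C k) C
  | ctx C' _ ψ, Δ, _ => Sat ψ Δ C'

/-- Trace variables occurring in a quantifier-free HyperLTL_C formula. -/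
def vars {AP V : Type} : HCQF AP V → Set V
  | tt => ∅
  | atom _ x => {x}
  | neg ψ => vars ψ
  | conj a b => vars a ∪ vars b
  | next ψ => vars ψ
  | untl a b => vars a ∪ vars b
  | ctx _ _ ψ => vars ψ

/-- The set of subformulas of a quantifier-free HyperLTL_C formula. -/
def subf {AP V : Type} : HCQF AP V → Set (HCQF AP V)
  | tt => {tt}
  | atom p x => {atom p x}
  | neg ψ => insert (neg ψ) (subf ψ)
  | conj a b => insert (conj a b) (subf a ∪ subf b)
  | next ψ => insert (next ψ) (subf ψ)
  | untl a b => insert (untl a b) (subf a ∪ subf b)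
  | ctx C h ψ => insert (ctx C h ψ) (subf ψ)

/-- The size of a formula: its number of distinct subformulas. -/
noncomputable def size {AP V : Type} (ψ : HCQF AP V) : ℕ := ψ.subf.ncard

/-- Nesting depth of context modalities. -/
def ctxDepth {AP V : Type} : HCQF AP V → ℕ
  | tt => 0
  | atom _ _ => 0
  | neg ψ => ctxDepth ψ
  | conj a b => max (ctxDepth a) (ctxDepth b)
  | next ψ => ctxDepth ψ
  | untl a b => max (ctxDepth a) (ctxDepth b)
  | ctx _ _ ψ => ctxDepth ψ + 1

/-- Auxiliary predicate for the bounded fragment. `glob` is the set of all trace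
variables occurring in the formula of interest (a context `C` is global iff
`glob ⊆ C`); the flag records whether the current position is in the scope of a
non-global context modality, where only the temporal modality `X` is allowed. -/
def BoundedAux {AP V : Type} (glob : Set V) : Bool → HCQF AP V → Prop
  | _, tt => True
  | _, atom _ _ => True
  | t, neg ψ => BoundedAux glob t ψ
  | t, conj a b => BoundedAux glob t a ∧ BoundedAux glob t b
  | t, next ψ => BoundedAux glob t ψ
  | false, untl a b => BoundedAux glob false a ∧ BoundedAux glob false b
  | true, untl _ _ => False
  | t, ctx C _ ψ => (glob ⊆ C → BoundedAux glob false ψ) ∧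
                    (¬ glob ⊆ C → BoundedAux glob true ψ)

/-- `ψ` is bounded: the only temporal modality occurring in (the scope of) a
non-global context is the next modality `X`. -/
def IsBounded {AP V : Type} (ψ : HCQF AP V) : Prop := BoundedAux ψ.vars false ψ

/-- Auxiliary predicate for the fragment where each temporal modality occurring in
(the scope of) a non-global context is the eventually modality `F` (i.e. `⊤ U ·`). -/
def FOnlyAux {AP V : Type} (glob : Set V) : Bool → HCQF AP V → Prop
  | _, tt => True
  | _, atom _ _ => True
  | t, neg ψ => FOnlyAux glob t ψ
  | t, conj a b => FOnlyAux glob t a ∧ FOnlyAux glob t b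
  | false, next ψ => FOnlyAux glob false ψ
  | true, next _ => False
  | false, untl a b => FOnlyAux glob false a ∧ FOnlyAux glob false b
  | true, untl a b => a = tt ∧ FOnlyAux glob true b
  | t, ctx C _ ψ => (glob ⊆ C → FOnlyAux glob false ψ) ∧
                    (¬ glob ⊆ C → FOnlyAux glob true ψ)

/-- Every temporal modality occurring in the scope of a non-global context
modality is the eventually modality `F`. -/
def FOnlyInNonGlobal {AP V : Type} (glob : Set V) (ψ : HCQF AP V) : Prop :=
  FOnlyAux glob false ψ

end HCQF

/-- A HyperLTL_C sentence: a quantifier prefix and a quantifier-free matrix. -/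
structure HCSentence (AP V : Type) : Type where
  pre : List (Quant × V)
  matrix : HCQF AP V

/-- The sentence is closed: quantified variables are pairwise distinct and every
trace variable of the matrix is bound by the prefix. -/
def HCSentence.Closed {AP V : Type} (φ : HCSentence AP V) : Prop :=
  (φ.pre.map Prod.snd).Nodup ∧ ∀ x ∈ φ.matrix.vars, x ∈ φ.pre.map Prod.snd

/-- `L ⊨ φ` for a HyperLTL_C sentence `φ` and a set `L` of traces
(the matrix is evaluated in the global context `VAR`). -/
def HCSentence.Models {AP V : Type} [DecidableEq V] (φ : HCSentence AP V)
    (L : Set (Trace AP)) : Prop :=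
  ∀ Δ₀ : PTA AP V, SatPfx L φ.pre (fun Δ => φ.matrix.Sat Δ Set.univ) Δ₀

/-- An instance of Post's Correspondence Problem over the alphabet `A`:
`2 * n` nonempty finite words. -/
structure PCPInstance (A : Type) : Type where
  n : ℕ
  npos : 0 < n
  word : Fin 2 → Fin n → List A
  ne : ∀ (ℓ : Fin 2) (i : Fin n), word ℓ i ≠ []

/-- The PCP instance has a solution. -/
def PCPInstance.HasSolution {A : Type} (P : PCPInstance A) : Prop :=
  ∃ is : List (Fin P.n), is ≠ [] ∧
    (is.map (P.word 0)).flatten = (is.map (P.word 1)).flatten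

/-- Atomic propositions used in the PCP reduction:
`AP = Σ ∪ {#} ∪ {p₁,…,pₙ} ∪ {q₁,q₂}`. -/
inductive PCPAP (A : Type) (n : ℕ) : Type where
  | sym  : A → PCPAP A n
  | hash : PCPAP A n
  | pvar : Fin n → PCPAP A n
  | qvar : Fin 2 → PCPAP A n
deriving DecidableEq

/-- `[u, p_i, q_ℓ]` : the word `u` marked with `p_i` and `q_ℓ`, whose last letter is
additionally marked with `#`. -/
def markWord {A : Type} {n : ℕ} (i : Fin n) (ℓ : Fin 2) : List A → List (Set (PCPAP A n))
  | [] => []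
  | [a] => [{PCPAP.sym a, PCPAP.pvar i, PCPAP.qvar ℓ, PCPAP.hash}]
  | a :: b :: rest => ({PCPAP.sym a, PCPAP.pvar i, PCPAP.qvar ℓ} : Set (PCPAP A n)) ::
      markWord i ℓ (b :: rest)

/-- The trace consisting of the finite word `l` followed by the trace `tail`. -/
def listToTrace {A : Type} (l : List (Set A)) (tail : Trace A) : Trace A :=
  fun k => if h : k < l.length then l.get ⟨k, h⟩ else tail (k - l.length)

/-- The well-formed trace `π^ℓ_{i₁,…,i_k} = {#}·[u^ℓ_{i₁},p_{i₁},q_ℓ]⋯[u^ℓ_{i_k},p_{i_k},q_ℓ]·{#}^ω`. -/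
def wfTrace {A : Type} (P : PCPInstance A) (ℓ : Fin 2) (is : List (Fin P.n)) :
    Trace (PCPAP A P.n) :=
  listToTrace (({PCPAP.hash} : Set (PCPAP A P.n)) ::
      (is.map fun i => markWord i ℓ (P.word ℓ i)).flatten)
    (fun _ => {PCPAP.hash})

/-- A well-formed trace for the PCP instance `P`. -/
def IsWellFormed {A : Type} (P : PCPInstance A) (π : Trace (PCPAP A P.n)) : Prop :=
  ∃ (ℓ : Fin 2) (is : List (Fin P.n)), is ≠ [] ∧ π = wfTrace P ℓ is

/-- The set `Γ = {#, p₁, …, pₙ}` of atomic propositions. -/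
def pcpGammaProp (A : Type) (n : ℕ) : Set (PCPAP A n) :=
  {x | x = PCPAP.hash ∨ ∃ i : Fin n, x = PCPAP.pvar i}

/-- The set `Γ = {#, p₁, …, pₙ}` regarded as a set of LTL formulas. -/
def pcpGammaLTL (A : Type) (n : ℕ) : Set (LTL (PCPAP A n)) :=
  LTL.atom '' pcpGammaProp A n

/-- The set `Γ = {#, p₁, …, pₙ}` as a finite set of LTL formulas. -/
def pcpGammaFinset (A : Type) [DecidableEq A] (n : ℕ) : Finset (LTL (PCPAP A n)) :=
  insert (LTL.atom PCPAP.hash)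
    ((Finset.univ : Finset (Fin n)).image fun i => LTL.atom (PCPAP.pvar i))

/-- Instructions of a Minsky 2-counter machine. -/
inductive MOp : Type where
  | inc  : MOp
  | dec  : MOp
  | zero : MOp
deriving DecidableEq

/-- A Minsky 2-counter machine (locations are `Fin nQ`; no transition leaves the
halting location). -/
structure Minsky : Type where
  nQ : ℕ
  qinit : Fin nQ
  qhalt : Fin nQ
  trans : Set (Fin nQ × (MOp × Fin 2) × Fin nQ)
  halt_no_out : ∀ q op q', (q, op, q') ∈ trans → q ≠ qhalt

/-- The one-step relation between configurations of a Minsky machine. -/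
def Minsky.Step (M : Minsky) (c c' : Fin M.nQ × (Fin 2 → ℕ)) : Prop :=
  ∃ (op : MOp) (cnt : Fin 2), (c.1, (op, cnt), c'.1) ∈ M.trans ∧
    (∀ d : Fin 2, d ≠ cnt → c'.2 d = c.2 d) ∧
    (match op with
      | MOp.inc => c'.2 cnt = c.2 cnt + 1
      | MOp.dec => 0 < c.2 cnt ∧ c'.2 cnt + 1 = c.2 cnt
      | MOp.zero => c.2 cnt = 0 ∧ c'.2 cnt = 0)

/-- The machine halts: some computation from the initial configuration reaches the
halting location. -/
def Minsky.Halts (M : Minsky) : Prop :=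
  ∃ c : Fin M.nQ × (Fin 2 → ℕ),
    Relation.ReflTransGen M.Step (M.qinit, fun _ => 0) c ∧ c.1 = M.qhalt

/-- Projection of a trace over `AP ⊕ B` onto `AP`. -/
def projSum {AP B : Type} (w : Trace (AP ⊕ B)) : Trace AP :=
  fun i => {p | Sum.inl p ∈ w i}

/-- The proposition `at(θ)` associated with an LTL formula (`at(p) = p` for atoms). -/
def atProp {AP : Type} : LTL AP → AP ⊕ LTL AP
  | LTL.atom p => Sum.inl p
  | θ => Sum.inr θ


/-! ### Auxiliary development for `stmt4` -/

namespace Stmt4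

open PosBool

@[simp] lemma satBy_tt {X : Type} (S : Set X) : PosBool.SatBy S (.tt : PosBool X) ↔ True := Iff.rfl
@[simp] lemma satBy_ff {X : Type} (S : Set X) : PosBool.SatBy S (.ff : PosBool X) ↔ False := Iff.rfl
@[simp] lemma satBy_var {X : Type} (S : Set X) (x : X) :
    PosBool.SatBy S (.var x) ↔ x ∈ S := Iff.rfl
@[simp] lemma satBy_por {X : Type} (S : Set X) (a b : PosBool X) :
    PosBool.SatBy S (.por a b) ↔ PosBool.SatBy S a ∨ PosBool.SatBy S b := Iff.rfl
@[simp] lemma satBy_pand {X : Type} (S : Set X) (a b : PosBool X) :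
    PosBool.SatBy S (.pand a b) ↔ PosBool.SatBy S a ∧ PosBool.SatBy S b := Iff.rfl

lemma satBy_mono {X : Type} {S S' : Set X} (h : S ⊆ S') :
    ∀ {b : PosBool X}, PosBool.SatBy S b → PosBool.SatBy S' b := by
  intro b
  induction b with
  | tt => simp
  | ff => simp
  | var x => intro hx; exact h hx
  | por a b iha ihb =>
    intro hx
    rcases hx with hx | hx
    · exact Or.inl (iha hx)
    · exact Or.inr (ihb hx)
  | pand a b iha ihb =>
    intro hx
    exact ⟨iha hx.1, ihb hx.2⟩

lemma satBy_finite {X : Type} {S : Set X} :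
    ∀ {b : PosBool X}, PosBool.SatBy S b →
      ∃ (k : ℕ) (c : Fin k → X), Set.range c ⊆ S ∧ PosBool.SatBy (Set.range c) b := by
  intro b
  induction b with
  | tt => intro _; exact ⟨0, Fin.elim0, by simp [Set.range_eq_empty], trivial⟩
  | ff => intro h; exact absurd h (by simp)
  | var x =>
    intro hx
    refine ⟨1, fun _ => x, ?_, ?_⟩
    · intro y hy; rcases hy with ⟨i, rfl⟩; exact hx
    · exact ⟨0, rfl⟩
  | por a b iha ihb =>
    intro hx
    rcases hx with hx | hx
    · rcases iha hx with ⟨k, c, hsub, hsat⟩; exact ⟨k, c, hsub, Or.inl hsat⟩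
    · rcases ihb hx with ⟨k, c, hsub, hsat⟩; exact ⟨k, c, hsub, Or.inr hsat⟩
  | pand a b iha ihb =>
    intro hx
    rcases iha hx.1 with ⟨k₁, c₁, hsub₁, hsat₁⟩
    rcases ihb hx.2 with ⟨k₂, c₂, hsub₂, hsat₂⟩
    refine ⟨k₁ + k₂, fun i => if h : (i : ℕ) < k₁ then c₁ ⟨i, h⟩ else
      c₂ ⟨(i : ℕ) - k₁, by omega⟩, ?_, ?_, ?_⟩
    · intro y hy
      rcases hy with ⟨i, rfl⟩
      by_cases h : (i : ℕ) < k₁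
      · simp only [h, dif_pos]; exact hsub₁ ⟨_, rfl⟩
      · simp only [h, dif_neg, not_false_iff]; exact hsub₂ ⟨_, rfl⟩
    · refine satBy_mono ?_ hsat₁
      intro y hy; rcases hy with ⟨i, rfl⟩
      refine ⟨⟨(i : ℕ), by omega⟩, ?_⟩
      simp [i.isLt]
    · refine satBy_mono ?_ hsat₂
      intro y hy; rcases hy with ⟨i, rfl⟩
      refine ⟨⟨k₁ + (i : ℕ), by omega⟩, ?_⟩
      have h1 : ¬ (k₁ + (i : ℕ) < k₁) := by omega
      simp [h1]

/-- One-step head advance. -/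
def bump {m : ℕ} (p : Fin m → ℕ) (d : Fin m) : Fin m → ℕ :=
  fun e => if e = d then p e + 1 else p e

lemma no_descending {α : Type} {lt : α → α → Prop} (hwf : WellFounded lt)
    (f : ℕ → α) (h : ∀ i, lt (f (i+1)) (f i)) : False := by
  have key : ∀ a, Acc lt a → ∀ g : ℕ → α, g 0 = a → (∀ i, lt (g (i+1)) (g i)) → False := by
    intro a ha
    induction ha with
    | intro x _ ih =>
      intro g hg hlt
      exact ih (g 1) (hg ▸ hlt 0) (fun i => g (i+1)) rfl (fun i => hlt (i+1))
  exact key (f 0) (hwf.apply _) f rfl h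

lemma antitone_nat_stabilizes (f : ℕ → ℕ) (h : ∀ i, f (i+1) ≤ f i) :
    ∃ N, ∀ i, N ≤ i → f i = f N := by
  have hmono : ∀ i j, i ≤ j → f j ≤ f i := by
    intro i j hij
    induction hij with
    | refl => exact le_rfl
    | step _ ih => exact le_trans (h _) ih
  by_contra hcon
  push_neg at hcon
  have key : ∀ v, ∀ N, f N = v → False := by
    intro v
    induction v using Nat.strong_induction_on with
    | _ v ih =>
      intro N hN
      rcases hcon N with ⟨i, hNi, hne⟩
      have hlt : f i < v := hN ▸ lt_of_le_of_ne (hmono _ _ hNi) hne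
      exact ih (f i) hlt i rfl
  exact key (f 0) 0 rfl

lemma branchPrefix_succ (b : ℕ → ℕ) (i : ℕ) :
    branchPrefix b (i+1) = branchPrefix b i ++ [b i] := by
  simp [branchPrefix, List.range_succ]

/-- Master completeness lemma: from a locally-consistent semantic assignment with a
well-founded progress measure, build an accepting run. -/
theorem masterComplete {Sig : Type} {m : ℕ} (A : AAWA Sig m) (w : Fin m → ℕ → Sig)
    (Sem : Fin A.n → (Fin m → ℕ) → Prop) {α : Type} (r : Fin A.n → (Fin m → ℕ) → α)
    (lt : α → α → Prop) (hwf : WellFounded lt)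
    (H : ∀ q p, Sem q p → ∃ (k : ℕ) (c : Fin k → Fin A.n × Fin m),
      PosBool.SatBy (Set.range c) (A.trans q (fun d => w d (p d))) ∧
      ∀ j : Fin k, Sem (c j).1 (bump p (c j).2) ∧
        ((c j).1 ∉ A.acc → lt (r (c j).1 (bump p (c j).2)) (r q p)))
    (h0 : Sem A.init (fun _ => 0)) : w ∈ A.Lang := by
  classical
  -- total choice functions
  have H' : ∀ q p, ∃ (k : ℕ) (c : Fin k → Fin A.n × Fin m), Sem q p →
      (PosBool.SatBy (Set.range c) (A.trans q (fun d => w d (p d))) ∧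
      ∀ j : Fin k, Sem (c j).1 (bump p (c j).2) ∧
        ((c j).1 ∉ A.acc → lt (r (c j).1 (bump p (c j).2)) (r q p))) := by
    intro q p
    by_cases h : Sem q p
    · rcases H q p h with ⟨k, c, h1, h2⟩; exact ⟨k, c, fun _ => ⟨h1, h2⟩⟩
    · exact ⟨0, Fin.elim0, fun hc => absurd hc h⟩
  choose K C hKC using H'
  set Node := Fin A.n × (Fin m → ℕ) with hNode
  let child : Node → ℕ → Option Node := fun qp j =>
    if hj : j < K qp.1 qp.2 then
      some ((C qp.1 qp.2 ⟨j, hj⟩).1, bump qp.2 (C qp.1 qp.2 ⟨j, hj⟩).2)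
    else none
  let root : Node := (A.init, fun _ => 0)
  let g : List ℕ → Option Node := fun l =>
    l.rec (some root) (fun j _t ih => ih.bind (fun qp => child qp j))
  have g_nil : g [] = some root := rfl
  have g_cons : ∀ j t, g (j :: t) = (g t).bind (fun qp => child qp j) := fun _ _ => rfl
  -- invariant
  have inv : ∀ l qp, g l = some qp → Sem qp.1 qp.2 := by
    intro l
    induction l with
    | nil => intro qp h; rw [g_nil] at h; cases h; exact h0
    | cons j t ih =>
      intro qp h
      rw [g_cons] at h
      rcases Option.bind_eq_some_iff.mp h with ⟨qp', hqp', hch⟩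
      have hsem' := ih qp' hqp'
      dsimp only [child] at hch
      split at hch
      · cases hch
        exact ((hKC qp'.1 qp'.2 hsem').2 _).1
      · exact absurd hch (by simp)
  have g_append : ∀ l₁ l₂ : List ℕ, (g (l₁ ++ l₂)).isSome → (g l₂).isSome := by
    intro l₁
    induction l₁ with
    | nil => intro l₂ h; exact h
    | cons j t ih =>
      intro l₂ h
      rw [List.cons_append, g_cons] at h
      rcases Option.isSome_iff_exists.mp h with ⟨qp, hqp⟩
      rcases Option.bind_eq_some_iff.mp hqp with ⟨qp', hqp', _⟩
      exact ih l₂ (by simp [hqp'])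
  let Lab : List ℕ → Node := fun τ => (g τ.reverse).getD root
  have lab_eq : ∀ τ qp, g τ.reverse = some qp → Lab τ = qp := by
    intro τ qp h; simp only [Lab, h, Option.getD_some]
  refine ⟨⟨{τ | (g τ.reverse).isSome}, Lab, ?_, ?_, ?_, ?_⟩, ?_⟩
  · show (g ([] : List ℕ).reverse).isSome = true
    simp [g_nil]
  · -- prefix closed
    intro τ hτ σ hpre
    rcases hpre with ⟨t, rfl⟩
    simp only [Set.mem_setOf_eq, List.reverse_append] at hτ ⊢
    exact g_append _ _ hτ
  · simp only [Lab, List.reverse_nil, g_nil, Option.getD_some]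
    rfl
  · -- step
    intro τ hτ
    simp only [Set.mem_setOf_eq] at hτ
    rcases Option.isSome_iff_exists.mp hτ with ⟨qp, hqp⟩
    have hLab := lab_eq τ qp hqp
    have hsem : Sem qp.1 qp.2 := inv _ _ hqp
    obtain ⟨hsat, hchild⟩ := hKC qp.1 qp.2 hsem
    refine ⟨K qp.1 qp.2, C qp.1 qp.2, ?_, ?_, ?_⟩
    · rw [hLab]; exact hsat
    · intro j
      have : (τ ++ [j]).reverse = j :: τ.reverse := by simp
      simp only [Set.mem_setOf_eq, this, g_cons, hqp, Option.bind_some]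
      constructor
      · intro h
        dsimp only [child] at h
        by_contra hk
        rw [dif_neg hk] at h
        simp at h
      · intro h
        dsimp only [child]
        rw [dif_pos h]
        simp
    · intro j
      have hrev : (τ ++ [(j : ℕ)]).reverse = (j : ℕ) :: τ.reverse := by simp
      have : g ((τ ++ [(j : ℕ)]).reverse) =
          some ((C qp.1 qp.2 ⟨(j : ℕ), j.isLt⟩).1,
            bump qp.2 (C qp.1 qp.2 ⟨(j : ℕ), j.isLt⟩).2) := by
        rw [hrev, g_cons, hqp, Option.bind_some]
        dsimp only [child]
        rw [dif_pos j.isLt]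
      rw [lab_eq _ _ this, hLab]
      have hj : (⟨(j : ℕ), j.isLt⟩ : Fin (K qp.1 qp.2)) = j := by
        apply Fin.ext; rfl
      rw [hj]
      rfl
  · -- accepting
    intro b hb N
    by_contra hcon
    push_neg at hcon
    -- the chain of nodes along the branch
    have hnode : ∀ i, ∃ qp, g (branchPrefix b i).reverse = some qp := by
      intro i
      exact Option.isSome_iff_exists.mp (hb i)
    choose nd hnd using hnode
    have hstep : ∀ i, Sem (nd i).1 (nd i).2 ∧
        ((nd (i+1)).1 ∉ A.acc → lt (r (nd (i+1)).1 (nd (i+1)).2) (r (nd i).1 (nd i).2)) := by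
      intro i
      have hsem := inv _ _ (hnd i)
      refine ⟨hsem, ?_⟩
      have hrev : (branchPrefix b (i+1)).reverse = b i :: (branchPrefix b i).reverse := by
        rw [branchPrefix_succ]; simp
      have h1 : g (branchPrefix b (i+1)).reverse =
          (g (branchPrefix b i).reverse).bind (fun qp => child qp (b i)) := by
        rw [hrev, g_cons]
      rw [hnd i, Option.bind_some] at h1
      rw [hnd (i+1)] at h1
      dsimp only [child] at h1
      split at h1
      case isTrue hj =>
        obtain ⟨hsat, hchild⟩ := hKC (nd i).1 (nd i).2 hsem
        have hk := hchild ⟨b i, hj⟩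
        have h2 := Option.some.inj h1
        rw [h2]
        exact hk.2
      case isFalse => simp at h1
    -- all nodes beyond N are non-accepting
    have hnonacc : ∀ i, N ≤ i → (nd i).1 ∉ A.acc := by
      intro i hi hacc
      have hLab := lab_eq _ _ (hnd i)
      apply hcon i hi
      show (Lab (branchPrefix b i)).1 ∈ A.acc
      rw [hLab]
      exact hacc
    have : ∀ i, lt (r (nd (N+1+i+1)).1 (nd (N+1+i+1)).2) (r (nd (N+1+i)).1 (nd (N+1+i)).2) := by
      intro i
      exact (hstep (N+1+i)).2 (hnonacc _ (by omega))
    exact no_descending hwf (fun i => r (nd (N+1+i)).1 (nd (N+1+i)).2) this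

/-- Master soundness lemma: from a locally-consistent refutation with stabilizing
measure, no accepting run exists. -/
theorem masterSound {Sig : Type} {m : ℕ} (A : AAWA Sig m) (w : Fin m → ℕ → Sig)
    (RR : Fin A.n → (Fin m → ℕ) → Prop) (m₀ : Fin A.n → ℕ) (sg : Fin A.n → Bool)
    (hsg : ∀ q, q ∈ A.acc ↔ sg q = false)
    {α : Type} (r : Fin A.n → (Fin m → ℕ) → α) (lt : α → α → Prop) (hwf : WellFounded lt)
    (H : ∀ q p, RR q p → ∀ (k : ℕ) (c : Fin k → Fin A.n × Fin m),
      PosBool.SatBy (Set.range c) (A.trans q (fun d => w d (p d))) →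
      ∃ j : Fin k, RR (c j).1 (bump p (c j).2) ∧ m₀ (c j).1 ≤ m₀ q ∧
        (m₀ (c j).1 = m₀ q → sg (c j).1 = sg q) ∧
        (sg (c j).1 = false → lt (r (c j).1 (bump p (c j).2)) (r q p)))
    (h0 : RR A.init (fun _ => 0)) : w ∉ A.Lang := by
  classical
  rintro ⟨run, hacc⟩
  -- build a rejecting branch
  let Node := {τ : List ℕ // τ ∈ run.T ∧ RR (run.Lab τ).1 (run.Lab τ).2}
  have hroot : ([] : List ℕ) ∈ run.T ∧ RR (run.Lab []).1 (run.Lab []).2 := by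
    refine ⟨run.rootMem, ?_⟩
    rw [run.rootLab]
    exact h0
  have hstep : ∀ x : Node, ∃ y : Node, y.1 = x.1 ++ [y.1.getLastD 0] ∧
      m₀ (run.Lab y.1).1 ≤ m₀ (run.Lab x.1).1 ∧
      (m₀ (run.Lab y.1).1 = m₀ (run.Lab x.1).1 →
        sg (run.Lab y.1).1 = sg (run.Lab x.1).1) ∧
      (sg (run.Lab y.1).1 = false →
        lt (r (run.Lab y.1).1 (run.Lab y.1).2)
           (r (run.Lab x.1).1 (run.Lab x.1).2)) := by
    rintro ⟨τ, hτ, hR⟩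
    obtain ⟨k, c, hsat, hmem, hlab⟩ := run.step τ hτ
    obtain ⟨j, hj⟩ := H _ _ hR k c hsat
    have hmemj : τ ++ [(j : ℕ)] ∈ run.T := (hmem (j : ℕ)).mpr j.isLt
    have hlabj := hlab j
    have hbump : (fun d => if d = (c j).2 then (run.Lab τ).2 d + 1 else (run.Lab τ).2 d) =
        bump (run.Lab τ).2 (c j).2 := rfl
    refine ⟨⟨τ ++ [(j:ℕ)], hmemj, ?_⟩, ?_, ?_, ?_, ?_⟩
    · rw [hlabj, hbump]; exact hj.1
    · simp
    · rw [hlabj]; exact hj.2.1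
    · rw [hlabj]; exact hj.2.2.1
    · rw [hlabj, hbump]; exact hj.2.2.2
  choose next hnext1 hnext2 hnext3 hnext4 using hstep
  let seq : ℕ → Node := fun i => i.rec ⟨[], hroot⟩ (fun _ x => next x)
  have seq_succ : ∀ i, seq (i+1) = next (seq i) := fun _ => rfl
  let b : ℕ → ℕ := fun i => (seq (i+1)).1.getLastD 0
  have hbp : ∀ i, branchPrefix b i = (seq i).1 := by
    intro i
    induction i with
    | zero => rfl
    | succ i ih =>
      rw [branchPrefix_succ, ih]
      have h1 := hnext1 (seq i)
      have h2 : b i = (next (seq i)).1.getLastD 0 := rfl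
      rw [h2, seq_succ]
      exact h1.symm
  have hbranch : run.IsBranch b := by
    intro i
    rw [hbp]
    exact (seq i).2.1
  -- measure stabilizes
  let f : ℕ → ℕ := fun i => m₀ (run.Lab (seq i).1).1
  have hf : ∀ i, f (i+1) ≤ f i := by
    intro i
    show m₀ (run.Lab (seq (i+1)).1).1 ≤ m₀ (run.Lab (seq i).1).1
    rw [seq_succ]
    exact hnext2 (seq i)
  obtain ⟨N, hN⟩ := antitone_nat_stabilizes f hf
  -- sign on the tail
  have hsgstep : ∀ i, N ≤ i → sg (run.Lab (seq (i+1)).1).1 =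
      sg (run.Lab (seq i).1).1 := by
    intro i hi
    rw [seq_succ]
    apply hnext3 (seq i)
    have h1 : f (i+1) = f N := hN (i+1) (by omega)
    have h2 : f i = f N := hN _ hi
    have h1' : m₀ (run.Lab (next (seq i)).1).1 = f N := h1
    exact h1'.trans h2.symm
  have hsgconst : ∀ i, N ≤ i → sg (run.Lab (seq i).1).1 =
      sg (run.Lab (seq N).1).1 := by
    intro i hi
    induction i with
    | zero => cases Nat.le_zero.mp hi; rfl
    | succ i ih =>
      rcases Nat.lt_or_ge N (i+1) with hlt | hge
      · have hNi : N ≤ i := by omega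
        rw [hsgstep i hNi, ih hNi]
      · have : N = i + 1 := by omega
        rw [this]
  -- acceptance forces an accepting state beyond N, so the sign is false on the tail
  obtain ⟨i₀, hi₀, hacc₀⟩ := hacc b hbranch N
  have hfalse : sg (run.Lab (seq N).1).1 = false := by
    have hmem : (run.Lab (branchPrefix b i₀)).1 ∈ A.acc := hacc₀
    rw [hbp i₀] at hmem
    rw [← hsgconst i₀ hi₀]
    exact (hsg _).mp hmem
  have hdesc : ∀ i, N ≤ i →
      lt (r (run.Lab (seq (i+1)).1).1 (run.Lab (seq (i+1)).1).2)
         (r (run.Lab (seq i).1).1 (run.Lab (seq i).1).2) := by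
    intro i hi
    rw [seq_succ]
    apply hnext4 (seq i)
    have := hsgconst (i+1) (by omega)
    rw [seq_succ] at this
    rw [this]
    exact hfalse
  refine no_descending hwf
    (fun i => r (run.Lab (seq (N+i)).1).1 (run.Lab (seq (N+i)).1).2)
    (fun i => ?_)
  show lt (r (run.Lab (seq (N+(i+1))).1).1 (run.Lab (seq (N+(i+1))).1).2)
    (r (run.Lab (seq (N+i)).1).1 (run.Lab (seq (N+i)).1).2)
  have h1 : N + (i+1) = (N + i) + 1 := by omega
  rw [h1]
  exact hdesc (N+i) (by omega)


/-! ### Semantic lemmas for LTL and HyperLTL_S -/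

section Sem

variable {AP : Type}

lemma sat_or (a b : LTL AP) (π : Trace AP) (i : ℕ) :
    LTL.Sat (LTL.or a b) π i ↔ LTL.Sat a π i ∨ LTL.Sat b π i := by
  simp only [LTL.or, LTL.Sat]
  tauto

lemma sat_iff' (a b : LTL AP) (π : Trace AP) (i : ℕ) :
    LTL.Sat (LTL.iff a b) π i ↔ (LTL.Sat a π i ↔ LTL.Sat b π i) := by
  simp only [LTL.iff, LTL.impl, LTL.Sat, sat_or]
  tauto

lemma sat_untl_unfold (a b : LTL AP) (π : Trace AP) (i : ℕ) :
    LTL.Sat (LTL.untl a b) π i ↔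
      LTL.Sat b π i ∨ (LTL.Sat a π i ∧ LTL.Sat (LTL.untl a b) π (i+1)) := by
  constructor
  · rintro ⟨j, hij, hb, ha⟩
    rcases eq_or_lt_of_le hij with rfl | hlt
    · exact Or.inl hb
    · exact Or.inr ⟨ha i le_rfl hlt, ⟨j, hlt, hb, fun k hk1 hk2 => ha k (by omega) hk2⟩⟩
  · rintro (hb | ⟨ha, j, hij, hb, ha'⟩)
    · exact ⟨i, le_rfl, hb, fun k h1 h2 => absurd h2 (by omega)⟩
    · refine ⟨j, by omega, hb, fun k h1 h2 => ?_⟩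
      rcases eq_or_lt_of_le h1 with rfl | h
      · exact ha
      · exact ha' k (by omega) h2

lemma sat_alw (θ : LTL AP) (π : Trace AP) (i : ℕ) :
    LTL.Sat (LTL.alw θ) π i ↔ ∀ j, i ≤ j → LTL.Sat θ π j := by
  simp only [LTL.alw, LTL.ev, LTL.Sat]
  constructor
  · intro h j hj
    by_contra hc
    exact h ⟨j, hj, hc, fun k _ _ => trivial⟩
  · rintro h ⟨j, hj, hc, _⟩
    exact hc (h j hj)

lemma sat_bigConj (l : List (LTL AP)) (π : Trace AP) (i : ℕ) :
    LTL.Sat (LTL.bigConj l) π i ↔ ∀ θ ∈ l, LTL.Sat θ π i := by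
  induction l with
  | nil => simp [LTL.bigConj, LTL.Sat]
  | cons θ l ih => simp [LTL.bigConj, LTL.Sat, ih]

/-- The LTL formula `E_Γ` asserting that the Γ-profile at the current position equals
that at the next position. -/
noncomputable def Efm (Γ : Finset (LTL AP)) : LTL AP :=
  LTL.bigConj (Γ.toList.map fun θ => LTL.iff θ (LTL.next θ))

/-- `G E_Γ` : the Γ-profile never changes from here on. -/
noncomputable def GEfm (Γ : Finset (LTL AP)) : LTL AP := LTL.alw (Efm Γ)

lemma sat_E (Γ : Finset (LTL AP)) (π : Trace AP) (i : ℕ) :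
    LTL.Sat (Efm Γ) π i ↔ ∀ θ ∈ Γ, (LTL.Sat θ π i ↔ LTL.Sat θ π (i+1)) := by
  rw [Efm, sat_bigConj]
  constructor
  · intro h θ hθ
    have := h _ (List.mem_map_of_mem (Finset.mem_toList.mpr hθ))
    rw [sat_iff'] at this
    exact this
  · intro h ξ hξ
    rcases List.mem_map.mp hξ with ⟨θ, hθ, rfl⟩
    rw [sat_iff']
    exact h θ (Finset.mem_toList.mp hθ)

lemma sat_GE (Γ : Finset (LTL AP)) (π : Trace AP) (i : ℕ) :
    LTL.Sat (GEfm Γ) π i ↔ ∀ j, i ≤ j → LTL.Sat (Efm Γ) π j := sat_alw _ _ _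

lemma not_GE_iff (Γ : Finset (LTL AP)) (π : Trace AP) (i : ℕ) :
    ¬ LTL.Sat (GEfm Γ) π i ↔ ∃ j, i ≤ j ∧ ¬ LTL.Sat (Efm Γ) π j := by
  rw [sat_GE]
  push_neg
  rfl

lemma profile_const (Γ : Finset (LTL AP)) (π : Trace AP) (i ℓ : ℕ)
    (hE : ∀ k, i ≤ k → k < ℓ → LTL.Sat (Efm Γ) π k) :
    ∀ j, i ≤ j → j ≤ ℓ → ∀ θ ∈ Γ, (LTL.Sat θ π j ↔ LTL.Sat θ π i) := by
  intro j hij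
  induction j, hij using Nat.le_induction with
  | base => intro _ θ _; rfl
  | succ j hij ih =>
    intro hjl θ hθ
    have h1 : LTL.Sat (Efm Γ) π j := hE j hij (by omega)
    rw [sat_E] at h1
    rw [← h1 θ hθ]
    exact ih (by omega) θ hθ

lemma succPos_of_GE (Γ : Finset (LTL AP)) (π : Trace AP) (i : ℕ)
    (h : LTL.Sat (GEfm Γ) π i) : succPos (↑Γ) π i = i + 1 := by
  rw [succPos, dif_neg]
  rintro ⟨j, hij, θ, hθ, hne⟩
  have hE : ∀ k, i ≤ k → k < j → LTL.Sat (Efm Γ) π k := fun k hk _ =>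
    (sat_GE Γ π i).mp h k hk
  have hconst := profile_const Γ π i j hE j (le_of_lt hij) le_rfl θ
    (Finset.mem_coe.mp hθ)
  exact hne (Iff.symm hconst)

lemma succPos_of_not_GE (Γ : Finset (LTL AP)) (π : Trace AP) (i : ℕ)
    (h2 : ∃ j, i ≤ j ∧ ¬ LTL.Sat (Efm Γ) π j) :
    succPos (↑Γ) π i = Nat.find h2 + 1 := by
  set j₀ := Nat.find h2 with hj₀def
  obtain ⟨hij₀, hnotE⟩ := Nat.find_spec h2
  have hmin : ∀ k, k < j₀ → i ≤ k → LTL.Sat (Efm Γ) π k := by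
    intro k hk hik
    by_contra hc
    exact Nat.find_min h2 hk ⟨hik, hc⟩
  -- the profile is constant on [i, j₀]
  have hconst : ∀ j, i ≤ j → j ≤ j₀ → ∀ θ ∈ Γ, (LTL.Sat θ π j ↔ LTL.Sat θ π i) :=
    profile_const Γ π i j₀ (fun k hk1 hk2 => hmin k hk2 hk1)
  -- some formula changes from j₀ to j₀+1
  rw [sat_E] at hnotE
  obtain ⟨θ, hθ, hne⟩ : ∃ θ, θ ∈ Γ ∧ ¬(LTL.Sat θ π j₀ ↔ LTL.Sat θ π (j₀+1)) := by
    by_contra hc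
    push_neg at hc
    exact hnotE fun θ hθ => hc θ hθ
  have hdiff : profDiff (↑Γ) π i (j₀ + 1) := by
    refine ⟨θ, Finset.mem_coe.mpr hθ, ?_⟩
    intro hiff
    exact hne ((hconst j₀ hij₀ le_rfl θ hθ).trans hiff)
  have hx : ∃ j, i < j ∧ profDiff (↑Γ) π i j := ⟨j₀ + 1, by omega, hdiff⟩
  rw [succPos, dif_pos hx]
  rw [Nat.find_eq_iff]
  refine ⟨⟨by omega, hdiff⟩, ?_⟩
  intro k hk
  rintro ⟨hik, θ', hθ', hne'⟩
  exact hne' (Iff.symm (hconst k (le_of_lt hik) (by omega) θ' (Finset.mem_coe.mp hθ')))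

lemma hsat_untl_unfold {V : Type} (Γ : Finset (LTL AP)) (a b : HSQF AP V)
    (Δ : PTA AP V) :
    HSQF.Sat (HSQF.untlR Γ a b) Δ ↔
      HSQF.Sat b Δ ∨ (HSQF.Sat a Δ ∧ HSQF.Sat (HSQF.untlR Γ a b) (succA (↑Γ) Δ)) := by
  constructor
  · rintro ⟨i, hb, ha⟩
    cases i with
    | zero => exact Or.inl hb
    | succ i =>
      refine Or.inr ⟨ha 0 (by omega), ⟨i, ?_, ?_⟩⟩
      · rw [← Function.iterate_succ_apply]
        exact hb
      · intro k hk
        rw [← Function.iterate_succ_apply]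
        exact ha (k+1) (by omega)
  · rintro (hb | ⟨ha, i, hb, ha'⟩)
    · exact ⟨0, hb, fun k hk => absurd hk (by omega)⟩
    · refine ⟨i+1, ?_, ?_⟩
      · rw [Function.iterate_succ_apply]
        exact hb
      · intro k hk
        cases k with
        | zero => exact ha
        | succ k =>
          rw [Function.iterate_succ_apply]
          exact ha' k (by omega)

end Sem



/-! ### Syntax-level constructions: closures, states, transition formulas -/

section Auto

variable {AP : Type} {n : ℕ}

/-- Size of an LTL formula. -/
def sizeL : LTL AP → ℕ
  | .tt => 1
  | .atom _ => 1
  | .neg a => sizeL a + 1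
  | .conj a b => sizeL a + sizeL b + 1
  | .next a => sizeL a + 1
  | .untl a b => sizeL a + sizeL b + 1

/-- Size of a quantifier-free HyperLTL_S formula. -/
def sizeH {V : Type} : HSQF AP V → ℕ
  | .tt => 1
  | .atom _ _ => 1
  | .neg a => sizeH a + 1
  | .conj a b => sizeH a + sizeH b + 1
  | .nextR _ a => sizeH a + 1
  | .untlR _ a b => sizeH a + sizeH b + 1

lemma subf_self (θ : LTL AP) : θ ∈ LTL.subf θ := by
  cases θ <;> simp [LTL.subf]

lemma sizeL_le_of_subf : ∀ θ θ' : LTL AP, θ' ∈ LTL.subf θ → sizeL θ' ≤ sizeL θ := by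
  intro θ
  induction θ with
  | tt => intro θ' h; simp [LTL.subf] at h; subst h; rfl
  | atom a => intro θ' h; simp [LTL.subf] at h; subst h; rfl
  | neg a ih =>
    intro θ' h
    simp only [LTL.subf, Finset.mem_insert] at h
    rcases h with rfl | h
    · rfl
    · have := ih θ' h; simp [sizeL]; omega
  | conj a b iha ihb =>
    intro θ' h
    simp only [LTL.subf, Finset.mem_insert, Finset.mem_union] at h
    rcases h with rfl | h | h
    · rfl
    · have := iha θ' h; simp [sizeL]; omega
    · have := ihb θ' h; simp [sizeL]; omega
  | next a ih =>
    intro θ' h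
    simp only [LTL.subf, Finset.mem_insert] at h
    rcases h with rfl | h
    · rfl
    · have := ih θ' h; simp [sizeL]; omega
  | untl a b iha ihb =>
    intro θ' h
    simp only [LTL.subf, Finset.mem_insert, Finset.mem_union] at h
    rcases h with rfl | h | h
    · rfl
    · have := iha θ' h; simp [sizeL]; omega
    · have := ihb θ' h; simp [sizeL]; omega

lemma subf_trans : ∀ θ θ' : LTL AP, θ' ∈ LTL.subf θ → LTL.subf θ' ⊆ LTL.subf θ := by
  intro θ
  induction θ with
  | tt => intro θ' h; simp [LTL.subf] at h; subst h; exact Finset.Subset.refl _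
  | atom a => intro θ' h; simp [LTL.subf] at h; subst h; exact Finset.Subset.refl _
  | neg a ih =>
    intro θ' h
    simp only [LTL.subf, Finset.mem_insert] at h
    rcases h with rfl | h
    · exact Finset.Subset.refl _
    · exact (ih θ' h).trans (Finset.subset_insert _ _)
  | conj a b iha ihb =>
    intro θ' h
    simp only [LTL.subf, Finset.mem_insert, Finset.mem_union] at h
    rcases h with rfl | h | h
    · exact Finset.Subset.refl _
    · exact (iha θ' h).trans ((Finset.subset_union_left).trans (Finset.subset_insert _ _))
    · exact (ihb θ' h).trans ((Finset.subset_union_right).trans (Finset.subset_insert _ _))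
  | next a ih =>
    intro θ' h
    simp only [LTL.subf, Finset.mem_insert] at h
    rcases h with rfl | h
    · exact Finset.Subset.refl _
    · exact (ih θ' h).trans (Finset.subset_insert _ _)
  | untl a b iha ihb =>
    intro θ' h
    simp only [LTL.subf, Finset.mem_insert, Finset.mem_union] at h
    rcases h with rfl | h | h
    · exact Finset.Subset.refl _
    · exact (iha θ' h).trans ((Finset.subset_union_left).trans (Finset.subset_insert _ _))
    · exact (ihb θ' h).trans ((Finset.subset_union_right).trans (Finset.subset_insert _ _))

/-- Subformulas of a quantifier-free HyperLTL_S formula. -/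
noncomputable def subH : HSQF AP (Fin n) → Finset (HSQF AP (Fin n))
  | .tt => {.tt}
  | .atom a x => {.atom a x}
  | .neg a => insert (.neg a) (subH a)
  | .conj a b => insert (.conj a b) (subH a ∪ subH b)
  | .nextR Γ a => insert (.nextR Γ a) (subH a)
  | .untlR Γ a b => insert (.untlR Γ a b) (subH a ∪ subH b)

/-- The modality subscripts of a formula, as a finite set. -/
noncomputable def subs' : HSQF AP (Fin n) → Finset (Finset (LTL AP))
  | .tt => ∅
  | .atom _ _ => ∅
  | .neg a => subs' a
  | .conj a b => subs' a ∪ subs' b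
  | .nextR Γ a => insert Γ (subs' a)
  | .untlR Γ a b => insert Γ (subs' a ∪ subs' b)

lemma subH_self (φ : HSQF AP (Fin n)) : φ ∈ subH φ := by
  cases φ <;> simp [subH]

lemma sizeH_le_of_subH : ∀ φ φ' : HSQF AP (Fin n), φ' ∈ subH φ → sizeH φ' ≤ sizeH φ := by
  intro φ
  induction φ with
  | tt => intro φ' h; simp [subH] at h; subst h; rfl
  | atom a x => intro φ' h; simp [subH] at h; subst h; rfl
  | neg a ih =>
    intro φ' h
    simp only [subH, Finset.mem_insert] at h
    rcases h with rfl | h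
    · rfl
    · have := ih φ' h; simp [sizeH]; omega
  | conj a b iha ihb =>
    intro φ' h
    simp only [subH, Finset.mem_insert, Finset.mem_union] at h
    rcases h with rfl | h | h
    · rfl
    · have := iha φ' h; simp [sizeH]; omega
    · have := ihb φ' h; simp [sizeH]; omega
  | nextR Γ a ih =>
    intro φ' h
    simp only [subH, Finset.mem_insert] at h
    rcases h with rfl | h
    · rfl
    · have := ih φ' h; simp [sizeH]; omega
  | untlR Γ a b iha ihb =>
    intro φ' h
    simp only [subH, Finset.mem_insert, Finset.mem_union] at h
    rcases h with rfl | h | h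
    · rfl
    · have := iha φ' h; simp [sizeH]; omega
    · have := ihb φ' h; simp [sizeH]; omega

lemma subH_trans : ∀ φ φ' : HSQF AP (Fin n), φ' ∈ subH φ → subH φ' ⊆ subH φ := by
  intro φ
  induction φ with
  | tt => intro φ' h; simp [subH] at h; subst h; exact Finset.Subset.refl _
  | atom a x => intro φ' h; simp [subH] at h; subst h; exact Finset.Subset.refl _
  | neg a ih =>
    intro φ' h
    simp only [subH, Finset.mem_insert] at h
    rcases h with rfl | h
    · exact Finset.Subset.refl _
    · exact (ih φ' h).trans (Finset.subset_insert _ _)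
  | conj a b iha ihb =>
    intro φ' h
    simp only [subH, Finset.mem_insert, Finset.mem_union] at h
    rcases h with rfl | h | h
    · exact Finset.Subset.refl _
    · exact (iha φ' h).trans ((Finset.subset_union_left).trans (Finset.subset_insert _ _))
    · exact (ihb φ' h).trans ((Finset.subset_union_right).trans (Finset.subset_insert _ _))
  | nextR Γ a ih =>
    intro φ' h
    simp only [subH, Finset.mem_insert] at h
    rcases h with rfl | h
    · exact Finset.Subset.refl _
    · exact (ih φ' h).trans (Finset.subset_insert _ _)
  | untlR Γ a b iha ihb =>
    intro φ' h
    simp only [subH, Finset.mem_insert, Finset.mem_union] at h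
    rcases h with rfl | h | h
    · exact Finset.Subset.refl _
    · exact (iha φ' h).trans ((Finset.subset_union_left).trans (Finset.subset_insert _ _))
    · exact (ihb φ' h).trans ((Finset.subset_union_right).trans (Finset.subset_insert _ _))

lemma subs'_mono : ∀ φ φ' : HSQF AP (Fin n), φ' ∈ subH φ → subs' φ' ⊆ subs' φ := by
  intro φ
  induction φ with
  | tt => intro φ' h; simp [subH] at h; subst h; exact Finset.Subset.refl _
  | atom a x => intro φ' h; simp [subH] at h; subst h; exact Finset.Subset.refl _
  | neg a ih =>
    intro φ' h
    simp only [subH, Finset.mem_insert] at h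
    rcases h with rfl | h
    · exact Finset.Subset.refl _
    · exact ih φ' h
  | conj a b iha ihb =>
    intro φ' h
    simp only [subH, Finset.mem_insert, Finset.mem_union] at h
    rcases h with rfl | h | h
    · exact Finset.Subset.refl _
    · exact (iha φ' h).trans Finset.subset_union_left
    · exact (ihb φ' h).trans Finset.subset_union_right
  | nextR Γ a ih =>
    intro φ' h
    simp only [subH, Finset.mem_insert] at h
    rcases h with rfl | h
    · exact Finset.Subset.refl _
    · exact (ih φ' h).trans (Finset.subset_insert _ _)
  | untlR Γ a b iha ihb =>
    intro φ' h
    simp only [subH, Finset.mem_insert, Finset.mem_union] at h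
    rcases h with rfl | h | h
    · exact Finset.Subset.refl _
    · exact ((iha φ' h).trans Finset.subset_union_left).trans (Finset.subset_insert _ _)
    · exact ((ihb φ' h).trans Finset.subset_union_right).trans (Finset.subset_insert _ _)

/-- All LTL formulas the automaton may need to track, for matrix `ψ`. -/
noncomputable def clL (ψ : HSQF AP (Fin n)) : Finset (LTL AP) :=
  (subs' ψ).biUnion (fun Γ => LTL.subf (GEfm Γ))

/-- States of the raw alternating automaton. -/
inductive St (AP : Type) (n : ℕ) : Type where
  | L (θ : LTL AP) (s : Bool) (x : Fin n)
  | H (φ : HSQF AP (Fin n)) (s : Bool)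
  | W (m : HSQF AP (Fin n)) (s : Bool) (x : ℕ)
  | Wk (m : HSQF AP (Fin n)) (s : Bool) (x : Fin n)

/-- is a modality -/
def IsMod : HSQF AP (Fin n) → Prop
  | .nextR _ _ => True
  | .untlR _ _ _ => True
  | _ => False

/-- The subscript of a modality. -/
def ΓOf : HSQF AP (Fin n) → Finset (LTL AP)
  | .nextR Γ _ => Γ
  | .untlR Γ _ _ => Γ
  | _ => ∅

/-- The continuation of a modality after the jump. -/
def contF : HSQF AP (Fin n) → HSQF AP (Fin n)
  | .nextR _ φ => φ
  | m => m

/-- Transition formulas for the LTL part. -/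
noncomputable def dL : LTL AP → Bool → Fin n → (Fin n → Set AP) → PosBool (St AP n × Fin n)
  | .tt, s, _, _ => if s then .tt else .ff
  | .atom a, s, x, σ => if ((a ∈ σ x) ↔ (s = true)) then .tt else .ff
  | .neg θ, s, x, σ => dL θ (!s) x σ
  | .conj θ₁ θ₂, s, x, σ =>
      if s then .pand (dL θ₁ true x σ) (dL θ₂ true x σ)
      else .por (dL θ₁ false x σ) (dL θ₂ false x σ)
  | .next θ, s, x, _ => .var (.L θ s x, x)
  | .untl θ₁ θ₂, s, x, σ =>
      if s then
        .por (dL θ₂ true x σ)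
          (.pand (dL θ₁ true x σ) (.var (.L (.untl θ₁ θ₂) true x, x)))
      else
        .pand (dL θ₂ false x σ)
          (.por (dL θ₁ false x σ) (.var (.L (.untl θ₁ θ₂) false x, x)))

/-- Transition formulas for the walking states. -/
noncomputable def dWalk (m : HSQF AP (Fin n)) (s : Bool) (x : Fin n)
    (σ : Fin n → Set AP) : PosBool (St AP n × Fin n) :=
  if s then
    .por (.pand (dL (Efm (ΓOf m)) true x σ) (.var (.Wk m true x, x)))
         (.pand (dL (Efm (ΓOf m)) false x σ) (.var (.W m true ((x:ℕ)+1), x)))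
  else
    .pand (.por (dL (Efm (ΓOf m)) false x σ) (.var (.Wk m false x, x)))
          (.por (dL (Efm (ΓOf m)) true x σ) (.var (.W m false ((x:ℕ)+1), x)))

/-- Transition formulas at the entry of the jump of head `x`. -/
noncomputable def dEntry (m : HSQF AP (Fin n)) (s : Bool) (x : Fin n)
    (σ : Fin n → Set AP) : PosBool (St AP n × Fin n) :=
  if s then
    .por (.pand (dL (GEfm (ΓOf m)) true x σ) (.var (.W m true ((x:ℕ)+1), x)))
         (.pand (dL (GEfm (ΓOf m)) false x σ) (dWalk m true x σ))
  else
    .pand (.por (dL (GEfm (ΓOf m)) false x σ) (.var (.W m false ((x:ℕ)+1), x)))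
          (.por (dL (GEfm (ΓOf m)) true x σ) (dWalk m false x σ))

/-- Transition formulas for the HyperLTL_S part. -/
noncomputable def dH (hn : 0 < n) : HSQF AP (Fin n) → Bool → (Fin n → Set AP) →
    PosBool (St AP n × Fin n)
  | .tt, s, _ => if s then .tt else .ff
  | .atom a x, s, σ => if ((a ∈ σ x) ↔ (s = true)) then .tt else .ff
  | .neg φ, s, σ => dH hn φ (!s) σ
  | .conj a b, s, σ =>
      if s then .pand (dH hn a true σ) (dH hn b true σ)
      else .por (dH hn a false σ) (dH hn b false σ)
  | .nextR Γ φ, s, σ => dEntry (.nextR Γ φ) s ⟨0, hn⟩ σ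
  | .untlR Γ a b, s, σ =>
      if s then
        .por (dH hn b true σ)
          (.pand (dH hn a true σ) (dEntry (.untlR Γ a b) true ⟨0, hn⟩ σ))
      else
        .pand (dH hn b false σ)
          (.por (dH hn a false σ) (dEntry (.untlR Γ a b) false ⟨0, hn⟩ σ))

/-- The raw transition function. -/
noncomputable def transRaw (hn : 0 < n) : St AP n → (Fin n → Set AP) →
    PosBool (St AP n × Fin n)
  | .L θ s x, σ => dL θ s x σ
  | .H φ s, σ => dH hn φ s σ
  | .W m s x, σ => if hx : x < n then dEntry m s ⟨x, hx⟩ σ else dH hn (contF m) s σ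
  | .Wk m s x, σ => dWalk m s x σ

/-- Sign of a state. -/
def sgSt : St AP n → Bool
  | .L _ s _ => s
  | .H _ s => s
  | .W _ s _ => s
  | .Wk _ s _ => s

end Auto

/-! ### Semantics of states -/

section AutoSem

variable {AP : Type} {n : ℕ}

/-- The pointed trace assignment given by positions `p` over traces `w`. -/
def asgn (w : Fin n → Trace AP) (p : Fin n → ℕ) : PTA AP (Fin n) :=
  fun x => (w x, p x)

/-- Positions after jumping the heads `≥ x`. -/
noncomputable def jumpPos (Γ : Finset (LTL AP)) (w : Fin n → Trace AP) (x : ℕ)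
    (p : Fin n → ℕ) : Fin n → ℕ :=
  fun y => if (y : ℕ) < x then p y else succPos (↑Γ) (w y) (p y)

/-- The walk target: one past the first position `≥ i` where `E_Γ` fails (default `i+1`). -/
noncomputable def WT (Γ : Finset (LTL AP)) (π : Trace AP) (i : ℕ) : ℕ :=
  if h : ∃ j, i ≤ j ∧ ¬ LTL.Sat (Efm Γ) π j then Nat.find h + 1 else i + 1

/-- Positions after jumping heads `> x`, with head `x` mid-walk. -/
noncomputable def jumpWkPos (Γ : Finset (LTL AP)) (w : Fin n → Trace AP) (x : Fin n)
    (p : Fin n → ℕ) : Fin n → ℕ :=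
  fun y => if (y : ℕ) < (x : ℕ) then p y
    else if y = x then WT Γ (w x) (p x) else succPos (↑Γ) (w y) (p y)

/-- Semantics of the continuation of a modality. -/
noncomputable def cSem (w : Fin n → Trace AP) (m : HSQF AP (Fin n))
    (p : Fin n → ℕ) : Prop :=
  HSQF.Sat (contF m) (asgn w p)

/-- Intended semantics of the states. -/
noncomputable def SemRaw (w : Fin n → Trace AP) : St AP n → (Fin n → ℕ) → Prop
  | .L θ s x, p => if s then LTL.Sat θ (w x) (p x) else ¬ LTL.Sat θ (w x) (p x)
  | .H φ s, p => if s then HSQF.Sat φ (asgn w p) else ¬ HSQF.Sat φ (asgn w p)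
  | .W m s x, p =>
      if s then cSem w m (jumpPos (ΓOf m) w x p) else ¬ cSem w m (jumpPos (ΓOf m) w x p)
  | .Wk m s x, p =>
      if s then (∃ j, p x ≤ j ∧ ¬ LTL.Sat (Efm (ΓOf m)) (w x) j) ∧
          cSem w m (jumpWkPos (ΓOf m) w x p)
      else ¬ ((∃ j, p x ≤ j ∧ ¬ LTL.Sat (Efm (ΓOf m)) (w x) j) ∧
          cSem w m (jumpWkPos (ΓOf m) w x p))

end AutoSem



/-! ### Ranks and jump lemmas -/

section Rank

variable {AP : Type} {n : ℕ}

abbrev Lex4 : Type := ℕ ×ₗ (ℕ ×ₗ (ℕ ×ₗ ℕ))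

def toLex4 (a b c d : ℕ) : Lex4 := toLex (a, toLex (b, toLex (c, d)))

lemma lt4_iff (a b c d a' b' c' d' : ℕ) :
    toLex4 a b c d < toLex4 a' b' c' d' ↔
      a < a' ∨ (a = a' ∧ (b < b' ∨ (b = b' ∧ (c < c' ∨ (c = c' ∧ d < d'))))) := by
  simp only [toLex4, Prod.Lex.lt_iff, ofLex_toLex]

lemma lex4_wf : WellFounded ((· < ·) : Lex4 → Lex4 → Prop) := wellFounded_lt

/-- Witness measure for an LTL until. -/
noncomputable def uwit (π : Trace AP) (a b : LTL AP) (i : ℕ) : ℕ :=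
  if h : ∃ j, i ≤ j ∧ LTL.Sat b π j ∧ ∀ k, i ≤ k → k < j → LTL.Sat a π k
  then Nat.find h - i else 0

lemma uwit_decrease (π : Trace AP) (a b : LTL AP) (i : ℕ)
    (hU : LTL.Sat (LTL.untl a b) π i) (hb : ¬ LTL.Sat b π i) :
    uwit π a b (i+1) < uwit π a b i := by
  have h : ∃ j, i ≤ j ∧ LTL.Sat b π j ∧ ∀ k, i ≤ k → k < j → LTL.Sat a π k := hU
  set j₀ := Nat.find h with hj₀
  obtain ⟨hij₀, hbj₀, haj₀⟩ := Nat.find_spec h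
  have hne : j₀ ≠ i := fun hc => hb (hc ▸ hbj₀)
  have hgt : i < j₀ := lt_of_le_of_ne hij₀ (Ne.symm hne)
  have h' : ∃ j, i+1 ≤ j ∧ LTL.Sat b π j ∧ ∀ k, i+1 ≤ k → k < j → LTL.Sat a π k :=
    ⟨j₀, by omega, hbj₀, fun k hk1 hk2 => haj₀ k (by omega) hk2⟩
  have hle : Nat.find h' ≤ j₀ := Nat.find_min' h' ⟨by omega, hbj₀,
    fun k hk1 hk2 => haj₀ k (by omega) hk2⟩
  rw [uwit, uwit, dif_pos h, dif_pos h', ← hj₀]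
  omega

/-- Witness measure for a HyperLTL_S until. -/
noncomputable def hwit (w : Fin n → Trace AP) (Γ : Finset (LTL AP))
    (a b : HSQF AP (Fin n)) (p : Fin n → ℕ) : ℕ :=
  if h : ∃ i, HSQF.Sat b ((succA (↑Γ))^[i] (asgn w p)) ∧
      ∀ k < i, HSQF.Sat a ((succA (↑Γ))^[k] (asgn w p))
  then Nat.find h else 0

/-- Positions after jumping all heads equals `succA` on the assignment. -/
lemma asgn_jump_zero (Γ : Finset (LTL AP)) (w : Fin n → Trace AP) (p : Fin n → ℕ) :
    asgn w (jumpPos Γ w 0 p) = succA (↑Γ) (asgn w p) := by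
  funext y
  simp [asgn, jumpPos, succA]

lemma hwit_decrease (w : Fin n → Trace AP) (Γ : Finset (LTL AP))
    (a b : HSQF AP (Fin n)) (p : Fin n → ℕ)
    (hU : HSQF.Sat (HSQF.untlR Γ a b) (asgn w p))
    (hb : ¬ HSQF.Sat b (asgn w p)) :
    hwit w Γ a b (jumpPos Γ w 0 p) < hwit w Γ a b p := by
  have h : ∃ i, HSQF.Sat b ((succA (↑Γ))^[i] (asgn w p)) ∧
      ∀ k < i, HSQF.Sat a ((succA (↑Γ))^[k] (asgn w p)) := hU
  obtain ⟨hbi₀, hai₀⟩ := Nat.find_spec h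
  have hne : Nat.find h ≠ 0 := by
    intro hc
    rw [hc] at hbi₀
    simp only [Function.iterate_zero_apply] at hbi₀
    exact hb hbi₀
  have hkey : (Nat.find h - 1) + 1 = Nat.find h := by omega
  have hP : HSQF.Sat b ((succA (↑Γ))^[Nat.find h - 1] (asgn w (jumpPos Γ w 0 p))) ∧
      ∀ k < Nat.find h - 1, HSQF.Sat a ((succA (↑Γ))^[k] (asgn w (jumpPos Γ w 0 p))) := by
    constructor
    · rw [asgn_jump_zero, ← Function.iterate_succ_apply]
      simp only [Nat.succ_eq_add_one]
      rw [hkey]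
      exact hbi₀
    · intro k hk
      rw [asgn_jump_zero, ← Function.iterate_succ_apply]
      simp only [Nat.succ_eq_add_one]
      exact hai₀ (k+1) (by omega)
  have h' : ∃ i, HSQF.Sat b ((succA (↑Γ))^[i] (asgn w (jumpPos Γ w 0 p))) ∧
      ∀ k < i, HSQF.Sat a ((succA (↑Γ))^[k] (asgn w (jumpPos Γ w 0 p))) :=
    ⟨Nat.find h - 1, hP⟩
  have hle : Nat.find h' ≤ Nat.find h - 1 := Nat.find_min' h' hP
  rw [hwit, hwit, dif_pos h, dif_pos h']
  omega

/-- Second rank component. -/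
noncomputable def witH (w : Fin n → Trace AP) : HSQF AP (Fin n) → (Fin n → ℕ) → ℕ
  | .untlR Γ a b, p => hwit w Γ a b p
  | _, _ => 0

noncomputable def witL (w : Fin n → Trace AP) : LTL AP → Fin n → ℕ → ℕ
  | .untl a b, x, i => uwit (w x) a b i
  | _, _, _ => 0

/-- Remaining walk distance. -/
noncomputable def wkRem (Γ : Finset (LTL AP)) (π : Trace AP) (i : ℕ) : ℕ :=
  if h : ∃ j, i ≤ j ∧ ¬ LTL.Sat (Efm Γ) π j then Nat.find h - i else 0

noncomputable def BB (ψ : HSQF AP (Fin n)) : ℕ :=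
  (subs' ψ).sup (fun Γ => sizeL (GEfm Γ)) + 1

noncomputable def m0 (ψ : HSQF AP (Fin n)) : St AP n → ℕ
  | .L θ _ _ => sizeL θ
  | .H φ _ => BB ψ + sizeH φ
  | .W m _ _ => BB ψ + sizeH m
  | .Wk m _ _ => BB ψ + sizeH m

noncomputable def rnk (ψ : HSQF AP (Fin n)) (w : Fin n → Trace AP) :
    St AP n → (Fin n → ℕ) → Lex4
  | .L θ _ x, p => toLex4 (sizeL θ) (witL w θ x (p x)) 0 0
  | .H φ _, p => toLex4 (BB ψ + sizeH φ) (witH w φ p) (2*n+2) 0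
  | .W m _ x, p => toLex4 (BB ψ + sizeH m) (witH w m (jumpPos (ΓOf m) w x p)) (2*(n-x)+1) 0
  | .Wk m _ x, p => toLex4 (BB ψ + sizeH m) (witH w m (jumpWkPos (ΓOf m) w x p))
      (2*(n-(x:ℕ))) (wkRem (ΓOf m) (w x) (p x))

lemma rnk_shape (ψ : HSQF AP (Fin n)) (w : Fin n → Trace AP) (q : St AP n)
    (p : Fin n → ℕ) : ∃ b c d, rnk ψ w q p = toLex4 (m0 ψ q) b c d := by
  cases q <;> exact ⟨_, _, _, rfl⟩

lemma rnk_lt_of_m0_lt (ψ : HSQF AP (Fin n)) (w : Fin n → Trace AP) {q q' : St AP n}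
    {p p' : Fin n → ℕ} (h : m0 ψ q' < m0 ψ q) : rnk ψ w q' p' < rnk ψ w q p := by
  obtain ⟨b, c, d, hq⟩ := rnk_shape ψ w q p
  obtain ⟨b', c', d', hq'⟩ := rnk_shape ψ w q' p'
  rw [hq, hq', lt4_iff]
  exact Or.inl h

/-- Wellformed states relative to the matrix `ψ`. -/
def WfSt (ψ : HSQF AP (Fin n)) : St AP n → Prop
  | .L θ _ _ => θ ∈ clL ψ
  | .H φ _ => φ ∈ subH ψ
  | .W m _ x => IsMod m ∧ m ∈ subH ψ ∧ x ≤ n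
  | .Wk m _ _ => IsMod m ∧ m ∈ subH ψ

lemma gamma_mem_subs' (m : HSQF AP (Fin n)) (hm : IsMod m) : ΓOf m ∈ subs' m := by
  cases m <;> simp_all [IsMod, ΓOf, subs']

lemma mem_clL_of (ψ : HSQF AP (Fin n)) {Γ : Finset (LTL AP)} {θ : LTL AP}
    (hΓ : Γ ∈ subs' ψ) (hθ : θ ∈ LTL.subf (GEfm Γ)) : θ ∈ clL ψ :=
  Finset.mem_biUnion.mpr ⟨Γ, hΓ, hθ⟩

lemma clL_closed (ψ : HSQF AP (Fin n)) {θ : LTL AP} (hθ : θ ∈ clL ψ) :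
    LTL.subf θ ⊆ clL ψ := by
  obtain ⟨Γ, hΓ, hsub⟩ := Finset.mem_biUnion.mp hθ
  intro θ' hθ'
  exact mem_clL_of ψ hΓ (subf_trans _ _ hsub hθ')

lemma sizeL_lt_BB (ψ : HSQF AP (Fin n)) {Γ : Finset (LTL AP)} {θ : LTL AP}
    (hΓ : Γ ∈ subs' ψ) (hθ : θ ∈ LTL.subf (GEfm Γ)) : sizeL θ < BB ψ := by
  have h1 := sizeL_le_of_subf _ _ hθ
  have h2 : sizeL (GEfm Γ) ≤ (subs' ψ).sup (fun Γ => sizeL (GEfm Γ)) :=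
    Finset.le_sup (f := fun Γ => sizeL (GEfm Γ)) hΓ
  rw [BB]
  omega

/-- `E_Γ` is a subformula of `GE_Γ`. -/
lemma Efm_mem_subf_GEfm (Γ : Finset (LTL AP)) : Efm Γ ∈ LTL.subf (GEfm Γ) := by
  have h := subf_self (Efm Γ)
  show Efm Γ ∈ LTL.subf (LTL.neg (LTL.untl LTL.tt (LTL.neg (Efm Γ))))
  simp only [LTL.subf, Finset.mem_insert, Finset.mem_union, Finset.mem_singleton]
  tauto

lemma subf_Efm_subset (Γ : Finset (LTL AP)) :
    LTL.subf (Efm Γ) ⊆ LTL.subf (GEfm Γ) :=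
  subf_trans _ _ (Efm_mem_subf_GEfm Γ)

/-! Jump equalities -/

@[simp] lemma bump_self {m : ℕ} (p : Fin m → ℕ) (x : Fin m) : bump p x x = p x + 1 := by
  simp [bump]

lemma bump_other {m : ℕ} (p : Fin m → ℕ) (x y : Fin m) (h : y ≠ x) : bump p x y = p y := by
  simp [bump, h]

lemma WT_of_notE (Γ : Finset (LTL AP)) (π : Trace AP) (i : ℕ)
    (h : ¬ LTL.Sat (Efm Γ) π i) : WT Γ π i = i + 1 := by
  have h2 : ∃ j, i ≤ j ∧ ¬ LTL.Sat (Efm Γ) π j := ⟨i, le_rfl, h⟩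
  rw [WT, dif_pos h2]
  have : Nat.find h2 = i := by
    rw [Nat.find_eq_iff]
    exact ⟨⟨le_rfl, h⟩, fun k hk => fun hc => by omega⟩
  omega

lemma WT_succ (Γ : Finset (LTL AP)) (π : Trace AP) (i : ℕ)
    (hE : LTL.Sat (Efm Γ) π i) (h2 : ∃ j, i ≤ j ∧ ¬ LTL.Sat (Efm Γ) π j) :
    WT Γ π (i+1) = WT Γ π i := by
  have h2' : ∃ j, i+1 ≤ j ∧ ¬ LTL.Sat (Efm Γ) π j := by
    obtain ⟨j, hij, hj⟩ := h2
    refine ⟨j, ?_, hj⟩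
    rcases eq_or_lt_of_le hij with rfl | h
    · exact absurd hE hj
    · omega
  rw [WT, WT, dif_pos h2, dif_pos h2']
  have hge : i + 1 ≤ Nat.find h2 := by
    have h1 : i ≤ Nat.find h2 := (Nat.find_spec h2).1
    rcases eq_or_lt_of_le h1 with heq | h
    · exact absurd hE (heq ▸ (Nat.find_spec h2).2)
    · omega
  have hle : Nat.find h2' ≤ Nat.find h2 :=
    Nat.find_min' h2' ⟨hge, (Nat.find_spec h2).2⟩
  have hge2 : Nat.find h2 ≤ Nat.find h2' :=
    Nat.find_min' h2 ⟨by have := (Nat.find_spec h2').1; omega, (Nat.find_spec h2').2⟩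
  omega

lemma WT_eq_succPos (Γ : Finset (LTL AP)) (π : Trace AP) (i : ℕ)
    (h : ¬ LTL.Sat (GEfm Γ) π i) : WT Γ π i = succPos (↑Γ) π i := by
  have h2 := (not_GE_iff Γ π i).mp h
  rw [WT, dif_pos h2, succPos_of_not_GE Γ π i h2]

lemma succPos_of_notE (Γ : Finset (LTL AP)) (π : Trace AP) (i : ℕ)
    (h : ¬ LTL.Sat (Efm Γ) π i) : succPos (↑Γ) π i = i + 1 := by
  have hnGE : ¬ LTL.Sat (GEfm Γ) π i := by
    rw [not_GE_iff]
    exact ⟨i, le_rfl, h⟩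
  rw [← WT_eq_succPos Γ π i hnGE, WT_of_notE Γ π i h]

lemma fin_lt_iff {n : ℕ} (y x : Fin n) : (y : ℕ) < (x : ℕ) ∨ y = x ∨ (x : ℕ) < (y : ℕ) := by
  rcases lt_trichotomy (y : ℕ) (x : ℕ) with h | h | h
  · exact Or.inl h
  · exact Or.inr (Or.inl (Fin.ext h))
  · exact Or.inr (Or.inr h)

lemma jumpPos_apply (Γ : Finset (LTL AP)) (w : Fin n → Trace AP) (t : ℕ)
    (p : Fin n → ℕ) (y : Fin n) :
    jumpPos Γ w t p y = if (y : ℕ) < t then p y else succPos (↑Γ) (w y) (p y) := rfl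

lemma jumpWkPos_apply (Γ : Finset (LTL AP)) (w : Fin n → Trace AP) (x : Fin n)
    (p : Fin n → ℕ) (y : Fin n) :
    jumpWkPos Γ w x p y = if (y : ℕ) < (x : ℕ) then p y
      else if y = x then WT Γ (w x) (p x) else succPos (↑Γ) (w y) (p y) := rfl

lemma jump_succ_of_GE {Γ : Finset (LTL AP)} {w : Fin n → Trace AP} {p : Fin n → ℕ}
    {x : Fin n} (hGE : LTL.Sat (GEfm Γ) (w x) (p x)) :
    jumpPos Γ w ((x:ℕ)+1) (bump p x) = jumpPos Γ w (x:ℕ) p := by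
  funext y
  by_cases hyx : y = x
  · subst hyx
    rw [jumpPos_apply, jumpPos_apply, bump_self, if_pos (by omega : (y:ℕ) < (y:ℕ)+1),
      if_neg (lt_irrefl _), succPos_of_GE Γ (w y) (p y) hGE]
  · rcases Nat.lt_or_ge (y:ℕ) (x:ℕ) with h | h
    · rw [jumpPos_apply, jumpPos_apply, bump_other p x y hyx,
        if_pos (by omega : (y:ℕ) < (x:ℕ)+1), if_pos h]
    · have h' : (x:ℕ) < (y:ℕ) :=
        lt_of_le_of_ne h (fun hc => hyx (Fin.ext hc.symm))
      rw [jumpPos_apply, jumpPos_apply, bump_other p x y hyx,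
        if_neg (by omega : ¬ (y:ℕ) < (x:ℕ)+1), if_neg (by omega : ¬ (y:ℕ) < (x:ℕ))]

lemma jumpWk_bump_eq_jump {Γ : Finset (LTL AP)} {w : Fin n → Trace AP} {p : Fin n → ℕ}
    {x : Fin n} (hnGE : ¬ LTL.Sat (GEfm Γ) (w x) (p x))
    (hE : LTL.Sat (Efm Γ) (w x) (p x)) :
    jumpWkPos Γ w x (bump p x) = jumpPos Γ w (x:ℕ) p := by
  funext y
  by_cases hyx : y = x
  · subst hyx
    rw [jumpWkPos_apply, jumpPos_apply, if_neg (lt_irrefl _), if_pos rfl,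
      if_neg (lt_irrefl _), bump_self,
      WT_succ Γ (w y) (p y) hE ((not_GE_iff Γ (w y) (p y)).mp hnGE),
      WT_eq_succPos Γ (w y) (p y) hnGE]
  · rcases Nat.lt_or_ge (y:ℕ) (x:ℕ) with h | h
    · rw [jumpWkPos_apply, jumpPos_apply, if_pos h, if_pos h, bump_other p x y hyx]
    · have h' : (x:ℕ) < (y:ℕ) :=
        lt_of_le_of_ne h (fun hc => hyx (Fin.ext hc.symm))
      rw [jumpWkPos_apply, jumpPos_apply, if_neg (by omega : ¬ (y:ℕ) < (x:ℕ)),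
        if_neg hyx, if_neg (by omega : ¬ (y:ℕ) < (x:ℕ)), bump_other p x y hyx]

lemma jumpWk_bump_eq_jumpWk {Γ : Finset (LTL AP)} {w : Fin n → Trace AP} {p : Fin n → ℕ}
    {x : Fin n} (hE : LTL.Sat (Efm Γ) (w x) (p x))
    (h2 : ∃ j, p x ≤ j ∧ ¬ LTL.Sat (Efm Γ) (w x) j) :
    jumpWkPos Γ w x (bump p x) = jumpWkPos Γ w x p := by
  funext y
  by_cases hyx : y = x
  · subst hyx
    rw [jumpWkPos_apply, jumpWkPos_apply, if_neg (lt_irrefl _), if_pos rfl,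
      if_neg (lt_irrefl _), if_pos rfl, bump_self, WT_succ Γ (w y) (p y) hE h2]
  · rcases Nat.lt_or_ge (y:ℕ) (x:ℕ) with h | h
    · rw [jumpWkPos_apply, jumpWkPos_apply, if_pos h, if_pos h, bump_other p x y hyx]
    · have h' : (x:ℕ) < (y:ℕ) :=
        lt_of_le_of_ne h (fun hc => hyx (Fin.ext hc.symm))
      rw [jumpWkPos_apply, jumpWkPos_apply, if_neg (by omega : ¬ (y:ℕ) < (x:ℕ)),
        if_neg hyx, if_neg (by omega : ¬ (y:ℕ) < (x:ℕ)), if_neg hyx,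
        bump_other p x y hyx]

lemma jump_bump_eq_jumpWk {Γ : Finset (LTL AP)} {w : Fin n → Trace AP} {p : Fin n → ℕ}
    {x : Fin n} (hnE : ¬ LTL.Sat (Efm Γ) (w x) (p x)) :
    jumpPos Γ w ((x:ℕ)+1) (bump p x) = jumpWkPos Γ w x p := by
  funext y
  by_cases hyx : y = x
  · subst hyx
    rw [jumpPos_apply, jumpWkPos_apply, bump_self, if_pos (by omega : (y:ℕ) < (y:ℕ)+1),
      if_neg (lt_irrefl _), if_pos rfl, WT_of_notE Γ (w y) (p y) hnE]
  · rcases Nat.lt_or_ge (y:ℕ) (x:ℕ) with h | h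
    · rw [jumpPos_apply, jumpWkPos_apply, bump_other p x y hyx,
        if_pos (by omega : (y:ℕ) < (x:ℕ)+1), if_pos h]
    · have h' : (x:ℕ) < (y:ℕ) :=
        lt_of_le_of_ne h (fun hc => hyx (Fin.ext hc.symm))
      rw [jumpPos_apply, jumpWkPos_apply, bump_other p x y hyx,
        if_neg (by omega : ¬ (y:ℕ) < (x:ℕ)+1), if_neg (by omega : ¬ (y:ℕ) < (x:ℕ)),
        if_neg hyx]

lemma jump_n_eq (Γ : Finset (LTL AP)) (w : Fin n → Trace AP) (p : Fin n → ℕ) :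
    jumpPos Γ w n p = p := by
  funext y
  rw [jumpPos_apply, if_pos y.isLt]

end Rank



/-! ### Local lemmas for the LTL part -/

section LocalL

variable {AP : Type} {n : ℕ}

/-- Good children for the completeness direction (LTL part). -/
def OKLc (w : Fin n → Trace AP) (θ : LTL AP) (s : Bool) (x : Fin n) (p : Fin n → ℕ)
    (v : St AP n × Fin n) : Prop :=
  v.2 = x ∧ ∃ θ' s', v.1 = St.L θ' s' x ∧ θ' ∈ LTL.subf θ ∧
    SemRaw w v.1 (bump p x) ∧
    (θ' = θ → s' = s ∧ (s = true → witL w θ x (p x + 1) < witL w θ x (p x)))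

/-- Good children for the rejection direction (LTL part). -/
def OKLr (w : Fin n → Trace AP) (θ : LTL AP) (s : Bool) (x : Fin n) (p : Fin n → ℕ)
    (v : St AP n × Fin n) : Prop :=
  v.2 = x ∧ ∃ θ' s', v.1 = St.L θ' s' x ∧ θ' ∈ LTL.subf θ ∧
    ¬ SemRaw w v.1 (bump p x) ∧
    (θ' = θ → s' = s ∧ (s = false → witL w θ x (p x + 1) < witL w θ x (p x)))

lemma OKLc_mono (w : Fin n → Trace AP) {θ₁ θ₂ : LTL AP} {s₁ s₂ : Bool} {x : Fin n}
    {p : Fin n → ℕ} (hmem : θ₁ ∈ LTL.subf θ₂) (hsize : sizeL θ₁ < sizeL θ₂) :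
    {v | OKLc w θ₁ s₁ x p v} ⊆ {v | OKLc w θ₂ s₂ x p v} := by
  rintro v ⟨hd, θ', s', hv, hsub, hsem, _⟩
  refine ⟨hd, θ', s', hv, subf_trans _ _ hmem hsub, hsem, ?_⟩
  intro hc
  exfalso
  have h1 := sizeL_le_of_subf _ _ hsub
  rw [hc] at h1
  omega

lemma OKLr_mono (w : Fin n → Trace AP) {θ₁ θ₂ : LTL AP} {s₁ s₂ : Bool} {x : Fin n}
    {p : Fin n → ℕ} (hmem : θ₁ ∈ LTL.subf θ₂) (hsize : sizeL θ₁ < sizeL θ₂) :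
    ∀ v, OKLr w θ₁ s₁ x p v → OKLr w θ₂ s₂ x p v := by
  rintro v ⟨hd, θ', s', hv, hsub, hsem, _⟩
  refine ⟨hd, θ', s', hv, subf_trans _ _ hmem hsub, hsem, ?_⟩
  intro hc
  exfalso
  have h1 := sizeL_le_of_subf _ _ hsub
  rw [hc] at h1
  omega

lemma semL_iff (w : Fin n → Trace AP) (θ : LTL AP) (s : Bool) (x : Fin n)
    (p : Fin n → ℕ) : SemRaw w (.L θ s x) p ↔ (if s then LTL.Sat θ (w x) (p x)
      else ¬ LTL.Sat θ (w x) (p x)) := Iff.rfl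

theorem LC (w : Fin n → Trace AP) (θ : LTL AP) :
    ∀ (s : Bool) (x : Fin n) (p : Fin n → ℕ),
      SemRaw w (.L θ s x) p →
      PosBool.SatBy {v | OKLc w θ s x p v} (dL θ s x (fun d => w d (p d))) := by
  induction θ with
  | tt =>
    intro s x p h
    cases s
    · simp [SemRaw, LTL.Sat] at h
    · simp only [dL, if_pos]
      trivial
  | atom a =>
    intro s x p h
    cases s
    · have hm : ¬ a ∈ w x (p x) := by simpa [SemRaw, LTL.Sat] using h
      simp only [dL]
      rw [if_pos (by simpa using hm)]
      trivial
    · have hm : a ∈ w x (p x) := by simpa [SemRaw, LTL.Sat] using h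
      simp only [dL]
      rw [if_pos (by simpa using hm)]
      trivial
  | neg θ ih =>
    intro s x p h
    have h' : SemRaw w (.L θ (!s) x) p := by
      cases s
      · simpa [SemRaw, LTL.Sat, not_not] using h
      · simpa [SemRaw, LTL.Sat] using h
    have hr := ih (!s) x p h'
    have hgoal : PosBool.SatBy {v | OKLc w (LTL.neg θ) s x p v} (dL θ (!s) x (fun d => w d (p d))) := by
      refine satBy_mono ?_ hr
      exact OKLc_mono w (by simp only [LTL.subf, Finset.mem_insert]; exact Or.inr (subf_self θ))
        (by simp [sizeL])
    cases s
    · exact hgoal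
    · exact hgoal
  | conj θ₁ θ₂ ih₁ ih₂ =>
    intro s x p h
    have hm₁ : θ₁ ∈ LTL.subf (LTL.conj θ₁ θ₂) := by
      simp only [LTL.subf, Finset.mem_insert, Finset.mem_union]
      exact Or.inr (Or.inl (subf_self θ₁))
    have hm₂ : θ₂ ∈ LTL.subf (LTL.conj θ₁ θ₂) := by
      simp only [LTL.subf, Finset.mem_insert, Finset.mem_union]
      exact Or.inr (Or.inr (subf_self θ₂))
    cases s
    · have h' : ¬ (LTL.Sat θ₁ (w x) (p x) ∧ LTL.Sat θ₂ (w x) (p x)) := by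
        simpa [SemRaw, LTL.Sat] using h
      simp only [dL, Bool.false_eq_true, if_false]
      by_cases h₁ : LTL.Sat θ₁ (w x) (p x)
      · have h₂ : ¬ LTL.Sat θ₂ (w x) (p x) := fun hc => h' ⟨h₁, hc⟩
        exact Or.inr (satBy_mono (OKLc_mono w hm₂ (by simp [sizeL]))
          (ih₂ false x p (by simpa [SemRaw] using h₂)))
      · exact Or.inl (satBy_mono (OKLc_mono w hm₁ (by simp [sizeL]))
          (ih₁ false x p (by simpa [SemRaw] using h₁)))
    · have h' : LTL.Sat θ₁ (w x) (p x) ∧ LTL.Sat θ₂ (w x) (p x) := by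
        simpa [SemRaw, LTL.Sat] using h
      simp only [dL, if_pos]
      exact ⟨satBy_mono (OKLc_mono w hm₁ (by simp [sizeL]))
          (ih₁ true x p (by simpa [SemRaw] using h'.1)),
        satBy_mono (OKLc_mono w hm₂ (by simp [sizeL]))
          (ih₂ true x p (by simpa [SemRaw] using h'.2))⟩
  | next θ ih =>
    intro s x p h
    show OKLc w (LTL.next θ) s x p (⟨St.L θ s x, x⟩)
    refine ⟨rfl, θ, s, rfl, ?_, ?_, ?_⟩
    · simp only [LTL.subf, Finset.mem_insert]
      exact Or.inr (subf_self θ)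
    · cases s
      · simpa [SemRaw, LTL.Sat, bump_self] using h
      · simpa [SemRaw, LTL.Sat, bump_self] using h
    · intro hc
      exfalso
      have h2 := congrArg sizeL hc
      simp only [sizeL] at h2
      omega
  | untl θ₁ θ₂ ih₁ ih₂ =>
    intro s x p h
    have hm₁ : θ₁ ∈ LTL.subf (LTL.untl θ₁ θ₂) := by
      simp only [LTL.subf, Finset.mem_insert, Finset.mem_union]
      exact Or.inr (Or.inl (subf_self θ₁))
    have hm₂ : θ₂ ∈ LTL.subf (LTL.untl θ₁ θ₂) := by
      simp only [LTL.subf, Finset.mem_insert, Finset.mem_union]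
      exact Or.inr (Or.inr (subf_self θ₂))
    cases s
    · -- negative until
      have hU : ¬ LTL.Sat (LTL.untl θ₁ θ₂) (w x) (p x) := by simpa [SemRaw] using h
      have hnb : ¬ LTL.Sat θ₂ (w x) (p x) := by
        intro hc
        exact hU ((sat_untl_unfold θ₁ θ₂ (w x) (p x)).mpr (Or.inl hc))
      simp only [dL, Bool.false_eq_true, if_false]
      refine ⟨satBy_mono (OKLc_mono w hm₂ (by simp [sizeL]))
          (ih₂ false x p (by simpa [SemRaw] using hnb)), ?_⟩
      by_cases ha : LTL.Sat θ₁ (w x) (p x)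
      · refine Or.inr ?_
        show OKLc w (LTL.untl θ₁ θ₂) false x p (⟨St.L (LTL.untl θ₁ θ₂) false x, x⟩)
        refine ⟨rfl, LTL.untl θ₁ θ₂, false, rfl, subf_self _, ?_, ?_⟩
        · have : ¬ LTL.Sat (LTL.untl θ₁ θ₂) (w x) (p x + 1) := by
            intro hc
            exact hU ((sat_untl_unfold θ₁ θ₂ (w x) (p x)).mpr (Or.inr ⟨ha, hc⟩))
          simpa [SemRaw, bump_self] using this
        · intro _
          exact ⟨rfl, fun hc => by simp at hc⟩
      · exact Or.inl (satBy_mono (OKLc_mono w hm₁ (by simp [sizeL]))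
          (ih₁ false x p (by simpa [SemRaw] using ha)))
    · -- positive until
      have hU : LTL.Sat (LTL.untl θ₁ θ₂) (w x) (p x) := by simpa [SemRaw] using h
      simp only [dL, if_pos]
      by_cases hb : LTL.Sat θ₂ (w x) (p x)
      · exact Or.inl (satBy_mono (OKLc_mono w hm₂ (by simp [sizeL]))
          (ih₂ true x p (by simpa [SemRaw] using hb)))
      · refine Or.inr ⟨?_, ?_⟩
        · have ha : LTL.Sat θ₁ (w x) (p x) := by
            rcases (sat_untl_unfold θ₁ θ₂ (w x) (p x)).mp hU with hc | ⟨ha, _⟩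
            · exact absurd hc hb
            · exact ha
          exact satBy_mono (OKLc_mono w hm₁ (by simp [sizeL]))
            (ih₁ true x p (by simpa [SemRaw] using ha))
        · show OKLc w (LTL.untl θ₁ θ₂) true x p (⟨St.L (LTL.untl θ₁ θ₂) true x, x⟩)
          refine ⟨rfl, LTL.untl θ₁ θ₂, true, rfl, subf_self _, ?_, ?_⟩
          · have : LTL.Sat (LTL.untl θ₁ θ₂) (w x) (p x + 1) := by
              rcases (sat_untl_unfold θ₁ θ₂ (w x) (p x)).mp hU with hc | ⟨_, hnext⟩
              · exact absurd hc hb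
              · exact hnext
            simpa [SemRaw, bump_self] using this
          · intro _
            refine ⟨rfl, fun _ => ?_⟩
            show witL w (LTL.untl θ₁ θ₂) x (p x + 1) < witL w (LTL.untl θ₁ θ₂) x (p x)
            simp only [witL]
            exact uwit_decrease (w x) θ₁ θ₂ (p x) hU hb

theorem LCrej (w : Fin n → Trace AP) (θ : LTL AP) :
    ∀ (s : Bool) (x : Fin n) (p : Fin n → ℕ),
      ¬ SemRaw w (.L θ s x) p →
      ∀ (M : Set (St AP n × Fin n)),
        PosBool.SatBy M (dL θ s x (fun d => w d (p d))) →
        ∃ v ∈ M, OKLr w θ s x p v := by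
  induction θ with
  | tt =>
    intro s x p h M hM
    cases s
    · simp only [dL, Bool.false_eq_true, if_false] at hM
      exact absurd hM (by simp)
    · simp [SemRaw, LTL.Sat] at h
  | atom a =>
    intro s x p h M hM
    cases s
    · have hm : a ∈ w x (p x) := by simpa [SemRaw, LTL.Sat, not_not] using h
      simp only [dL] at hM
      rw [if_neg (by simpa using hm)] at hM
      exact absurd hM (by simp)
    · have hm : ¬ a ∈ w x (p x) := by simpa [SemRaw, LTL.Sat] using h
      simp only [dL] at hM
      rw [if_neg (by simpa using hm)] at hM
      exact absurd hM (by simp)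
  | neg θ ih =>
    intro s x p h M hM
    have h' : ¬ SemRaw w (.L θ (!s) x) p := by
      cases s
      · simpa [SemRaw, LTL.Sat] using h
      · simpa [SemRaw, LTL.Sat, not_not] using h
    have hM' : PosBool.SatBy M (dL θ (!s) x (fun d => w d (p d))) := by
      cases s
      · exact hM
      · exact hM
    obtain ⟨v, hv, hok⟩ := ih (!s) x p h' M hM'
    exact ⟨v, hv, OKLr_mono w
      (by simp only [LTL.subf, Finset.mem_insert]; exact Or.inr (subf_self θ))
      (by simp [sizeL]) v hok⟩
  | conj θ₁ θ₂ ih₁ ih₂ =>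
    intro s x p h M hM
    have hm₁ : θ₁ ∈ LTL.subf (LTL.conj θ₁ θ₂) := by
      simp only [LTL.subf, Finset.mem_insert, Finset.mem_union]
      exact Or.inr (Or.inl (subf_self θ₁))
    have hm₂ : θ₂ ∈ LTL.subf (LTL.conj θ₁ θ₂) := by
      simp only [LTL.subf, Finset.mem_insert, Finset.mem_union]
      exact Or.inr (Or.inr (subf_self θ₂))
    cases s
    · have h' : LTL.Sat θ₁ (w x) (p x) ∧ LTL.Sat θ₂ (w x) (p x) := by
        simpa [SemRaw, LTL.Sat, not_not] using h
      simp only [dL, Bool.false_eq_true, if_false] at hM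
      rcases hM with hM | hM
      · obtain ⟨v, hv, hok⟩ := ih₁ false x p (by simpa [SemRaw, not_not] using h'.1) M hM
        exact ⟨v, hv, OKLr_mono w hm₁ (by simp [sizeL]) v hok⟩
      · obtain ⟨v, hv, hok⟩ := ih₂ false x p (by simpa [SemRaw, not_not] using h'.2) M hM
        exact ⟨v, hv, OKLr_mono w hm₂ (by simp [sizeL]) v hok⟩
    · have h' : ¬ (LTL.Sat θ₁ (w x) (p x) ∧ LTL.Sat θ₂ (w x) (p x)) := by
        simpa [SemRaw, LTL.Sat] using h
      simp only [dL, if_pos] at hM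
      by_cases h₁ : LTL.Sat θ₁ (w x) (p x)
      · have h₂ : ¬ LTL.Sat θ₂ (w x) (p x) := fun hc => h' ⟨h₁, hc⟩
        obtain ⟨v, hv, hok⟩ := ih₂ true x p (by simpa [SemRaw] using h₂) M hM.2
        exact ⟨v, hv, OKLr_mono w hm₂ (by simp [sizeL]) v hok⟩
      · obtain ⟨v, hv, hok⟩ := ih₁ true x p (by simpa [SemRaw] using h₁) M hM.1
        exact ⟨v, hv, OKLr_mono w hm₁ (by simp [sizeL]) v hok⟩
  | next θ ih =>
    intro s x p h M hM
    have hv : (⟨St.L θ s x, x⟩ : St AP n × Fin n) ∈ M := by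
      cases s
      · exact hM
      · exact hM
    refine ⟨_, hv, rfl, θ, s, rfl, ?_, ?_, ?_⟩
    · simp only [LTL.subf, Finset.mem_insert]
      exact Or.inr (subf_self θ)
    · cases s
      · simpa [SemRaw, LTL.Sat, bump_self] using h
      · simpa [SemRaw, LTL.Sat, bump_self] using h
    · intro hc
      exfalso
      have h2 := congrArg sizeL hc
      simp only [sizeL] at h2
      omega
  | untl θ₁ θ₂ ih₁ ih₂ =>
    intro s x p h M hM
    have hm₁ : θ₁ ∈ LTL.subf (LTL.untl θ₁ θ₂) := by
      simp only [LTL.subf, Finset.mem_insert, Finset.mem_union]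
      exact Or.inr (Or.inl (subf_self θ₁))
    have hm₂ : θ₂ ∈ LTL.subf (LTL.untl θ₁ θ₂) := by
      simp only [LTL.subf, Finset.mem_insert, Finset.mem_union]
      exact Or.inr (Or.inr (subf_self θ₂))
    cases s
    · -- state sign false, but the until holds
      have hU : LTL.Sat (LTL.untl θ₁ θ₂) (w x) (p x) := by
        simpa [SemRaw, not_not] using h
      simp only [dL, Bool.false_eq_true, if_false] at hM
      by_cases hb : LTL.Sat θ₂ (w x) (p x)
      · obtain ⟨v, hv, hok⟩ := ih₂ false x p (by simpa [SemRaw, not_not] using hb) M hM.1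
        exact ⟨v, hv, OKLr_mono w hm₂ (by simp [sizeL]) v hok⟩
      · rcases hM.2 with hMa | hMv
        · have ha : LTL.Sat θ₁ (w x) (p x) := by
            rcases (sat_untl_unfold θ₁ θ₂ (w x) (p x)).mp hU with hc | ⟨ha, _⟩
            · exact absurd hc hb
            · exact ha
          obtain ⟨v, hv, hok⟩ := ih₁ false x p (by simpa [SemRaw, not_not] using ha) M hMa
          exact ⟨v, hv, OKLr_mono w hm₁ (by simp [sizeL]) v hok⟩
        · refine ⟨_, hMv, rfl, LTL.untl θ₁ θ₂, false, rfl, subf_self _, ?_, ?_⟩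
          · have : LTL.Sat (LTL.untl θ₁ θ₂) (w x) (p x + 1) := by
              rcases (sat_untl_unfold θ₁ θ₂ (w x) (p x)).mp hU with hc | ⟨_, hnext⟩
              · exact absurd hc hb
              · exact hnext
            simpa [SemRaw, bump_self, not_not] using this
          · intro _
            refine ⟨rfl, fun _ => ?_⟩
            show witL w (LTL.untl θ₁ θ₂) x (p x + 1) < witL w (LTL.untl θ₁ θ₂) x (p x)
            simp only [witL]
            exact uwit_decrease (w x) θ₁ θ₂ (p x) hU hb
    · -- state sign true, but the until fails
      have hU : ¬ LTL.Sat (LTL.untl θ₁ θ₂) (w x) (p x) := by simpa [SemRaw] using h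
      have hnb : ¬ LTL.Sat θ₂ (w x) (p x) := by
        intro hc
        exact hU ((sat_untl_unfold θ₁ θ₂ (w x) (p x)).mpr (Or.inl hc))
      simp only [dL, if_pos] at hM
      rcases hM with hMb | ⟨hMa, hMv⟩
      · obtain ⟨v, hv, hok⟩ := ih₂ true x p (by simpa [SemRaw] using hnb) M hMb
        exact ⟨v, hv, OKLr_mono w hm₂ (by simp [sizeL]) v hok⟩
      · by_cases ha : LTL.Sat θ₁ (w x) (p x)
        · refine ⟨_, hMv, rfl, LTL.untl θ₁ θ₂, true, rfl, subf_self _, ?_, ?_⟩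
          · have : ¬ LTL.Sat (LTL.untl θ₁ θ₂) (w x) (p x + 1) := by
              intro hc
              exact hU ((sat_untl_unfold θ₁ θ₂ (w x) (p x)).mpr (Or.inr ⟨ha, hc⟩))
            simpa [SemRaw, bump_self] using this
          · intro _
            exact ⟨rfl, fun hc => by simp at hc⟩
        · obtain ⟨v, hv, hok⟩ := ih₁ true x p (by simpa [SemRaw] using ha) M hMa
          exact ⟨v, hv, OKLr_mono w hm₁ (by simp [sizeL]) v hok⟩

end LocalL



/-! ### Local lemmas for the walking states -/

section LocalW

variable {AP : Type} {n : ℕ}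

/-- Good children for the walk states (completeness). -/
def OKKc (ψ : HSQF AP (Fin n)) (w : Fin n → Trace AP) (m : HSQF AP (Fin n)) (s : Bool)
    (x : Fin n) (p : Fin n → ℕ) (v : St AP n × Fin n) : Prop :=
  v.2 = x ∧
  ((∃ θ' s', v.1 = St.L θ' s' x ∧ θ' ∈ LTL.subf (GEfm (ΓOf m)) ∧ SemRaw w v.1 (bump p x)) ∨
   ((v.1 = St.Wk m s x ∨ v.1 = St.W m s ((x:ℕ)+1)) ∧ SemRaw w v.1 (bump p x) ∧
     (s = true → rnk ψ w v.1 (bump p x) <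
       toLex4 (BB ψ + sizeH m) (witH w m (jumpWkPos (ΓOf m) w x p)) (2*(n-(x:ℕ)))
         (wkRem (ΓOf m) (w x) (p x)))))

/-- Good children for the walk states (rejection). -/
def OKKr (ψ : HSQF AP (Fin n)) (w : Fin n → Trace AP) (m : HSQF AP (Fin n)) (s : Bool)
    (x : Fin n) (p : Fin n → ℕ) (v : St AP n × Fin n) : Prop :=
  v.2 = x ∧
  ((∃ θ' s', v.1 = St.L θ' s' x ∧ θ' ∈ LTL.subf (GEfm (ΓOf m)) ∧ ¬ SemRaw w v.1 (bump p x)) ∨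
   ((v.1 = St.Wk m s x ∨ v.1 = St.W m s ((x:ℕ)+1)) ∧ ¬ SemRaw w v.1 (bump p x) ∧
     (s = false → rnk ψ w v.1 (bump p x) <
       toLex4 (BB ψ + sizeH m) (witH w m (jumpWkPos (ΓOf m) w x p)) (2*(n-(x:ℕ)))
         (wkRem (ΓOf m) (w x) (p x)))))

/-- Good children for the entry states (completeness). -/
def OKWc (ψ : HSQF AP (Fin n)) (w : Fin n → Trace AP) (m : HSQF AP (Fin n)) (s : Bool)
    (x : Fin n) (p : Fin n → ℕ) (v : St AP n × Fin n) : Prop :=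
  v.2 = x ∧
  ((∃ θ' s', v.1 = St.L θ' s' x ∧ θ' ∈ LTL.subf (GEfm (ΓOf m)) ∧ SemRaw w v.1 (bump p x)) ∨
   ((v.1 = St.Wk m s x ∨ v.1 = St.W m s ((x:ℕ)+1)) ∧ SemRaw w v.1 (bump p x) ∧
     (s = true → rnk ψ w v.1 (bump p x) <
       toLex4 (BB ψ + sizeH m) (witH w m (jumpPos (ΓOf m) w (x:ℕ) p)) (2*(n-(x:ℕ))+1) 0)))

/-- Good children for the entry states (rejection). -/
def OKWr (ψ : HSQF AP (Fin n)) (w : Fin n → Trace AP) (m : HSQF AP (Fin n)) (s : Bool)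
    (x : Fin n) (p : Fin n → ℕ) (v : St AP n × Fin n) : Prop :=
  v.2 = x ∧
  ((∃ θ' s', v.1 = St.L θ' s' x ∧ θ' ∈ LTL.subf (GEfm (ΓOf m)) ∧ ¬ SemRaw w v.1 (bump p x)) ∨
   ((v.1 = St.Wk m s x ∨ v.1 = St.W m s ((x:ℕ)+1)) ∧ ¬ SemRaw w v.1 (bump p x) ∧
     (s = false → rnk ψ w v.1 (bump p x) <
       toLex4 (BB ψ + sizeH m) (witH w m (jumpPos (ΓOf m) w (x:ℕ) p)) (2*(n-(x:ℕ))+1) 0)))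

lemma wkRem_decrease {AP : Type} (Γ : Finset (LTL AP)) (π : Trace AP) (i : ℕ)
    (hE : LTL.Sat (Efm Γ) π i) (h2 : ∃ j, i ≤ j ∧ ¬ LTL.Sat (Efm Γ) π j) :
    wkRem Γ π (i+1) < wkRem Γ π i := by
  have h2' : ∃ j, i+1 ≤ j ∧ ¬ LTL.Sat (Efm Γ) π j := by
    obtain ⟨j, hij, hj⟩ := h2
    refine ⟨j, ?_, hj⟩
    rcases eq_or_lt_of_le hij with rfl | hlt
    · exact absurd hE hj
    · omega
  have hge : i + 1 ≤ Nat.find h2 := by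
    have h1 : i ≤ Nat.find h2 := (Nat.find_spec h2).1
    rcases eq_or_lt_of_le h1 with heq | hlt
    · exact absurd hE (heq ▸ (Nat.find_spec h2).2)
    · omega
  have hle : Nat.find h2' ≤ Nat.find h2 :=
    Nat.find_min' h2' ⟨hge, (Nat.find_spec h2).2⟩
  have hge2 : Nat.find h2 ≤ Nat.find h2' :=
    Nat.find_min' h2 ⟨by have := (Nat.find_spec h2').1; omega, (Nat.find_spec h2').2⟩
  rw [wkRem, wkRem, dif_pos h2, dif_pos h2']
  omega

theorem KC (ψ : HSQF AP (Fin n)) (w : Fin n → Trace AP) (m : HSQF AP (Fin n)) (s : Bool)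
    (x : Fin n) (p : Fin n → ℕ) (h : SemRaw w (.Wk m s x) p) :
    PosBool.SatBy {v | OKKc ψ w m s x p v} (dWalk m s x (fun d => w d (p d))) := by
  by_cases hE : LTL.Sat (Efm (ΓOf m)) (w x) (p x)
  · cases s
    · -- s = false
      have h' : ¬ ((∃ j, p x ≤ j ∧ ¬ LTL.Sat (Efm (ΓOf m)) (w x) j) ∧
          cSem w m (jumpWkPos (ΓOf m) w x p)) := by simpa [SemRaw] using h
      simp only [dWalk, Bool.false_eq_true, if_false]
      constructor
      · -- first conjunct: take the Wk child
        refine Or.inr ?_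
        show OKKc ψ w m false x p (⟨St.Wk m false x, x⟩)
        refine ⟨rfl, Or.inr ⟨Or.inl rfl, ?_, fun hc => by simp at hc⟩⟩
        show ¬ ((∃ j, bump p x x ≤ j ∧ ¬ LTL.Sat (Efm (ΓOf m)) (w x) j) ∧
            cSem w m (jumpWkPos (ΓOf m) w x (bump p x)))
        rintro ⟨hbad, hcs⟩
        rw [bump_self] at hbad
        have hbad' : ∃ j, p x ≤ j ∧ ¬ LTL.Sat (Efm (ΓOf m)) (w x) j := by
          obtain ⟨j, hij, hj⟩ := hbad
          exact ⟨j, by omega, hj⟩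
        rw [jumpWk_bump_eq_jumpWk hE hbad'] at hcs
        exact h' ⟨hbad', hcs⟩
      · -- second conjunct: E holds
        refine Or.inl ?_
        refine satBy_mono ?_ (LC w (Efm (ΓOf m)) true x p (by simpa [SemRaw] using hE))
        rintro v ⟨hd, θ', s', hv, hsub, hsem, _⟩
        exact ⟨hd, Or.inl ⟨θ', s', hv, subf_Efm_subset _ hsub, hsem⟩⟩
    · -- s = true
      have h' : (∃ j, p x ≤ j ∧ ¬ LTL.Sat (Efm (ΓOf m)) (w x) j) ∧
          cSem w m (jumpWkPos (ΓOf m) w x p) := by simpa [SemRaw] using h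
      simp only [dWalk, if_pos]
      refine Or.inl ⟨?_, ?_⟩
      · refine satBy_mono ?_ (LC w (Efm (ΓOf m)) true x p (by simpa [SemRaw] using hE))
        rintro v ⟨hd, θ', s', hv, hsub, hsem, _⟩
        exact ⟨hd, Or.inl ⟨θ', s', hv, subf_Efm_subset _ hsub, hsem⟩⟩
      · show OKKc ψ w m true x p (⟨St.Wk m true x, x⟩)
        refine ⟨rfl, Or.inr ⟨Or.inl rfl, ?_, ?_⟩⟩
        · show (∃ j, bump p x x ≤ j ∧ ¬ LTL.Sat (Efm (ΓOf m)) (w x) j) ∧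
              cSem w m (jumpWkPos (ΓOf m) w x (bump p x))
          constructor
          · rw [bump_self]
            obtain ⟨j, hij, hj⟩ := h'.1
            refine ⟨j, ?_, hj⟩
            rcases eq_or_lt_of_le hij with rfl | hlt
            · exact absurd hE hj
            · omega
          · rw [jumpWk_bump_eq_jumpWk hE h'.1]
            exact h'.2
        · intro _
          show rnk ψ w (St.Wk m true x) (bump p x) < _
          simp only [rnk]
          rw [jumpWk_bump_eq_jumpWk hE h'.1, bump_self]
          rw [lt4_iff]
          refine Or.inr ⟨rfl, Or.inr ⟨rfl, Or.inr ⟨rfl, ?_⟩⟩⟩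
          exact wkRem_decrease (ΓOf m) (w x) (p x) hE h'.1
  · -- ¬ E at the current position: exit the walk
    cases s
    · have h' : ¬ ((∃ j, p x ≤ j ∧ ¬ LTL.Sat (Efm (ΓOf m)) (w x) j) ∧
          cSem w m (jumpWkPos (ΓOf m) w x p)) := by simpa [SemRaw] using h
      have hbad : ∃ j, p x ≤ j ∧ ¬ LTL.Sat (Efm (ΓOf m)) (w x) j := ⟨p x, le_rfl, hE⟩
      have hnc : ¬ cSem w m (jumpWkPos (ΓOf m) w x p) := fun hc => h' ⟨hbad, hc⟩
      simp only [dWalk, Bool.false_eq_true, if_false]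
      constructor
      · refine Or.inl ?_
        refine satBy_mono ?_ (LC w (Efm (ΓOf m)) false x p (by simpa [SemRaw] using hE))
        rintro v ⟨hd, θ', s', hv, hsub, hsem, _⟩
        exact ⟨hd, Or.inl ⟨θ', s', hv, subf_Efm_subset _ hsub, hsem⟩⟩
      · refine Or.inr ?_
        show OKKc ψ w m false x p (⟨St.W m false ((x:ℕ)+1), x⟩)
        refine ⟨rfl, Or.inr ⟨Or.inr rfl, ?_, fun hc => by simp at hc⟩⟩
        show ¬ cSem w m (jumpPos (ΓOf m) w ((x:ℕ)+1) (bump p x))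
        rw [jump_bump_eq_jumpWk hE]
        exact hnc
    · have h' : (∃ j, p x ≤ j ∧ ¬ LTL.Sat (Efm (ΓOf m)) (w x) j) ∧
          cSem w m (jumpWkPos (ΓOf m) w x p) := by simpa [SemRaw] using h
      simp only [dWalk, if_pos]
      refine Or.inr ⟨?_, ?_⟩
      · refine satBy_mono ?_ (LC w (Efm (ΓOf m)) false x p (by simpa [SemRaw] using hE))
        rintro v ⟨hd, θ', s', hv, hsub, hsem, _⟩
        exact ⟨hd, Or.inl ⟨θ', s', hv, subf_Efm_subset _ hsub, hsem⟩⟩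
      · show OKKc ψ w m true x p (⟨St.W m true ((x:ℕ)+1), x⟩)
        refine ⟨rfl, Or.inr ⟨Or.inr rfl, ?_, ?_⟩⟩
        · show cSem w m (jumpPos (ΓOf m) w ((x:ℕ)+1) (bump p x))
          rw [jump_bump_eq_jumpWk hE]
          exact h'.2
        · intro _
          show rnk ψ w (St.W m true ((x:ℕ)+1)) (bump p x) < _
          simp only [rnk]
          rw [jump_bump_eq_jumpWk hE, lt4_iff]
          refine Or.inr ⟨rfl, Or.inr ⟨rfl, Or.inl ?_⟩⟩
          have hx := x.isLt
          omega

theorem KCrej (ψ : HSQF AP (Fin n)) (w : Fin n → Trace AP) (m : HSQF AP (Fin n)) (s : Bool)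
    (x : Fin n) (p : Fin n → ℕ) (h : ¬ SemRaw w (.Wk m s x) p)
    (M : Set (St AP n × Fin n))
    (hM : PosBool.SatBy M (dWalk m s x (fun d => w d (p d)))) :
    ∃ v ∈ M, OKKr ψ w m s x p v := by
  by_cases hE : LTL.Sat (Efm (ΓOf m)) (w x) (p x)
  · cases s
    · -- s = false, semantics holds
      have h' : (∃ j, p x ≤ j ∧ ¬ LTL.Sat (Efm (ΓOf m)) (w x) j) ∧
          cSem w m (jumpWkPos (ΓOf m) w x p) := not_not.mp h
      simp only [dWalk, Bool.false_eq_true, if_false] at hM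
      rcases hM.1 with hM1 | hM1
      · -- E-refutation part: but E holds, so rejection within it
        obtain ⟨v, hv, hd, θ', s', hveq, hsub, hsem, _⟩ :=
          LCrej w (Efm (ΓOf m)) false x p (by simpa [SemRaw, not_not] using hE) M hM1
        exact ⟨v, hv, hd, Or.inl ⟨θ', s', hveq, subf_Efm_subset _ hsub, hsem⟩⟩
      · -- Wk child
        refine ⟨_, hM1, rfl, Or.inr ⟨Or.inl rfl, ?_, ?_⟩⟩
        · show ¬ SemRaw w (St.Wk m false x) (bump p x)
          have hsem : (∃ j, bump p x x ≤ j ∧ ¬ LTL.Sat (Efm (ΓOf m)) (w x) j) ∧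
              cSem w m (jumpWkPos (ΓOf m) w x (bump p x)) := by
            constructor
            · rw [bump_self]
              obtain ⟨j, hij, hj⟩ := h'.1
              refine ⟨j, ?_, hj⟩
              rcases eq_or_lt_of_le hij with rfl | hlt
              · exact absurd hE hj
              · omega
            · rw [jumpWk_bump_eq_jumpWk hE h'.1]
              exact h'.2
          exact fun hc => hc hsem
        · intro _
          show rnk ψ w (St.Wk m false x) (bump p x) < _
          simp only [rnk]
          rw [jumpWk_bump_eq_jumpWk hE h'.1, bump_self, lt4_iff]
          refine Or.inr ⟨rfl, Or.inr ⟨rfl, Or.inr ⟨rfl, ?_⟩⟩⟩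
          exact wkRem_decrease (ΓOf m) (w x) (p x) hE h'.1
    · -- s = true, semantics fails
      have h' : ¬ ((∃ j, p x ≤ j ∧ ¬ LTL.Sat (Efm (ΓOf m)) (w x) j) ∧
          cSem w m (jumpWkPos (ΓOf m) w x p)) := by simpa [SemRaw] using h
      simp only [dWalk, if_pos] at hM
      rcases hM with ⟨hM1, hM2⟩ | ⟨hM1, hM2⟩
      · -- took the (E ∧ Wk) disjunct
        refine ⟨_, hM2, rfl, Or.inr ⟨Or.inl rfl, ?_, fun hc => by simp at hc⟩⟩
        show ¬ SemRaw w (St.Wk m true x) (bump p x)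
        intro hsem
        have hsem' : (∃ j, bump p x x ≤ j ∧ ¬ LTL.Sat (Efm (ΓOf m)) (w x) j) ∧
            cSem w m (jumpWkPos (ΓOf m) w x (bump p x)) := by simpa [SemRaw] using hsem
        have hbad : ∃ j, p x ≤ j ∧ ¬ LTL.Sat (Efm (ΓOf m)) (w x) j := by
          obtain ⟨j, hij, hj⟩ := hsem'.1
          rw [bump_self] at hij
          exact ⟨j, by omega, hj⟩
        apply h'
        refine ⟨hbad, ?_⟩
        have := hsem'.2
        rw [jumpWk_bump_eq_jumpWk hE hbad] at this
        exact this
      · -- took the (¬E ∧ W) disjunct : but E holds, refute inside the E-check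
        obtain ⟨v, hv, hd, θ', s', hveq, hsub, hsem, _⟩ :=
          LCrej w (Efm (ΓOf m)) false x p (by simpa [SemRaw, not_not] using hE) M hM1
        exact ⟨v, hv, hd, Or.inl ⟨θ', s', hveq, subf_Efm_subset _ hsub, hsem⟩⟩
  · -- ¬E at current position
    have hbad : ∃ j, p x ≤ j ∧ ¬ LTL.Sat (Efm (ΓOf m)) (w x) j := ⟨p x, le_rfl, hE⟩
    cases s
    · have h' : (∃ j, p x ≤ j ∧ ¬ LTL.Sat (Efm (ΓOf m)) (w x) j) ∧
          cSem w m (jumpWkPos (ΓOf m) w x p) := not_not.mp h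
      simp only [dWalk, Bool.false_eq_true, if_false] at hM
      rcases hM.2 with hM2 | hM2
      · obtain ⟨v, hv, hd, θ', s', hveq, hsub, hsem, _⟩ :=
          LCrej w (Efm (ΓOf m)) true x p (by simpa [SemRaw] using hE) M hM2
        exact ⟨v, hv, hd, Or.inl ⟨θ', s', hveq, subf_Efm_subset _ hsub, hsem⟩⟩
      · refine ⟨_, hM2, rfl, Or.inr ⟨Or.inr rfl, ?_, ?_⟩⟩
        · show ¬ SemRaw w (St.W m false ((x:ℕ)+1)) (bump p x)
          have : cSem w m (jumpPos (ΓOf m) w ((x:ℕ)+1) (bump p x)) := by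
            rw [jump_bump_eq_jumpWk hE]
            exact h'.2
          simpa [SemRaw, not_not] using this
        · intro _
          show rnk ψ w (St.W m false ((x:ℕ)+1)) (bump p x) < _
          simp only [rnk]
          rw [jump_bump_eq_jumpWk hE, lt4_iff]
          refine Or.inr ⟨rfl, Or.inr ⟨rfl, Or.inl ?_⟩⟩
          have hx := x.isLt
          omega
    · have h' : ¬ ((∃ j, p x ≤ j ∧ ¬ LTL.Sat (Efm (ΓOf m)) (w x) j) ∧
          cSem w m (jumpWkPos (ΓOf m) w x p)) := by simpa [SemRaw] using h
      have hnc : ¬ cSem w m (jumpWkPos (ΓOf m) w x p) := fun hc => h' ⟨hbad, hc⟩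
      simp only [dWalk, if_pos] at hM
      rcases hM with ⟨hM1, hM2⟩ | ⟨hM1, hM2⟩
      · obtain ⟨v, hv, hd, θ', s', hveq, hsub, hsem, _⟩ :=
          LCrej w (Efm (ΓOf m)) true x p (by simpa [SemRaw] using hE) M hM1
        exact ⟨v, hv, hd, Or.inl ⟨θ', s', hveq, subf_Efm_subset _ hsub, hsem⟩⟩
      · refine ⟨_, hM2, rfl, Or.inr ⟨Or.inr rfl, ?_, fun hc => by simp at hc⟩⟩
        show ¬ SemRaw w (St.W m true ((x:ℕ)+1)) (bump p x)
        intro hsem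
        apply hnc
        have : cSem w m (jumpPos (ΓOf m) w ((x:ℕ)+1) (bump p x)) := by
          simpa [SemRaw] using hsem
        rw [jump_bump_eq_jumpWk hE] at this
        exact this

end LocalW



/-! ### Local lemmas for the entry states -/

section LocalE

variable {AP : Type} {n : ℕ}

lemma jumpWk_eq_jump_of_notE {Γ : Finset (LTL AP)} {w : Fin n → Trace AP}
    {p : Fin n → ℕ} {x : Fin n} (hnE : ¬ LTL.Sat (Efm Γ) (w x) (p x)) :
    jumpWkPos Γ w x p = jumpPos Γ w (x:ℕ) p := by
  funext y
  by_cases hyx : y = x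
  · subst hyx
    rw [jumpWkPos_apply, jumpPos_apply, if_neg (lt_irrefl _), if_pos rfl,
      if_neg (lt_irrefl _), WT_of_notE Γ (w y) (p y) hnE, succPos_of_notE Γ (w y) (p y) hnE]
  · rcases Nat.lt_or_ge (y:ℕ) (x:ℕ) with h | h
    · rw [jumpWkPos_apply, jumpPos_apply, if_pos h, if_pos h]
    · have h' : (x:ℕ) < (y:ℕ) :=
        lt_of_le_of_ne h (fun hc => hyx (Fin.ext hc.symm))
      rw [jumpWkPos_apply, jumpPos_apply, if_neg (by omega : ¬ (y:ℕ) < (x:ℕ)), if_neg hyx,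
        if_neg (by omega : ¬ (y:ℕ) < (x:ℕ))]

theorem WC (ψ : HSQF AP (Fin n)) (w : Fin n → Trace AP) (m : HSQF AP (Fin n)) (s : Bool)
    (x : Fin n) (p : Fin n → ℕ) (h : SemRaw w (.W m s (x:ℕ)) p) :
    PosBool.SatBy {v | OKWc ψ w m s x p v} (dEntry m s x (fun d => w d (p d))) := by
  have hLmono : ∀ (s' : Bool), PosBool.SatBy {v | OKLc w (GEfm (ΓOf m)) s' x p v}
        (dL (GEfm (ΓOf m)) s' x (fun d => w d (p d))) →
      PosBool.SatBy {v | OKWc ψ w m s x p v} (dL (GEfm (ΓOf m)) s' x (fun d => w d (p d))) := by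
    intro s' hs
    refine satBy_mono ?_ hs
    rintro v ⟨hd, θ', s'', hv, hsub, hsem, _⟩
    exact ⟨hd, Or.inl ⟨θ', s'', hv, hsub, hsem⟩⟩
  have hEmono : ∀ (s' : Bool), PosBool.SatBy {v | OKLc w (Efm (ΓOf m)) s' x p v}
        (dL (Efm (ΓOf m)) s' x (fun d => w d (p d))) →
      PosBool.SatBy {v | OKWc ψ w m s x p v} (dL (Efm (ΓOf m)) s' x (fun d => w d (p d))) := by
    intro s' hs
    refine satBy_mono ?_ hs
    rintro v ⟨hd, θ', s'', hv, hsub, hsem, _⟩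
    exact ⟨hd, Or.inl ⟨θ', s'', hv, subf_Efm_subset _ hsub, hsem⟩⟩
  by_cases hGE : LTL.Sat (GEfm (ΓOf m)) (w x) (p x)
  · cases s
    · have h' : ¬ cSem w m (jumpPos (ΓOf m) w (x:ℕ) p) := h
      simp only [dEntry, Bool.false_eq_true, if_false]
      constructor
      · refine Or.inr ?_
        show OKWc ψ w m false x p (⟨St.W m false ((x:ℕ)+1), x⟩)
        refine ⟨rfl, Or.inr ⟨Or.inr rfl, ?_, fun hc => by simp at hc⟩⟩
        show ¬ cSem w m (jumpPos (ΓOf m) w ((x:ℕ)+1) (bump p x))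
        rw [jump_succ_of_GE hGE]
        exact h'
      · exact Or.inl (hLmono true (LC w (GEfm (ΓOf m)) true x p hGE))
    · have h' : cSem w m (jumpPos (ΓOf m) w (x:ℕ) p) := h
      simp only [dEntry, if_pos]
      refine Or.inl ⟨hLmono true (LC w (GEfm (ΓOf m)) true x p hGE), ?_⟩
      show OKWc ψ w m true x p (⟨St.W m true ((x:ℕ)+1), x⟩)
      refine ⟨rfl, Or.inr ⟨Or.inr rfl, ?_, ?_⟩⟩
      · show cSem w m (jumpPos (ΓOf m) w ((x:ℕ)+1) (bump p x))
        rw [jump_succ_of_GE hGE]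
        exact h'
      · intro _
        show rnk ψ w (St.W m true ((x:ℕ)+1)) (bump p x) < _
        simp only [rnk]
        rw [jump_succ_of_GE hGE, lt4_iff]
        refine Or.inr ⟨rfl, Or.inr ⟨rfl, Or.inl ?_⟩⟩
        have hx := x.isLt
        omega
  · by_cases hE : LTL.Sat (Efm (ΓOf m)) (w x) (p x)
    · -- walk
      cases s
      · have h' : ¬ cSem w m (jumpPos (ΓOf m) w (x:ℕ) p) := h
        simp only [dEntry, Bool.false_eq_true, if_false]
        refine ⟨Or.inl (hLmono false (LC w (GEfm (ΓOf m)) false x p hGE)), ?_⟩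
        refine Or.inr ?_
        -- dWalk with s = false
        simp only [dWalk, Bool.false_eq_true, if_false]
        constructor
        · refine Or.inr ?_
          show OKWc ψ w m false x p (⟨St.Wk m false x, x⟩)
          refine ⟨rfl, Or.inr ⟨Or.inl rfl, ?_, fun hc => by simp at hc⟩⟩
          show ¬ ((∃ j, bump p x x ≤ j ∧ ¬ LTL.Sat (Efm (ΓOf m)) (w x) j) ∧
              cSem w m (jumpWkPos (ΓOf m) w x (bump p x)))
          rintro ⟨_, hcs⟩
          rw [jumpWk_bump_eq_jump hGE hE] at hcs
          exact h' hcs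
        · exact Or.inl (hEmono true (LC w (Efm (ΓOf m)) true x p hE))
      · have h' : cSem w m (jumpPos (ΓOf m) w (x:ℕ) p) := h
        simp only [dEntry, if_pos]
        refine Or.inr ⟨hLmono false (LC w (GEfm (ΓOf m)) false x p hGE), ?_⟩
        simp only [dWalk, if_pos]
        refine Or.inl ⟨hEmono true (LC w (Efm (ΓOf m)) true x p hE), ?_⟩
        show OKWc ψ w m true x p (⟨St.Wk m true x, x⟩)
        refine ⟨rfl, Or.inr ⟨Or.inl rfl, ?_, ?_⟩⟩
        · show (∃ j, bump p x x ≤ j ∧ ¬ LTL.Sat (Efm (ΓOf m)) (w x) j) ∧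
              cSem w m (jumpWkPos (ΓOf m) w x (bump p x))
          constructor
          · obtain ⟨j, hij, hj⟩ := (not_GE_iff (ΓOf m) (w x) (p x)).mp hGE
            rw [bump_self]
            refine ⟨j, ?_, hj⟩
            rcases eq_or_lt_of_le hij with rfl | hlt
            · exact absurd hE hj
            · omega
          · rw [jumpWk_bump_eq_jump hGE hE]
            exact h'
        · intro _
          show rnk ψ w (St.Wk m true x) (bump p x) < _
          simp only [rnk]
          rw [jumpWk_bump_eq_jump hGE hE, lt4_iff]
          exact Or.inr ⟨rfl, Or.inr ⟨rfl, Or.inl (by omega)⟩⟩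
    · -- exit immediately
      have hjump : jumpWkPos (ΓOf m) w x p = jumpPos (ΓOf m) w (x:ℕ) p :=
        jumpWk_eq_jump_of_notE hE
      cases s
      · have h' : ¬ cSem w m (jumpPos (ΓOf m) w (x:ℕ) p) := h
        simp only [dEntry, Bool.false_eq_true, if_false]
        refine ⟨Or.inl (hLmono false (LC w (GEfm (ΓOf m)) false x p hGE)), ?_⟩
        refine Or.inr ?_
        simp only [dWalk, Bool.false_eq_true, if_false]
        refine ⟨Or.inl (hEmono false (LC w (Efm (ΓOf m)) false x p hE)), ?_⟩
        refine Or.inr ?_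
        show OKWc ψ w m false x p (⟨St.W m false ((x:ℕ)+1), x⟩)
        refine ⟨rfl, Or.inr ⟨Or.inr rfl, ?_, fun hc => by simp at hc⟩⟩
        show ¬ cSem w m (jumpPos (ΓOf m) w ((x:ℕ)+1) (bump p x))
        rw [jump_bump_eq_jumpWk hE, hjump]
        exact h'
      · have h' : cSem w m (jumpPos (ΓOf m) w (x:ℕ) p) := h
        simp only [dEntry, if_pos]
        refine Or.inr ⟨hLmono false (LC w (GEfm (ΓOf m)) false x p hGE), ?_⟩
        simp only [dWalk, if_pos]
        refine Or.inr ⟨hEmono false (LC w (Efm (ΓOf m)) false x p hE), ?_⟩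
        show OKWc ψ w m true x p (⟨St.W m true ((x:ℕ)+1), x⟩)
        refine ⟨rfl, Or.inr ⟨Or.inr rfl, ?_, ?_⟩⟩
        · show cSem w m (jumpPos (ΓOf m) w ((x:ℕ)+1) (bump p x))
          rw [jump_bump_eq_jumpWk hE, hjump]
          exact h'
        · intro _
          show rnk ψ w (St.W m true ((x:ℕ)+1)) (bump p x) < _
          simp only [rnk]
          rw [jump_bump_eq_jumpWk hE, hjump, lt4_iff]
          refine Or.inr ⟨rfl, Or.inr ⟨rfl, Or.inl ?_⟩⟩
          have hx := x.isLt
          omega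

theorem WCrej (ψ : HSQF AP (Fin n)) (w : Fin n → Trace AP) (m : HSQF AP (Fin n)) (s : Bool)
    (x : Fin n) (p : Fin n → ℕ) (h : ¬ SemRaw w (.W m s (x:ℕ)) p)
    (M : Set (St AP n × Fin n))
    (hM : PosBool.SatBy M (dEntry m s x (fun d => w d (p d)))) :
    ∃ v ∈ M, OKWr ψ w m s x p v := by
  have hLrej : ∀ (s' : Bool), ¬ SemRaw w (.L (GEfm (ΓOf m)) s' x) p →
      PosBool.SatBy M (dL (GEfm (ΓOf m)) s' x (fun d => w d (p d))) →
      ∃ v ∈ M, OKWr ψ w m s x p v := by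
    intro s' hns hMs
    obtain ⟨v, hv, hd, θ', s'', hveq, hsub, hsem, _⟩ :=
      LCrej w (GEfm (ΓOf m)) s' x p hns M hMs
    exact ⟨v, hv, hd, Or.inl ⟨θ', s'', hveq, hsub, hsem⟩⟩
  have hErej : ∀ (s' : Bool), ¬ SemRaw w (.L (Efm (ΓOf m)) s' x) p →
      PosBool.SatBy M (dL (Efm (ΓOf m)) s' x (fun d => w d (p d))) →
      ∃ v ∈ M, OKWr ψ w m s x p v := by
    intro s' hns hMs
    obtain ⟨v, hv, hd, θ', s'', hveq, hsub, hsem, _⟩ :=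
      LCrej w (Efm (ΓOf m)) s' x p hns M hMs
    exact ⟨v, hv, hd, Or.inl ⟨θ', s'', hveq, subf_Efm_subset _ hsub, hsem⟩⟩
  by_cases hGE : LTL.Sat (GEfm (ΓOf m)) (w x) (p x)
  · cases s
    · -- s = false: semantics holds
      have h' : cSem w m (jumpPos (ΓOf m) w (x:ℕ) p) := not_not.mp h
      simp only [dEntry, Bool.false_eq_true, if_false] at hM
      rcases hM.1 with hM1 | hM1
      · exact hLrej false (by exact fun hc => hc hGE) hM1
      · refine ⟨_, hM1, rfl, Or.inr ⟨Or.inr rfl, ?_, ?_⟩⟩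
        · show ¬ SemRaw w (St.W m false ((x:ℕ)+1)) (bump p x)
          intro hsem
          apply hsem
          show cSem w m (jumpPos (ΓOf m) w ((x:ℕ)+1) (bump p x))
          rw [jump_succ_of_GE hGE]
          exact h'
        · intro _
          show rnk ψ w (St.W m false ((x:ℕ)+1)) (bump p x) < _
          simp only [rnk]
          rw [jump_succ_of_GE hGE, lt4_iff]
          refine Or.inr ⟨rfl, Or.inr ⟨rfl, Or.inl ?_⟩⟩
          have hx := x.isLt
          omega
    · -- s = true: semantics fails
      have h' : ¬ cSem w m (jumpPos (ΓOf m) w (x:ℕ) p) := h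
      simp only [dEntry, if_pos] at hM
      rcases hM with ⟨hM1, hM2⟩ | ⟨hM1, hM2⟩
      · refine ⟨_, hM2, rfl, Or.inr ⟨Or.inr rfl, ?_, fun hc => by simp at hc⟩⟩
        show ¬ SemRaw w (St.W m true ((x:ℕ)+1)) (bump p x)
        intro hsem
        apply h'
        have : cSem w m (jumpPos (ΓOf m) w ((x:ℕ)+1) (bump p x)) := hsem
        rw [jump_succ_of_GE hGE] at this
        exact this
      · exact hLrej false (by exact fun hc => hc hGE) hM1
  · by_cases hE : LTL.Sat (Efm (ΓOf m)) (w x) (p x)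
    · cases s
      · have h' : cSem w m (jumpPos (ΓOf m) w (x:ℕ) p) := not_not.mp h
        simp only [dEntry, Bool.false_eq_true, if_false] at hM
        rcases hM.2 with hM2 | hM2
        · exact hLrej true hGE hM2
        · -- in the walk (s = false)
          simp only [dWalk, Bool.false_eq_true, if_false] at hM2
          rcases hM2.1 with hM3 | hM3
          · exact hErej false (by exact fun hc => hc hE) hM3
          · refine ⟨_, hM3, rfl, Or.inr ⟨Or.inl rfl, ?_, ?_⟩⟩
            · show ¬ SemRaw w (St.Wk m false x) (bump p x)
              intro hsem
              apply hsem
              constructor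
              · obtain ⟨j, hij, hj⟩ := (not_GE_iff (ΓOf m) (w x) (p x)).mp hGE
                rw [bump_self]
                refine ⟨j, ?_, hj⟩
                rcases eq_or_lt_of_le hij with rfl | hlt
                · exact absurd hE hj
                · omega
              · rw [jumpWk_bump_eq_jump hGE hE]
                exact h'
            · intro _
              show rnk ψ w (St.Wk m false x) (bump p x) < _
              simp only [rnk]
              rw [jumpWk_bump_eq_jump hGE hE, lt4_iff]
              exact Or.inr ⟨rfl, Or.inr ⟨rfl, Or.inl (by omega)⟩⟩
      · have h' : ¬ cSem w m (jumpPos (ΓOf m) w (x:ℕ) p) := h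
        simp only [dEntry, if_pos] at hM
        rcases hM with ⟨hM1, hM2⟩ | ⟨hM1, hM2⟩
        · exact hLrej true hGE hM1
        · simp only [dWalk, if_pos] at hM2
          rcases hM2 with ⟨hM3, hM4⟩ | ⟨hM3, hM4⟩
          · refine ⟨_, hM4, rfl, Or.inr ⟨Or.inl rfl, ?_, fun hc => by simp at hc⟩⟩
            show ¬ SemRaw w (St.Wk m true x) (bump p x)
            rintro ⟨_, hcs⟩
            rw [jumpWk_bump_eq_jump hGE hE] at hcs
            exact h' hcs
          · exact hErej false (by exact fun hc => hc hE) hM3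
    · -- exit case
      have hjump : jumpWkPos (ΓOf m) w x p = jumpPos (ΓOf m) w (x:ℕ) p :=
        jumpWk_eq_jump_of_notE hE
      cases s
      · have h' : cSem w m (jumpPos (ΓOf m) w (x:ℕ) p) := not_not.mp h
        simp only [dEntry, Bool.false_eq_true, if_false] at hM
        rcases hM.2 with hM2 | hM2
        · exact hLrej true hGE hM2
        · simp only [dWalk, Bool.false_eq_true, if_false] at hM2
          rcases hM2.2 with hM3 | hM3
          · exact hErej true hE hM3
          · refine ⟨_, hM3, rfl, Or.inr ⟨Or.inr rfl, ?_, ?_⟩⟩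
            · show ¬ SemRaw w (St.W m false ((x:ℕ)+1)) (bump p x)
              intro hsem
              apply hsem
              show cSem w m (jumpPos (ΓOf m) w ((x:ℕ)+1) (bump p x))
              rw [jump_bump_eq_jumpWk hE, hjump]
              exact h'
            · intro _
              show rnk ψ w (St.W m false ((x:ℕ)+1)) (bump p x) < _
              simp only [rnk]
              rw [jump_bump_eq_jumpWk hE, hjump, lt4_iff]
              refine Or.inr ⟨rfl, Or.inr ⟨rfl, Or.inl ?_⟩⟩
              have hx := x.isLt
              omega
      · have h' : ¬ cSem w m (jumpPos (ΓOf m) w (x:ℕ) p) := h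
        simp only [dEntry, if_pos] at hM
        rcases hM with ⟨hM1, hM2⟩ | ⟨hM1, hM2⟩
        · exact hLrej true hGE hM1
        · simp only [dWalk, if_pos] at hM2
          rcases hM2 with ⟨hM3, hM4⟩ | ⟨hM3, hM4⟩
          · exact hErej true hE hM3
          · refine ⟨_, hM4, rfl, Or.inr ⟨Or.inr rfl, ?_, fun hc => by simp at hc⟩⟩
            show ¬ SemRaw w (St.W m true ((x:ℕ)+1)) (bump p x)
            intro hsem
            apply h'
            have : cSem w m (jumpPos (ΓOf m) w ((x:ℕ)+1) (bump p x)) := hsem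
            rw [jump_bump_eq_jumpWk hE, hjump] at this
            exact this

end LocalE



/-! ### Local lemmas for the HyperLTL_S part -/

section LocalH

variable {AP : Type} {n : ℕ}

def IsUntlR (m : HSQF AP (Fin n)) : Prop := ∃ Γ a b, m = HSQF.untlR Γ a b

/-- Wellformed children relative to a formula. -/
def KidH (φ : HSQF AP (Fin n)) (q : St AP n) : Prop :=
  (∃ θ' s' x, q = St.L θ' s' x ∧ ∃ Γ ∈ subs' φ, θ' ∈ LTL.subf (GEfm Γ)) ∨
  (∃ m' s' k, q = St.W m' s' k ∧ IsMod m' ∧ m' ∈ subH φ ∧ k ≤ n) ∨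
  (∃ m' s' x, q = St.Wk m' s' x ∧ IsMod m' ∧ m' ∈ subH φ)

lemma KidH_mono {φ₁ φ₂ : HSQF AP (Fin n)} (h : φ₁ ∈ subH φ₂) {q : St AP n} :
    KidH φ₁ q → KidH φ₂ q := by
  rintro (⟨θ', s', x, hq, Γ, hΓ, hθ⟩ | ⟨m', s', k, hq, hmod, hm, hk⟩ |
    ⟨m', s', x, hq, hmod, hm⟩)
  · exact Or.inl ⟨θ', s', x, hq, Γ, subs'_mono _ _ h hΓ, hθ⟩
  · exact Or.inr (Or.inl ⟨m', s', k, hq, hmod, subH_trans _ _ h hm, hk⟩)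
  · exact Or.inr (Or.inr ⟨m', s', x, hq, hmod, subH_trans _ _ h hm⟩)

/-- Good children for the HSQF part (completeness). -/
def OKHc (ψ : HSQF AP (Fin n)) (w : Fin n → Trace AP) (φ : HSQF AP (Fin n)) (s : Bool)
    (p : Fin n → ℕ) (v : St AP n × Fin n) : Prop :=
  SemRaw w v.1 (bump p v.2) ∧ KidH φ v.1 ∧
  m0 ψ v.1 ≤ BB ψ + sizeH φ ∧
  (m0 ψ v.1 = BB ψ + sizeH φ → sgSt v.1 = s) ∧
  (sgSt v.1 = true →
    rnk ψ w v.1 (bump p v.2) < toLex4 (BB ψ + sizeH φ) (witH w φ p) (2*n+2) 0) ∧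
  (IsUntlR φ → sgSt v.1 = true → m0 ψ v.1 = BB ψ + sizeH φ →
    rnk ψ w v.1 (bump p v.2) < toLex4 (BB ψ + sizeH φ) (witH w φ p) 1 0)

/-- Good children for the HSQF part (rejection). -/
def OKHr (ψ : HSQF AP (Fin n)) (w : Fin n → Trace AP) (φ : HSQF AP (Fin n)) (s : Bool)
    (p : Fin n → ℕ) (v : St AP n × Fin n) : Prop :=
  ¬ SemRaw w v.1 (bump p v.2) ∧ KidH φ v.1 ∧
  m0 ψ v.1 ≤ BB ψ + sizeH φ ∧
  (m0 ψ v.1 = BB ψ + sizeH φ → sgSt v.1 = s) ∧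
  (sgSt v.1 = false →
    rnk ψ w v.1 (bump p v.2) < toLex4 (BB ψ + sizeH φ) (witH w φ p) (2*n+2) 0) ∧
  (IsUntlR φ → sgSt v.1 = false → m0 ψ v.1 = BB ψ + sizeH φ →
    rnk ψ w v.1 (bump p v.2) < toLex4 (BB ψ + sizeH φ) (witH w φ p) 1 0)

lemma OKHc_mono (ψ : HSQF AP (Fin n)) (w : Fin n → Trace AP) {φ₁ φ₂ : HSQF AP (Fin n)}
    {s₁ s₂ : Bool} {p : Fin n → ℕ} (hm : φ₁ ∈ subH φ₂) (hsize : sizeH φ₁ < sizeH φ₂) :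
    {v | OKHc ψ w φ₁ s₁ p v} ⊆ {v | OKHc ψ w φ₂ s₂ p v} := by
  rintro v ⟨hsem, hkid, hm0, _, hrnk, _⟩
  refine ⟨hsem, KidH_mono hm hkid, by omega, fun hc => absurd hc (by omega), ?_,
    fun _ _ hc => absurd hc (by omega)⟩
  intro hsg
  calc rnk ψ w v.1 (bump p v.2)
      < toLex4 (BB ψ + sizeH φ₁) (witH w φ₁ p) (2*n+2) 0 := hrnk hsg
    _ < toLex4 (BB ψ + sizeH φ₂) (witH w φ₂ p) (2*n+2) 0 := by
        rw [lt4_iff]; exact Or.inl (by omega)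

lemma OKHr_mono (ψ : HSQF AP (Fin n)) (w : Fin n → Trace AP) {φ₁ φ₂ : HSQF AP (Fin n)}
    {s₁ s₂ : Bool} {p : Fin n → ℕ} (hm : φ₁ ∈ subH φ₂) (hsize : sizeH φ₁ < sizeH φ₂) :
    ∀ v, OKHr ψ w φ₁ s₁ p v → OKHr ψ w φ₂ s₂ p v := by
  rintro v ⟨hsem, hkid, hm0, _, hrnk, _⟩
  refine ⟨hsem, KidH_mono hm hkid, by omega, fun hc => absurd hc (by omega), ?_,
    fun _ _ hc => absurd hc (by omega)⟩
  intro hsg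
  calc rnk ψ w v.1 (bump p v.2)
      < toLex4 (BB ψ + sizeH φ₁) (witH w φ₁ p) (2*n+2) 0 := hrnk hsg
    _ < toLex4 (BB ψ + sizeH φ₂) (witH w φ₂ p) (2*n+2) 0 := by
        rw [lt4_iff]; exact Or.inl (by omega)

lemma OKW_to_OKHc (ψ : HSQF AP (Fin n)) (w : Fin n → Trace AP) (m : HSQF AP (Fin n))
    (s : Bool) (p : Fin n → ℕ) (hn : 0 < n)
    (hmod : IsMod m) (hΓψ : ΓOf m ∈ subs' ψ)
    (hwit : s = true → witH w m (jumpPos (ΓOf m) w 0 p) < witH w m p ∨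
      (witH w m (jumpPos (ΓOf m) w 0 p) = 0 ∧ witH w m p = 0 ∧ ¬ IsUntlR m)) :
    ∀ v, OKWc ψ w m s ⟨0, hn⟩ p v → OKHc ψ w m s p v := by
  rintro v ⟨hd, hv⟩
  have hz : ((⟨0, hn⟩ : Fin n) : ℕ) = 0 := rfl
  rcases hv with ⟨θ', s', hveq, hsub, hsem⟩ | ⟨hveq, hsem, hrnk⟩
  · -- an LTL child
    have hm0 : m0 ψ v.1 = sizeL θ' := by rw [hveq]; rfl
    have hsz : sizeL θ' < BB ψ := sizeL_lt_BB ψ hΓψ hsub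
    refine ⟨by rw [hd]; exact hsem,
      Or.inl ⟨θ', s', ⟨0, hn⟩, hveq, ΓOf m, gamma_mem_subs' m hmod, hsub⟩,
      by rw [hm0]; omega, fun hc => absurd hc (by omega), ?_, ?_⟩
    · intro _
      obtain ⟨b', c', d', hq'⟩ := rnk_shape ψ w v.1 (bump p v.2)
      rw [hq', lt4_iff, hm0]
      exact Or.inl (by omega)
    · intro _ _ hc
      exact absurd hc (by omega)
  · -- a W/Wk child of the same modality
    have hm0 : m0 ψ v.1 = BB ψ + sizeH m := by
      rcases hveq with hveq | hveq <;> rw [hveq] <;> rfl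
    have hsg : sgSt v.1 = s := by
      rcases hveq with hveq | hveq <;> rw [hveq] <;> rfl
    refine ⟨by rw [hd]; exact hsem,
      Or.inr ?_, le_of_eq hm0, fun _ => hsg, ?_, ?_⟩
    · rcases hveq with hveq | hveq
      · exact Or.inr ⟨m, s, ⟨0, hn⟩, hveq, hmod, subH_self m⟩
      · exact Or.inl ⟨m, s, 1, by rw [hveq, hz], hmod, subH_self m, by omega⟩
    · intro hsgt
      have hs : s = true := by rw [← hsg, hsgt]
      have hb := hrnk hs
      rw [hz] at hb
      rw [← hd] at hb
      rcases hwit hs with hlt | ⟨he1, he2, _⟩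
      · calc rnk ψ w v.1 (bump p v.2)
            < toLex4 (BB ψ + sizeH m) (witH w m (jumpPos (ΓOf m) w 0 p)) (2*(n-0)+1) 0 := hb
          _ < toLex4 (BB ψ + sizeH m) (witH w m p) (2*n+2) 0 := by
              rw [lt4_iff]; exact Or.inr ⟨rfl, Or.inl hlt⟩
      · calc rnk ψ w v.1 (bump p v.2)
            < toLex4 (BB ψ + sizeH m) (witH w m (jumpPos (ΓOf m) w 0 p)) (2*(n-0)+1) 0 := hb
          _ < toLex4 (BB ψ + sizeH m) (witH w m p) (2*n+2) 0 := by
              rw [lt4_iff, he1, he2]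
              exact Or.inr ⟨rfl, Or.inr ⟨rfl, Or.inl (by omega)⟩⟩
    · intro hun hsgt _
      have hs : s = true := by rw [← hsg, hsgt]
      have hb := hrnk hs
      rw [hz] at hb
      rw [← hd] at hb
      rcases hwit hs with hlt | ⟨_, _, hnun⟩
      · calc rnk ψ w v.1 (bump p v.2)
            < toLex4 (BB ψ + sizeH m) (witH w m (jumpPos (ΓOf m) w 0 p)) (2*(n-0)+1) 0 := hb
          _ < toLex4 (BB ψ + sizeH m) (witH w m p) 1 0 := by
              rw [lt4_iff]; exact Or.inr ⟨rfl, Or.inl hlt⟩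
      · exact absurd hun hnun

lemma OKW_to_OKHr (ψ : HSQF AP (Fin n)) (w : Fin n → Trace AP) (m : HSQF AP (Fin n))
    (s : Bool) (p : Fin n → ℕ) (hn : 0 < n)
    (hmod : IsMod m) (hΓψ : ΓOf m ∈ subs' ψ)
    (hwit : s = false → witH w m (jumpPos (ΓOf m) w 0 p) < witH w m p ∨
      (witH w m (jumpPos (ΓOf m) w 0 p) = 0 ∧ witH w m p = 0 ∧ ¬ IsUntlR m)) :
    ∀ v, OKWr ψ w m s ⟨0, hn⟩ p v → OKHr ψ w m s p v := by
  rintro v ⟨hd, hv⟩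
  have hz : ((⟨0, hn⟩ : Fin n) : ℕ) = 0 := rfl
  rcases hv with ⟨θ', s', hveq, hsub, hsem⟩ | ⟨hveq, hsem, hrnk⟩
  · have hm0 : m0 ψ v.1 = sizeL θ' := by rw [hveq]; rfl
    have hsz : sizeL θ' < BB ψ := sizeL_lt_BB ψ hΓψ hsub
    refine ⟨by rw [hd]; exact hsem,
      Or.inl ⟨θ', s', ⟨0, hn⟩, hveq, ΓOf m, gamma_mem_subs' m hmod, hsub⟩,
      by rw [hm0]; omega, fun hc => absurd hc (by omega), ?_, ?_⟩
    · intro _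
      obtain ⟨b', c', d', hq'⟩ := rnk_shape ψ w v.1 (bump p v.2)
      rw [hq', lt4_iff, hm0]
      exact Or.inl (by omega)
    · intro _ _ hc
      exact absurd hc (by omega)
  · have hm0 : m0 ψ v.1 = BB ψ + sizeH m := by
      rcases hveq with hveq | hveq <;> rw [hveq] <;> rfl
    have hsg : sgSt v.1 = s := by
      rcases hveq with hveq | hveq <;> rw [hveq] <;> rfl
    refine ⟨by rw [hd]; exact hsem,
      Or.inr ?_, le_of_eq hm0, fun _ => hsg, ?_, ?_⟩
    · rcases hveq with hveq | hveq
      · exact Or.inr ⟨m, s, ⟨0, hn⟩, hveq, hmod, subH_self m⟩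
      · exact Or.inl ⟨m, s, 1, by rw [hveq, hz], hmod, subH_self m, by omega⟩
    · intro hsgt
      have hs : s = false := by rw [← hsg, hsgt]
      have hb := hrnk hs
      rw [hz] at hb
      rw [← hd] at hb
      rcases hwit hs with hlt | ⟨he1, he2, _⟩
      · calc rnk ψ w v.1 (bump p v.2)
            < toLex4 (BB ψ + sizeH m) (witH w m (jumpPos (ΓOf m) w 0 p)) (2*(n-0)+1) 0 := hb
          _ < toLex4 (BB ψ + sizeH m) (witH w m p) (2*n+2) 0 := by
              rw [lt4_iff]; exact Or.inr ⟨rfl, Or.inl hlt⟩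
      · calc rnk ψ w v.1 (bump p v.2)
            < toLex4 (BB ψ + sizeH m) (witH w m (jumpPos (ΓOf m) w 0 p)) (2*(n-0)+1) 0 := hb
          _ < toLex4 (BB ψ + sizeH m) (witH w m p) (2*n+2) 0 := by
              rw [lt4_iff, he1, he2]
              exact Or.inr ⟨rfl, Or.inr ⟨rfl, Or.inl (by omega)⟩⟩
    · intro hun hsgt _
      have hs : s = false := by rw [← hsg, hsgt]
      have hb := hrnk hs
      rw [hz] at hb
      rw [← hd] at hb
      rcases hwit hs with hlt | ⟨_, _, hnun⟩
      · calc rnk ψ w v.1 (bump p v.2)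
            < toLex4 (BB ψ + sizeH m) (witH w m (jumpPos (ΓOf m) w 0 p)) (2*(n-0)+1) 0 := hb
          _ < toLex4 (BB ψ + sizeH m) (witH w m p) 1 0 := by
              rw [lt4_iff]; exact Or.inr ⟨rfl, Or.inl hlt⟩
      · exact absurd hun hnun

lemma semW_zero_next (w : Fin n → Trace AP) (Γ : Finset (LTL AP)) (φ' : HSQF AP (Fin n))
    (s : Bool) (p : Fin n → ℕ) :
    SemRaw w (.W (HSQF.nextR Γ φ') s 0) p ↔ SemRaw w (.H (HSQF.nextR Γ φ') s) p := by
  have key : cSem w (HSQF.nextR Γ φ') (jumpPos (ΓOf (HSQF.nextR Γ φ')) w 0 p) ↔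
      HSQF.Sat (HSQF.nextR Γ φ') (asgn w p) := by
    show HSQF.Sat φ' (asgn w (jumpPos Γ w 0 p)) ↔ HSQF.Sat φ' (succA (↑Γ) (asgn w p))
    rw [asgn_jump_zero]
  cases s
  · show ¬ _ ↔ ¬ _
    exact not_congr key
  · exact key

lemma semW_zero_untl (w : Fin n → Trace AP) (Γ : Finset (LTL AP)) (a b : HSQF AP (Fin n))
    (s : Bool) (p : Fin n → ℕ) :
    SemRaw w (.W (HSQF.untlR Γ a b) s 0) p ↔
      (if s then HSQF.Sat (HSQF.untlR Γ a b) (succA (↑Γ) (asgn w p))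
       else ¬ HSQF.Sat (HSQF.untlR Γ a b) (succA (↑Γ) (asgn w p))) := by
  have key : cSem w (HSQF.untlR Γ a b) (jumpPos (ΓOf (HSQF.untlR Γ a b)) w 0 p) ↔
      HSQF.Sat (HSQF.untlR Γ a b) (succA (↑Γ) (asgn w p)) := by
    show HSQF.Sat (HSQF.untlR Γ a b) (asgn w (jumpPos Γ w 0 p)) ↔ _
    rw [asgn_jump_zero]
  cases s
  · show ¬ _ ↔ ¬ _
    exact not_congr key
  · exact key

theorem HC (hn : 0 < n) (ψ : HSQF AP (Fin n)) (w : Fin n → Trace AP)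
    (φ : HSQF AP (Fin n)) :
    ∀ (s : Bool) (p : Fin n → ℕ), subs' φ ⊆ subs' ψ → SemRaw w (.H φ s) p →
      PosBool.SatBy {v | OKHc ψ w φ s p v} (dH hn φ s (fun d => w d (p d))) := by
  induction φ with
  | tt =>
    intro s p _ h
    cases s
    · simp [SemRaw, HSQF.Sat] at h
    · simp only [dH, if_pos]
      trivial
  | atom a x =>
    intro s p _ h
    cases s
    · have hm : ¬ a ∈ w x (p x) := by simpa [SemRaw, HSQF.Sat, asgn] using h
      simp only [dH]
      rw [if_pos (by simpa using hm)]
      trivial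
    · have hm : a ∈ w x (p x) := by simpa [SemRaw, HSQF.Sat, asgn] using h
      simp only [dH]
      rw [if_pos (by simpa using hm)]
      trivial
  | neg φ ih =>
    intro s p hΓ h
    have h' : SemRaw w (.H φ (!s)) p := by
      cases s
      · simpa [SemRaw, HSQF.Sat, not_not] using h
      · simpa [SemRaw, HSQF.Sat] using h
    have hmem : φ ∈ subH (HSQF.neg φ) := by
      simp only [subH, Finset.mem_insert]
      exact Or.inr (subH_self φ)
    have hΓ' : subs' φ ⊆ subs' ψ := by
      refine Finset.Subset.trans ?_ hΓ
      exact subs'_mono _ _ hmem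
    have hr := ih (!s) p hΓ' h'
    have hgoal : PosBool.SatBy {v | OKHc ψ w (HSQF.neg φ) s p v}
        (dH hn φ (!s) (fun d => w d (p d))) := by
      refine satBy_mono ?_ hr
      intro v hv
      exact OKHc_mono ψ w hmem (by simp [sizeH]) hv
    cases s
    · exact hgoal
    · exact hgoal
  | conj φ₁ φ₂ ih₁ ih₂ =>
    intro s p hΓ h
    have hm₁ : φ₁ ∈ subH (HSQF.conj φ₁ φ₂) := by
      simp only [subH, Finset.mem_insert, Finset.mem_union]
      exact Or.inr (Or.inl (subH_self φ₁))
    have hm₂ : φ₂ ∈ subH (HSQF.conj φ₁ φ₂) := by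
      simp only [subH, Finset.mem_insert, Finset.mem_union]
      exact Or.inr (Or.inr (subH_self φ₂))
    have hΓ₁ : subs' φ₁ ⊆ subs' ψ := Finset.Subset.trans (subs'_mono _ _ hm₁) hΓ
    have hΓ₂ : subs' φ₂ ⊆ subs' ψ := Finset.Subset.trans (subs'_mono _ _ hm₂) hΓ
    cases s
    · have h' : ¬ (HSQF.Sat φ₁ (asgn w p) ∧ HSQF.Sat φ₂ (asgn w p)) := by
        simpa [SemRaw, HSQF.Sat] using h
      simp only [dH, Bool.false_eq_true, if_false]
      by_cases h₁ : HSQF.Sat φ₁ (asgn w p)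
      · have h₂ : ¬ HSQF.Sat φ₂ (asgn w p) := fun hc => h' ⟨h₁, hc⟩
        exact Or.inr (satBy_mono (OKHc_mono ψ w hm₂ (by simp [sizeH]))
          (ih₂ false p hΓ₂ (by simpa [SemRaw] using h₂)))
      · exact Or.inl (satBy_mono (OKHc_mono ψ w hm₁ (by simp [sizeH]))
          (ih₁ false p hΓ₁ (by simpa [SemRaw] using h₁)))
    · have h' : HSQF.Sat φ₁ (asgn w p) ∧ HSQF.Sat φ₂ (asgn w p) := by
        simpa [SemRaw, HSQF.Sat] using h
      simp only [dH, if_pos]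
      exact ⟨satBy_mono (OKHc_mono ψ w hm₁ (by simp [sizeH]))
          (ih₁ true p hΓ₁ (by simpa [SemRaw] using h'.1)),
        satBy_mono (OKHc_mono ψ w hm₂ (by simp [sizeH]))
          (ih₂ true p hΓ₂ (by simpa [SemRaw] using h'.2))⟩
  | nextR Γ φ' ih =>
    intro s p hΓ h
    have hmod : IsMod (HSQF.nextR Γ φ') := trivial
    have hΓψ : ΓOf (HSQF.nextR Γ φ') ∈ subs' ψ := by
      apply hΓ
      exact gamma_mem_subs' _ hmod
    have hsemW : SemRaw w (.W (HSQF.nextR Γ φ') s 0) p :=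
      (semW_zero_next w Γ φ' s p).mpr h
    have hwc := WC ψ w (HSQF.nextR Γ φ') s ⟨0, hn⟩ p hsemW
    show PosBool.SatBy _ (dEntry (HSQF.nextR Γ φ') s ⟨0, hn⟩ (fun d => w d (p d)))
    refine satBy_mono ?_ hwc
    intro v hv
    exact OKW_to_OKHc ψ w (HSQF.nextR Γ φ') s p hn hmod hΓψ
      (fun _ => Or.inr ⟨rfl, rfl, by rintro ⟨Γ', a', b', hc⟩; cases hc⟩) v hv
  | untlR Γ a b iha ihb =>
    intro s p hΓ h
    set m : HSQF AP (Fin n) := HSQF.untlR Γ a b with hm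
    have hmod : IsMod m := trivial
    have hΓψ : ΓOf m ∈ subs' ψ := by
      apply hΓ
      exact gamma_mem_subs' _ hmod
    have hma : a ∈ subH m := by
      rw [hm]
      simp only [subH, Finset.mem_insert, Finset.mem_union]
      exact Or.inr (Or.inl (subH_self a))
    have hmb : b ∈ subH m := by
      rw [hm]
      simp only [subH, Finset.mem_insert, Finset.mem_union]
      exact Or.inr (Or.inr (subH_self b))
    have hΓa : subs' a ⊆ subs' ψ := Finset.Subset.trans (subs'_mono _ _ hma) hΓ
    have hΓb : subs' b ⊆ subs' ψ := Finset.Subset.trans (subs'_mono _ _ hmb) hΓ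
    cases s
    · -- negative until
      have hU : ¬ HSQF.Sat m (asgn w p) := by simpa [SemRaw] using h
      have hnb : ¬ HSQF.Sat b (asgn w p) := by
        intro hc
        exact hU ((hsat_untl_unfold Γ a b (asgn w p)).mpr (Or.inl hc))
      simp only [hm, dH, Bool.false_eq_true, if_false]
      refine ⟨satBy_mono (OKHc_mono ψ w hmb (by simp [hm, sizeH]))
          (ihb false p hΓb (by simpa [SemRaw] using hnb)), ?_⟩
      by_cases ha : HSQF.Sat a (asgn w p)
      · refine Or.inr ?_
        have hnU' : ¬ HSQF.Sat m (succA (↑Γ) (asgn w p)) := by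
          intro hc
          exact hU ((hsat_untl_unfold Γ a b (asgn w p)).mpr (Or.inr ⟨ha, hc⟩))
        have hsemW : SemRaw w (.W m false 0) p := by
          rw [semW_zero_untl]
          simpa using hnU'
        have hwc := WC ψ w m false ⟨0, hn⟩ p hsemW
        refine satBy_mono ?_ hwc
        intro v hv
        exact OKW_to_OKHc ψ w m false p hn hmod hΓψ (fun hc => by simp at hc) v hv
      · exact Or.inl (satBy_mono (OKHc_mono ψ w hma (by simp [hm, sizeH]))
          (iha false p hΓa (by simpa [SemRaw] using ha)))
    · -- positive until
      have hU : HSQF.Sat m (asgn w p) := by simpa [SemRaw] using h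
      simp only [hm, dH, if_pos]
      by_cases hb : HSQF.Sat b (asgn w p)
      · exact Or.inl (satBy_mono (OKHc_mono ψ w hmb (by simp [hm, sizeH]))
          (ihb true p hΓb (by simpa [SemRaw] using hb)))
      · refine Or.inr ⟨?_, ?_⟩
        · have ha : HSQF.Sat a (asgn w p) := by
            rcases (hsat_untl_unfold Γ a b (asgn w p)).mp hU with hc | ⟨ha, _⟩
            · exact absurd hc hb
            · exact ha
          exact satBy_mono (OKHc_mono ψ w hma (by simp [hm, sizeH]))
            (iha true p hΓa (by simpa [SemRaw] using ha))
        · have hU' : HSQF.Sat m (succA (↑Γ) (asgn w p)) := by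
            rcases (hsat_untl_unfold Γ a b (asgn w p)).mp hU with hc | ⟨_, hnext⟩
            · exact absurd hc hb
            · exact hnext
          have hsemW : SemRaw w (.W m true 0) p := by
            rw [semW_zero_untl]
            simpa using hU'
          have hwc := WC ψ w m true ⟨0, hn⟩ p hsemW
          refine satBy_mono ?_ hwc
          intro v hv
          refine OKW_to_OKHc ψ w m true p hn hmod hΓψ (fun _ => Or.inl ?_) v hv
          show witH w m (jumpPos (ΓOf m) w 0 p) < witH w m p
          show hwit w Γ a b (jumpPos Γ w 0 p) < hwit w Γ a b p
          exact hwit_decrease w Γ a b p hU hb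

theorem HCrej (hn : 0 < n) (ψ : HSQF AP (Fin n)) (w : Fin n → Trace AP)
    (φ : HSQF AP (Fin n)) :
    ∀ (s : Bool) (p : Fin n → ℕ), subs' φ ⊆ subs' ψ → ¬ SemRaw w (.H φ s) p →
      ∀ (M : Set (St AP n × Fin n)),
        PosBool.SatBy M (dH hn φ s (fun d => w d (p d))) →
        ∃ v ∈ M, OKHr ψ w φ s p v := by
  induction φ with
  | tt =>
    intro s p _ h M hM
    cases s
    · simp only [dH, Bool.false_eq_true, if_false] at hM
      exact absurd hM (by simp)
    · simp [SemRaw, HSQF.Sat] at h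
  | atom a x =>
    intro s p _ h M hM
    cases s
    · have hm : a ∈ w x (p x) := by simpa [SemRaw, HSQF.Sat, asgn, not_not] using h
      simp only [dH] at hM
      rw [if_neg (by simpa using hm)] at hM
      exact absurd hM (by simp)
    · have hm : ¬ a ∈ w x (p x) := by simpa [SemRaw, HSQF.Sat, asgn] using h
      simp only [dH] at hM
      rw [if_neg (by simpa using hm)] at hM
      exact absurd hM (by simp)
  | neg φ ih =>
    intro s p hΓ h M hM
    have h' : ¬ SemRaw w (.H φ (!s)) p := by
      cases s
      · simpa [SemRaw, HSQF.Sat] using h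
      · simpa [SemRaw, HSQF.Sat, not_not] using h
    have hmem : φ ∈ subH (HSQF.neg φ) := by
      simp only [subH, Finset.mem_insert]
      exact Or.inr (subH_self φ)
    have hΓ' : subs' φ ⊆ subs' ψ := Finset.Subset.trans (subs'_mono _ _ hmem) hΓ
    have hM' : PosBool.SatBy M (dH hn φ (!s) (fun d => w d (p d))) := by
      cases s
      · exact hM
      · exact hM
    obtain ⟨v, hv, hok⟩ := ih (!s) p hΓ' h' M hM'
    exact ⟨v, hv, OKHr_mono ψ w hmem (by simp [sizeH]) v hok⟩
  | conj φ₁ φ₂ ih₁ ih₂ =>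
    intro s p hΓ h M hM
    have hm₁ : φ₁ ∈ subH (HSQF.conj φ₁ φ₂) := by
      simp only [subH, Finset.mem_insert, Finset.mem_union]
      exact Or.inr (Or.inl (subH_self φ₁))
    have hm₂ : φ₂ ∈ subH (HSQF.conj φ₁ φ₂) := by
      simp only [subH, Finset.mem_insert, Finset.mem_union]
      exact Or.inr (Or.inr (subH_self φ₂))
    have hΓ₁ : subs' φ₁ ⊆ subs' ψ := Finset.Subset.trans (subs'_mono _ _ hm₁) hΓ
    have hΓ₂ : subs' φ₂ ⊆ subs' ψ := Finset.Subset.trans (subs'_mono _ _ hm₂) hΓ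
    cases s
    · have h' : HSQF.Sat φ₁ (asgn w p) ∧ HSQF.Sat φ₂ (asgn w p) := by
        simpa [SemRaw, HSQF.Sat, not_not] using h
      simp only [dH, Bool.false_eq_true, if_false] at hM
      rcases hM with hM | hM
      · obtain ⟨v, hv, hok⟩ := ih₁ false p hΓ₁ (by simpa [SemRaw, not_not] using h'.1) M hM
        exact ⟨v, hv, OKHr_mono ψ w hm₁ (by simp [sizeH]) v hok⟩
      · obtain ⟨v, hv, hok⟩ := ih₂ false p hΓ₂ (by simpa [SemRaw, not_not] using h'.2) M hM
        exact ⟨v, hv, OKHr_mono ψ w hm₂ (by simp [sizeH]) v hok⟩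
    · have h' : ¬ (HSQF.Sat φ₁ (asgn w p) ∧ HSQF.Sat φ₂ (asgn w p)) := by
        simpa [SemRaw, HSQF.Sat] using h
      simp only [dH, if_pos] at hM
      by_cases h₁ : HSQF.Sat φ₁ (asgn w p)
      · have h₂ : ¬ HSQF.Sat φ₂ (asgn w p) := fun hc => h' ⟨h₁, hc⟩
        obtain ⟨v, hv, hok⟩ := ih₂ true p hΓ₂ (by simpa [SemRaw] using h₂) M hM.2
        exact ⟨v, hv, OKHr_mono ψ w hm₂ (by simp [sizeH]) v hok⟩
      · obtain ⟨v, hv, hok⟩ := ih₁ true p hΓ₁ (by simpa [SemRaw] using h₁) M hM.1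
        exact ⟨v, hv, OKHr_mono ψ w hm₁ (by simp [sizeH]) v hok⟩
  | nextR Γ φ' ih =>
    intro s p hΓ h M hM
    have hmod : IsMod (HSQF.nextR Γ φ') := trivial
    have hΓψ : ΓOf (HSQF.nextR Γ φ') ∈ subs' ψ := hΓ (gamma_mem_subs' _ hmod)
    have hsemW : ¬ SemRaw w (.W (HSQF.nextR Γ φ') s 0) p :=
      fun hc => h ((semW_zero_next w Γ φ' s p).mp hc)
    have hM' : PosBool.SatBy M (dEntry (HSQF.nextR Γ φ') s ⟨0, hn⟩ (fun d => w d (p d))) := hM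
    obtain ⟨v, hv, hok⟩ := WCrej ψ w (HSQF.nextR Γ φ') s ⟨0, hn⟩ p hsemW M hM'
    exact ⟨v, hv, OKW_to_OKHr ψ w (HSQF.nextR Γ φ') s p hn hmod hΓψ
      (fun _ => Or.inr ⟨rfl, rfl, by rintro ⟨Γ', a', b', hc⟩; cases hc⟩) v hok⟩
  | untlR Γ a b iha ihb =>
    intro s p hΓ h M hM
    set m : HSQF AP (Fin n) := HSQF.untlR Γ a b with hm
    have hmod : IsMod m := trivial
    have hΓψ : ΓOf m ∈ subs' ψ := hΓ (gamma_mem_subs' _ hmod)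
    have hma : a ∈ subH m := by
      rw [hm]
      simp only [subH, Finset.mem_insert, Finset.mem_union]
      exact Or.inr (Or.inl (subH_self a))
    have hmb : b ∈ subH m := by
      rw [hm]
      simp only [subH, Finset.mem_insert, Finset.mem_union]
      exact Or.inr (Or.inr (subH_self b))
    have hΓa : subs' a ⊆ subs' ψ := Finset.Subset.trans (subs'_mono _ _ hma) hΓ
    have hΓb : subs' b ⊆ subs' ψ := Finset.Subset.trans (subs'_mono _ _ hmb) hΓ
    cases s
    · -- sign false, until holds
      have hU : HSQF.Sat m (asgn w p) := by simpa [SemRaw, not_not] using h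
      simp only [hm, dH, Bool.false_eq_true, if_false] at hM
      by_cases hb : HSQF.Sat b (asgn w p)
      · obtain ⟨v, hv, hok⟩ := ihb false p hΓb (by simpa [SemRaw, not_not] using hb) M hM.1
        exact ⟨v, hv, OKHr_mono ψ w hmb (by simp [hm, sizeH]) v hok⟩
      · rcases hM.2 with hMa | hMe
        · have ha : HSQF.Sat a (asgn w p) := by
            rcases (hsat_untl_unfold Γ a b (asgn w p)).mp hU with hc | ⟨ha, _⟩
            · exact absurd hc hb
            · exact ha
          obtain ⟨v, hv, hok⟩ := iha false p hΓa (by simpa [SemRaw, not_not] using ha) M hMa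
          exact ⟨v, hv, OKHr_mono ψ w hma (by simp [hm, sizeH]) v hok⟩
        · have hU' : HSQF.Sat m (succA (↑Γ) (asgn w p)) := by
            rcases (hsat_untl_unfold Γ a b (asgn w p)).mp hU with hc | ⟨_, hnext⟩
            · exact absurd hc hb
            · exact hnext
          have hsemW : ¬ SemRaw w (.W m false 0) p := by
            rw [semW_zero_untl]
            simpa using hU'
          obtain ⟨v, hv, hok⟩ := WCrej ψ w m false ⟨0, hn⟩ p hsemW M hMe
          refine ⟨v, hv, OKW_to_OKHr ψ w m false p hn hmod hΓψ (fun _ => Or.inl ?_) v hok⟩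
          show witH w m (jumpPos (ΓOf m) w 0 p) < witH w m p
          show hwit w Γ a b (jumpPos Γ w 0 p) < hwit w Γ a b p
          exact hwit_decrease w Γ a b p hU hb
    · -- sign true, until fails
      have hU : ¬ HSQF.Sat m (asgn w p) := by simpa [SemRaw] using h
      have hnb : ¬ HSQF.Sat b (asgn w p) := by
        intro hc
        exact hU ((hsat_untl_unfold Γ a b (asgn w p)).mpr (Or.inl hc))
      simp only [hm, dH, if_pos] at hM
      rcases hM with hMb | ⟨hMa, hMe⟩
      · obtain ⟨v, hv, hok⟩ := ihb true p hΓb (by simpa [SemRaw] using hnb) M hMb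
        exact ⟨v, hv, OKHr_mono ψ w hmb (by simp [hm, sizeH]) v hok⟩
      · by_cases ha : HSQF.Sat a (asgn w p)
        · have hnU' : ¬ HSQF.Sat m (succA (↑Γ) (asgn w p)) := by
            intro hc
            exact hU ((hsat_untl_unfold Γ a b (asgn w p)).mpr (Or.inr ⟨ha, hc⟩))
          have hsemW : ¬ SemRaw w (.W m true 0) p := by
            rw [semW_zero_untl]
            simpa using hnU'
          obtain ⟨v, hv, hok⟩ := WCrej ψ w m true ⟨0, hn⟩ p hsemW M hMe
          exact ⟨v, hv, OKW_to_OKHr ψ w m true p hn hmod hΓψ (fun hc => by simp at hc) v hok⟩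
        · obtain ⟨v, hv, hok⟩ := iha true p hΓa (by simpa [SemRaw] using ha) M hMa
          exact ⟨v, hv, OKHr_mono ψ w hma (by simp [hm, sizeH]) v hok⟩

end LocalH



/-! ### The combined local lemmas -/

section LocalAll

variable {AP : Type} {n : ℕ}

lemma subf_size_strict {θ θ' : LTL AP} (h : θ' ∈ LTL.subf θ) :
    θ' = θ ∨ sizeL θ' < sizeL θ := by
  cases θ with
  | tt => simp [LTL.subf] at h; exact Or.inl h
  | atom a => simp [LTL.subf] at h; exact Or.inl h
  | neg a =>
    simp only [LTL.subf, Finset.mem_insert] at h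
    rcases h with rfl | h
    · exact Or.inl rfl
    · have := sizeL_le_of_subf _ _ h
      right; simp [sizeL]; omega
  | conj a b =>
    simp only [LTL.subf, Finset.mem_insert, Finset.mem_union] at h
    rcases h with rfl | h | h
    · exact Or.inl rfl
    · have := sizeL_le_of_subf _ _ h; right; simp [sizeL]; omega
    · have := sizeL_le_of_subf _ _ h; right; simp [sizeL]; omega
  | next a =>
    simp only [LTL.subf, Finset.mem_insert] at h
    rcases h with rfl | h
    · exact Or.inl rfl
    · have := sizeL_le_of_subf _ _ h; right; simp [sizeL]; omega
  | untl a b =>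
    simp only [LTL.subf, Finset.mem_insert, Finset.mem_union] at h
    rcases h with rfl | h | h
    · exact Or.inl rfl
    · have := sizeL_le_of_subf _ _ h; right; simp [sizeL]; omega
    · have := sizeL_le_of_subf _ _ h; right; simp [sizeL]; omega

lemma subH_size_strict {φ φ' : HSQF AP (Fin n)} (h : φ' ∈ subH φ) :
    φ' = φ ∨ sizeH φ' < sizeH φ := by
  cases φ with
  | tt => simp [subH] at h; exact Or.inl h
  | atom a x => simp [subH] at h; exact Or.inl h
  | neg a =>
    simp only [subH, Finset.mem_insert] at h
    rcases h with rfl | h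
    · exact Or.inl rfl
    · have := sizeH_le_of_subH _ _ h; right; simp [sizeH]; omega
  | conj a b =>
    simp only [subH, Finset.mem_insert, Finset.mem_union] at h
    rcases h with rfl | h | h
    · exact Or.inl rfl
    · have := sizeH_le_of_subH _ _ h; right; simp [sizeH]; omega
    · have := sizeH_le_of_subH _ _ h; right; simp [sizeH]; omega
  | nextR Γ a =>
    simp only [subH, Finset.mem_insert] at h
    rcases h with rfl | h
    · exact Or.inl rfl
    · have := sizeH_le_of_subH _ _ h; right; simp [sizeH]; omega
  | untlR Γ a b =>
    simp only [subH, Finset.mem_insert, Finset.mem_union] at h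
    rcases h with rfl | h | h
    · exact Or.inl rfl
    · have := sizeH_le_of_subH _ _ h; right; simp [sizeH]; omega
    · have := sizeH_le_of_subH _ _ h; right; simp [sizeH]; omega

lemma contF_mem_subH (m : HSQF AP (Fin n)) : contF m ∈ subH m := by
  cases m with
  | nextR Γ a =>
    show a ∈ subH (HSQF.nextR Γ a)
    simp only [subH, Finset.mem_insert]
    exact Or.inr (subH_self a)
  | tt => exact subH_self _
  | atom a x => exact subH_self _
  | neg a => exact subH_self _
  | conj a b => exact subH_self _
  | untlR Γ a b => exact subH_self _

lemma KidH_to_Wf (ψ : HSQF AP (Fin n)) {φ : HSQF AP (Fin n)} (hφs : subs' φ ⊆ subs' ψ)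
    (hφH : subH φ ⊆ subH ψ) {q : St AP n} (h : KidH φ q) : WfSt ψ q := by
  rcases h with ⟨θ', s', x, hq, Γ, hΓ, hθ⟩ | ⟨m', s', k, hq, hmod, hm, hk⟩ |
    ⟨m', s', x, hq, hmod, hm⟩
  · rw [hq]
    exact mem_clL_of ψ (hφs hΓ) hθ
  · rw [hq]
    exact ⟨hmod, hφH hm, hk⟩
  · rw [hq]
    exact ⟨hmod, hφH hm⟩

/-- Good children, combined (completeness). -/
def GOODc (ψ : HSQF AP (Fin n)) (w : Fin n → Trace AP) (q : St AP n) (p : Fin n → ℕ)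
    (v : St AP n × Fin n) : Prop :=
  WfSt ψ v.1 ∧ SemRaw w v.1 (bump p v.2) ∧ m0 ψ v.1 ≤ m0 ψ q ∧
  (m0 ψ v.1 = m0 ψ q → sgSt v.1 = sgSt q) ∧
  (sgSt v.1 = true → rnk ψ w v.1 (bump p v.2) < rnk ψ w q p)

/-- Good children, combined (rejection). -/
def GOODr (ψ : HSQF AP (Fin n)) (w : Fin n → Trace AP) (q : St AP n) (p : Fin n → ℕ)
    (v : St AP n × Fin n) : Prop :=
  ¬ SemRaw w v.1 (bump p v.2) ∧ m0 ψ v.1 ≤ m0 ψ q ∧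
  (m0 ψ v.1 = m0 ψ q → sgSt v.1 = sgSt q) ∧
  (sgSt v.1 = false → rnk ψ w v.1 (bump p v.2) < rnk ψ w q p)

lemma OKLc_to_GOODc (ψ : HSQF AP (Fin n)) (w : Fin n → Trace AP) {θ : LTL AP} {s : Bool}
    {x : Fin n} {p : Fin n → ℕ} (hwf : θ ∈ clL ψ) :
    ∀ v, OKLc w θ s x p v → GOODc ψ w (St.L θ s x) p v := by
  rintro v ⟨hd, θ', s', hveq, hsub, hsem, hself⟩
  have hm0v : m0 ψ v.1 = sizeL θ' := by rw [hveq]; rfl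
  have hsg : sgSt v.1 = s' := by rw [hveq]; rfl
  have hsize := sizeL_le_of_subf _ _ hsub
  refine ⟨by rw [hveq]; exact clL_closed ψ hwf hsub, by rw [hd]; exact hsem,
    by rw [hm0v]; exact hsize, ?_, ?_⟩
  · intro heq
    rw [hm0v] at heq
    have hpar : m0 ψ (St.L θ s x) = sizeL θ := rfl
    rcases subf_size_strict hsub with rfl | hlt
    · rw [hsg]
      exact (hself rfl).1
    · rw [hpar] at heq
      omega
  · intro hsgt
    rcases subf_size_strict hsub with rfl | hlt
    · have hs' : s' = s := (hself rfl).1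
      have hst : s = true := by rw [← hs', ← hsg]; exact hsgt
      have hw := (hself rfl).2 hst
      rw [hveq, hd]
      show rnk ψ w (St.L θ' s' x) (bump p x) < rnk ψ w (St.L θ' s x) p
      simp only [rnk]
      rw [bump_self, lt4_iff]
      exact Or.inr ⟨rfl, Or.inl hw⟩
    · apply rnk_lt_of_m0_lt
      rw [hm0v]
      show sizeL θ' < m0 ψ (St.L θ s x)
      exact hlt

lemma OKLr_to_GOODr (ψ : HSQF AP (Fin n)) (w : Fin n → Trace AP) {θ : LTL AP} {s : Bool}
    {x : Fin n} {p : Fin n → ℕ} :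
    ∀ v, OKLr w θ s x p v → GOODr ψ w (St.L θ s x) p v := by
  rintro v ⟨hd, θ', s', hveq, hsub, hsem, hself⟩
  have hm0v : m0 ψ v.1 = sizeL θ' := by rw [hveq]; rfl
  have hsg : sgSt v.1 = s' := by rw [hveq]; rfl
  have hsize := sizeL_le_of_subf _ _ hsub
  refine ⟨by rw [hd]; exact hsem, by rw [hm0v]; exact hsize, ?_, ?_⟩
  · intro heq
    rw [hm0v] at heq
    have hpar : m0 ψ (St.L θ s x) = sizeL θ := rfl
    rcases subf_size_strict hsub with rfl | hlt
    · rw [hsg]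
      exact (hself rfl).1
    · rw [hpar] at heq
      omega
  · intro hsgt
    rcases subf_size_strict hsub with rfl | hlt
    · have hs' : s' = s := (hself rfl).1
      have hst : s = false := by rw [← hs', ← hsg]; exact hsgt
      have hw := (hself rfl).2 hst
      rw [hveq, hd]
      show rnk ψ w (St.L θ' s' x) (bump p x) < rnk ψ w (St.L θ' s x) p
      simp only [rnk]
      rw [bump_self, lt4_iff]
      exact Or.inr ⟨rfl, Or.inl hw⟩
    · apply rnk_lt_of_m0_lt
      rw [hm0v]
      show sizeL θ' < m0 ψ (St.L θ s x)
      exact hlt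

lemma OKHc_to_GOODc (ψ : HSQF AP (Fin n)) (w : Fin n → Trace AP) {φ : HSQF AP (Fin n)}
    {s : Bool} {p : Fin n → ℕ} (hφs : subs' φ ⊆ subs' ψ) (hφH : subH φ ⊆ subH ψ) :
    ∀ v, OKHc ψ w φ s p v → GOODc ψ w (St.H φ s) p v := by
  rintro v ⟨hsem, hkid, hm0, hsgeq, hrnk, _⟩
  refine ⟨KidH_to_Wf ψ hφs hφH hkid, hsem, hm0, hsgeq, ?_⟩
  intro hsgt
  exact hrnk hsgt

lemma OKHr_to_GOODr (ψ : HSQF AP (Fin n)) (w : Fin n → Trace AP) {φ : HSQF AP (Fin n)}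
    {s : Bool} {p : Fin n → ℕ} :
    ∀ v, OKHr ψ w φ s p v → GOODr ψ w (St.H φ s) p v := by
  rintro v ⟨hsem, _, hm0, hsgeq, hrnk, _⟩
  exact ⟨hsem, hm0, hsgeq, hrnk⟩

lemma semW_n_iff (w : Fin n → Trace AP) (m : HSQF AP (Fin n)) (s : Bool)
    (p : Fin n → ℕ) : SemRaw w (.W m s n) p ↔ SemRaw w (.H (contF m) s) p := by
  have key : cSem w m (jumpPos (ΓOf m) w n p) ↔ HSQF.Sat (contF m) (asgn w p) := by
    rw [cSem, jump_n_eq]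
  cases s
  · show ¬ _ ↔ ¬ _
    exact not_congr key
  · exact key

theorem localC (hn : 0 < n) (ψ : HSQF AP (Fin n)) (w : Fin n → Trace AP) :
    ∀ q, WfSt ψ q → ∀ p, SemRaw w q p →
      PosBool.SatBy {v | GOODc ψ w q p v} (transRaw hn q (fun d => w d (p d))) := by
  intro q hwf p hsem
  cases q with
  | L θ s x =>
    exact satBy_mono (fun v hv => OKLc_to_GOODc ψ w hwf v hv) (LC w θ s x p hsem)
  | H φ s =>
    have hφs : subs' φ ⊆ subs' ψ := subs'_mono _ _ hwf
    have hφH : subH φ ⊆ subH ψ := subH_trans _ _ hwf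
    exact satBy_mono (fun v hv => OKHc_to_GOODc ψ w hφs hφH v hv)
      (HC hn ψ w φ s p hφs hsem)
  | W m s k =>
    obtain ⟨hmod, hmem, hk⟩ := hwf
    show PosBool.SatBy _ (if hx : k < n then dEntry m s ⟨k, hx⟩ (fun d => w d (p d))
      else dH hn (contF m) s (fun d => w d (p d)))
    split
    case isTrue hx =>
      have hsem' : SemRaw w (.W m s ((⟨k, hx⟩ : Fin n) : ℕ)) p := hsem
      refine satBy_mono ?_ (WC ψ w m s ⟨k, hx⟩ p hsem')
      rintro v ⟨hd, hv⟩
      have hΓψ : ΓOf m ∈ subs' ψ := subs'_mono _ _ hmem (gamma_mem_subs' m hmod)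
      rcases hv with ⟨θ', s', hveq, hsub, hsem''⟩ | ⟨hveq, hsem'', hrnk⟩
      · have hm0v : m0 ψ v.1 = sizeL θ' := by rw [hveq]; rfl
        have hsz : sizeL θ' < BB ψ := sizeL_lt_BB ψ hΓψ hsub
        refine ⟨by rw [hveq]; exact mem_clL_of ψ hΓψ hsub, by rw [hd]; exact hsem'',
          ?_, ?_, ?_⟩
        · rw [hm0v]
          show sizeL θ' ≤ BB ψ + sizeH m
          omega
        · intro hc
          rw [hm0v] at hc
          exfalso
          have : BB ψ + sizeH m = m0 ψ (St.W m s k) := rfl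
          omega
        · intro _
          apply rnk_lt_of_m0_lt
          rw [hm0v]
          show sizeL θ' < BB ψ + sizeH m
          omega
      · have hm0v : m0 ψ v.1 = BB ψ + sizeH m := by
          rcases hveq with hveq | hveq <;> rw [hveq] <;> rfl
        have hsgv : sgSt v.1 = s := by
          rcases hveq with hveq | hveq <;> rw [hveq] <;> rfl
        refine ⟨?_, by rw [hd]; exact hsem'', le_of_eq hm0v, fun _ => hsgv, ?_⟩
        · rcases hveq with hveq | hveq
          · rw [hveq]; exact ⟨hmod, hmem⟩
          · rw [hveq]
            refine ⟨hmod, hmem, ?_⟩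
            show ((⟨k, hx⟩ : Fin n) : ℕ) + 1 ≤ n
            omega
        · intro hsgt
          have hs : s = true := by rw [← hsgv, hsgt]
          have hb := hrnk hs
          rw [hd]
          calc rnk ψ w v.1 (bump p ⟨k, hx⟩)
              < toLex4 (BB ψ + sizeH m)
                  (witH w m (jumpPos (ΓOf m) w ((⟨k, hx⟩ : Fin n) : ℕ) p))
                  (2*(n-((⟨k, hx⟩ : Fin n) : ℕ))+1) 0 := hb
            _ = rnk ψ w (St.W m s k) p := rfl
    case isFalse hx =>
      have hkn : n = k := by omega
      subst hkn
      have hsem2 : SemRaw w (.W m s n) p := hsem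
      have hsem' : SemRaw w (.H (contF m) s) p := (semW_n_iff w m s p).mp hsem2
      have hcm : contF m ∈ subH ψ := subH_trans _ _ hmem (contF_mem_subH m)
      have hφs : subs' (contF m) ⊆ subs' ψ := subs'_mono _ _ hcm
      have hφH : subH (contF m) ⊆ subH ψ := subH_trans _ _ hcm
      refine satBy_mono ?_ (HC hn ψ w (contF m) s p hφs hsem')
      rintro v ⟨hsemv, hkid, hm0v, hsgeq, hrnk, hrnkU⟩
      have hszc : sizeH (contF m) ≤ sizeH m := sizeH_le_of_subH _ _ (contF_mem_subH m)
      have hm0q : m0 ψ (St.W m s n) = BB ψ + sizeH m := rfl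
      refine ⟨KidH_to_Wf ψ hφs hφH hkid, hsemv, ?_, ?_, ?_⟩
      · rw [hm0q]; omega
      · intro hc
        rw [hm0q] at hc
        apply hsgeq
        omega
      · intro hsgt
        by_cases heq : m0 ψ v.1 = BB ψ + sizeH m
        · -- equal measure: the continuation must be the until itself
          have hszeq : sizeH (contF m) = sizeH m := by omega
          have hcm_eq : contF m = m := by
            rcases subH_size_strict (contF_mem_subH m) with h | h
            · exact h
            · omega
          have hUm : IsUntlR m := by
            cases m with
            | untlR Γ a b => exact ⟨Γ, a, b, rfl⟩
            | nextR Γ a =>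
              exfalso
              have hceq : contF (HSQF.nextR Γ a) = a := rfl
              rw [hceq] at hcm_eq
              have h2 := congrArg sizeH hcm_eq
              simp only [sizeH] at h2
              omega
            | tt => exact absurd hmod (by simp [IsMod])
            | atom c x => exact absurd hmod (by simp [IsMod])
            | neg c => exact absurd hmod (by simp [IsMod])
            | conj c d => exact absurd hmod (by simp [IsMod])
          have hUc : IsUntlR (contF m) := by rw [hcm_eq]; exact hUm
          have hb := hrnkU hUc hsgt (by omega)
          calc rnk ψ w v.1 (bump p v.2)
              < toLex4 (BB ψ + sizeH (contF m)) (witH w (contF m) p) 1 0 := hb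
            _ = rnk ψ w (St.W m s n) p := by
                have h3 : 2*(n-n)+1 = 1 := by omega
                show _ = toLex4 (BB ψ + sizeH m) (witH w m (jumpPos (ΓOf m) w n p))
                  (2*(n-n)+1) 0
                rw [hcm_eq, jump_n_eq, h3]
        · apply rnk_lt_of_m0_lt
          rw [hm0q]
          omega
  | Wk m s x =>
    obtain ⟨hmod, hmem⟩ := hwf
    refine satBy_mono ?_ (KC ψ w m s x p hsem)
    rintro v ⟨hd, hv⟩
    have hΓψ : ΓOf m ∈ subs' ψ := subs'_mono _ _ hmem (gamma_mem_subs' m hmod)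
    rcases hv with ⟨θ', s', hveq, hsub, hsem''⟩ | ⟨hveq, hsem'', hrnk⟩
    · have hm0v : m0 ψ v.1 = sizeL θ' := by rw [hveq]; rfl
      have hsz : sizeL θ' < BB ψ := sizeL_lt_BB ψ hΓψ hsub
      refine ⟨by rw [hveq]; exact mem_clL_of ψ hΓψ hsub, by rw [hd]; exact hsem'',
        ?_, ?_, ?_⟩
      · rw [hm0v]
        show sizeL θ' ≤ BB ψ + sizeH m
        omega
      · intro hc
        rw [hm0v] at hc
        exfalso
        have : BB ψ + sizeH m = m0 ψ (St.Wk m s x) := rfl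
        omega
      · intro _
        apply rnk_lt_of_m0_lt
        rw [hm0v]
        show sizeL θ' < BB ψ + sizeH m
        omega
    · have hm0v : m0 ψ v.1 = BB ψ + sizeH m := by
        rcases hveq with hveq | hveq <;> rw [hveq] <;> rfl
      have hsgv : sgSt v.1 = s := by
        rcases hveq with hveq | hveq <;> rw [hveq] <;> rfl
      refine ⟨?_, by rw [hd]; exact hsem'', le_of_eq hm0v, fun _ => hsgv, ?_⟩
      · rcases hveq with hveq | hveq
        · rw [hveq]; exact ⟨hmod, hmem⟩
        · rw [hveq]
          refine ⟨hmod, hmem, ?_⟩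
          show (x : ℕ) + 1 ≤ n
          have := x.isLt
          omega
      · intro hsgt
        have hs : s = true := by rw [← hsgv, hsgt]
        have hb := hrnk hs
        rw [hd]
        calc rnk ψ w v.1 (bump p x)
            < toLex4 (BB ψ + sizeH m) (witH w m (jumpWkPos (ΓOf m) w x p))
                (2*(n-(x:ℕ))) (wkRem (ΓOf m) (w x) (p x)) := hb
          _ = rnk ψ w (St.Wk m s x) p := rfl

theorem localS (hn : 0 < n) (ψ : HSQF AP (Fin n)) (w : Fin n → Trace AP) :
    ∀ q, WfSt ψ q → ∀ p, ¬ SemRaw w q p →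
      ∀ (M : Set (St AP n × Fin n)),
        PosBool.SatBy M (transRaw hn q (fun d => w d (p d))) →
        ∃ v ∈ M, GOODr ψ w q p v := by
  intro q hwf p hsem M hM
  cases q with
  | L θ s x =>
    obtain ⟨v, hv, hok⟩ := LCrej w θ s x p hsem M hM
    exact ⟨v, hv, OKLr_to_GOODr ψ w v hok⟩
  | H φ s =>
    have hφs : subs' φ ⊆ subs' ψ := subs'_mono _ _ hwf
    obtain ⟨v, hv, hok⟩ := HCrej hn ψ w φ s p hφs hsem M hM
    exact ⟨v, hv, OKHr_to_GOODr ψ w v hok⟩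
  | W m s k =>
    obtain ⟨hmod, hmem, hk⟩ := hwf
    have hM' : PosBool.SatBy M (if hx : k < n then dEntry m s ⟨k, hx⟩ (fun d => w d (p d))
      else dH hn (contF m) s (fun d => w d (p d))) := hM
    split at hM'
    case isTrue hx =>
      have hsem' : ¬ SemRaw w (.W m s ((⟨k, hx⟩ : Fin n) : ℕ)) p := hsem
      obtain ⟨v, hv, hd, hok⟩ := WCrej ψ w m s ⟨k, hx⟩ p hsem' M hM'
      refine ⟨v, hv, ?_⟩
      rcases hok with ⟨θ', s', hveq, hsub, hsem''⟩ | ⟨hveq, hsem'', hrnk⟩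
      · have hm0v : m0 ψ v.1 = sizeL θ' := by rw [hveq]; rfl
        have hΓψ : ΓOf m ∈ subs' ψ := subs'_mono _ _ hmem (gamma_mem_subs' m hmod)
        have hsz : sizeL θ' < BB ψ := sizeL_lt_BB ψ hΓψ hsub
        refine ⟨by rw [hd]; exact hsem'', ?_, ?_, ?_⟩
        · rw [hm0v]
          show sizeL θ' ≤ BB ψ + sizeH m
          omega
        · intro hc
          rw [hm0v] at hc
          exfalso
          have : BB ψ + sizeH m = m0 ψ (St.W m s k) := rfl
          omega
        · intro _
          apply rnk_lt_of_m0_lt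
          rw [hm0v]
          show sizeL θ' < BB ψ + sizeH m
          omega
      · have hm0v : m0 ψ v.1 = BB ψ + sizeH m := by
          rcases hveq with hveq | hveq <;> rw [hveq] <;> rfl
        have hsgv : sgSt v.1 = s := by
          rcases hveq with hveq | hveq <;> rw [hveq] <;> rfl
        refine ⟨by rw [hd]; exact hsem'', le_of_eq hm0v, fun _ => hsgv, ?_⟩
        intro hsgt
        have hs : s = false := by rw [← hsgv, hsgt]
        have hb := hrnk hs
        rw [hd]
        calc rnk ψ w v.1 (bump p ⟨k, hx⟩)
            < toLex4 (BB ψ + sizeH m)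
                (witH w m (jumpPos (ΓOf m) w ((⟨k, hx⟩ : Fin n) : ℕ) p))
                (2*(n-((⟨k, hx⟩ : Fin n) : ℕ))+1) 0 := hb
          _ = rnk ψ w (St.W m s k) p := rfl
    case isFalse hx =>
      have hkn : n = k := by omega
      subst hkn
      have hsem' : ¬ SemRaw w (.H (contF m) s) p :=
        fun hc => hsem ((semW_n_iff w m s p).mpr hc)
      have hcm : contF m ∈ subH ψ := subH_trans _ _ hmem (contF_mem_subH m)
      have hφs : subs' (contF m) ⊆ subs' ψ := subs'_mono _ _ hcm
      obtain ⟨v, hv, hsemv, hkid, hm0v, hsgeq, hrnk, hrnkU⟩ :=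
        HCrej hn ψ w (contF m) s p hφs hsem' M hM'
      have hszc : sizeH (contF m) ≤ sizeH m := sizeH_le_of_subH _ _ (contF_mem_subH m)
      have hm0q : m0 ψ (St.W m s n) = BB ψ + sizeH m := rfl
      refine ⟨v, hv, hsemv, ?_, ?_, ?_⟩
      · rw [hm0q]; omega
      · intro hc
        rw [hm0q] at hc
        apply hsgeq
        omega
      · intro hsgt
        by_cases heq : m0 ψ v.1 = BB ψ + sizeH m
        · have hszeq : sizeH (contF m) = sizeH m := by omega
          have hcm_eq : contF m = m := by
            rcases subH_size_strict (contF_mem_subH m) with h | h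
            · exact h
            · omega
          have hUm : IsUntlR m := by
            cases m with
            | untlR Γ a b => exact ⟨Γ, a, b, rfl⟩
            | nextR Γ a =>
              exfalso
              have hceq : contF (HSQF.nextR Γ a) = a := rfl
              rw [hceq] at hcm_eq
              have h2 := congrArg sizeH hcm_eq
              simp only [sizeH] at h2
              omega
            | tt => exact absurd hmod (by simp [IsMod])
            | atom c x => exact absurd hmod (by simp [IsMod])
            | neg c => exact absurd hmod (by simp [IsMod])
            | conj c d => exact absurd hmod (by simp [IsMod])
          have hUc : IsUntlR (contF m) := by rw [hcm_eq]; exact hUm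
          have hb := hrnkU hUc hsgt (by omega)
          calc rnk ψ w v.1 (bump p v.2)
              < toLex4 (BB ψ + sizeH (contF m)) (witH w (contF m) p) 1 0 := hb
            _ = rnk ψ w (St.W m s n) p := by
                have h3 : 2*(n-n)+1 = 1 := by omega
                show _ = toLex4 (BB ψ + sizeH m) (witH w m (jumpPos (ΓOf m) w n p))
                  (2*(n-n)+1) 0
                rw [hcm_eq, jump_n_eq, h3]
        · apply rnk_lt_of_m0_lt
          rw [hm0q]
          omega
  | Wk m s x =>
    obtain ⟨hmod, hmem⟩ := hwf
    obtain ⟨v, hv, hd, hok⟩ := KCrej ψ w m s x p hsem M hM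
    refine ⟨v, hv, ?_⟩
    have hΓψ : ΓOf m ∈ subs' ψ := subs'_mono _ _ hmem (gamma_mem_subs' m hmod)
    rcases hok with ⟨θ', s', hveq, hsub, hsem''⟩ | ⟨hveq, hsem'', hrnk⟩
    · have hm0v : m0 ψ v.1 = sizeL θ' := by rw [hveq]; rfl
      have hsz : sizeL θ' < BB ψ := sizeL_lt_BB ψ hΓψ hsub
      refine ⟨by rw [hd]; exact hsem'', ?_, ?_, ?_⟩
      · rw [hm0v]
        show sizeL θ' ≤ BB ψ + sizeH m
        omega
      · intro hc
        rw [hm0v] at hc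
        exfalso
        have : BB ψ + sizeH m = m0 ψ (St.Wk m s x) := rfl
        omega
      · intro _
        apply rnk_lt_of_m0_lt
        rw [hm0v]
        show sizeL θ' < BB ψ + sizeH m
        omega
    · have hm0v : m0 ψ v.1 = BB ψ + sizeH m := by
        rcases hveq with hveq | hveq <;> rw [hveq] <;> rfl
      have hsgv : sgSt v.1 = s := by
        rcases hveq with hveq | hveq <;> rw [hveq] <;> rfl
      refine ⟨by rw [hd]; exact hsem'', le_of_eq hm0v, fun _ => hsgv, ?_⟩
      intro hsgt
      have hs : s = false := by rw [← hsgv, hsgt]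
      have hb := hrnk hs
      rw [hd]
      calc rnk ψ w v.1 (bump p x)
          < toLex4 (BB ψ + sizeH m) (witH w m (jumpWkPos (ΓOf m) w x p))
              (2*(n-(x:ℕ))) (wkRem (ΓOf m) (w x) (p x)) := hb
        _ = rnk ψ w (St.Wk m s x) p := rfl

end LocalAll



/-! ### Assembling the automaton -/

section Assemble

variable {AP : Type} {n : ℕ}

/-- The finite set of wellformed states. -/
noncomputable def SQ (ψ : HSQF AP (Fin n)) : Finset (St AP n) :=
  ((clL ψ ×ˢ (Finset.univ : Finset Bool) ×ˢ (Finset.univ : Finset (Fin n))).image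
      fun t => St.L t.1 t.2.1 t.2.2) ∪
  ((subH ψ ×ˢ (Finset.univ : Finset Bool)).image fun t => St.H t.1 t.2) ∪
  ((((subH ψ).filter IsMod) ×ˢ (Finset.univ : Finset Bool) ×ˢ Finset.range (n+1)).image
      fun t => St.W t.1 t.2.1 t.2.2) ∪
  ((((subH ψ).filter IsMod) ×ˢ (Finset.univ : Finset Bool) ×ˢ (Finset.univ : Finset (Fin n))).image
      fun t => St.Wk t.1 t.2.1 t.2.2)

lemma mem_SQ {ψ : HSQF AP (Fin n)} {q : St AP n} : q ∈ SQ ψ ↔ WfSt ψ q := by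
  cases q with
  | L θ s x =>
    simp only [SQ, Finset.mem_union, Finset.mem_image, Finset.mem_product, Finset.mem_univ,
      Finset.mem_filter, Finset.mem_range, WfSt]
    constructor
    · rintro (((⟨⟨a, b, c⟩, ⟨ha, _⟩, heq⟩ | ⟨⟨a, b⟩, _, heq⟩) | ⟨⟨a, b, c⟩, _, heq⟩) |
        ⟨⟨a, b, c⟩, _, heq⟩) <;> first
      | (cases heq; exact ha)
      | (exfalso; cases heq)
    · intro h
      exact Or.inl (Or.inl (Or.inl ⟨⟨θ, s, x⟩, ⟨h, trivial, trivial⟩, rfl⟩))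
  | H φ s =>
    simp only [SQ, Finset.mem_union, Finset.mem_image, Finset.mem_product, Finset.mem_univ,
      Finset.mem_filter, Finset.mem_range, WfSt]
    constructor
    · rintro (((⟨⟨a, b, c⟩, _, heq⟩ | ⟨⟨a, b⟩, ⟨ha, _⟩, heq⟩) | ⟨⟨a, b, c⟩, _, heq⟩) |
        ⟨⟨a, b, c⟩, _, heq⟩) <;> first
      | (cases heq; exact ha)
      | (exfalso; cases heq)
    · intro h
      exact Or.inl (Or.inl (Or.inr ⟨⟨φ, s⟩, ⟨h, trivial⟩, rfl⟩))
  | W m s k =>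
    simp only [SQ, Finset.mem_union, Finset.mem_image, Finset.mem_product, Finset.mem_univ,
      Finset.mem_filter, Finset.mem_range, WfSt]
    constructor
    · rintro (((⟨⟨a, b, c⟩, _, heq⟩ | ⟨⟨a, b⟩, _, heq⟩) |
        ⟨⟨a, b, c⟩, ⟨⟨ha, hmod⟩, _, hc⟩, heq⟩) | ⟨⟨a, b, c⟩, _, heq⟩)
      · exact absurd heq (by simp)
      · exact absurd heq (by simp)
      · injection heq with e1 e2 e3
        subst e1
        subst e2
        subst e3
        refine ⟨hmod, ha, ?_⟩
        show c ≤ n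
        have hc' : c < n + 1 := hc
        omega
      · exact absurd heq (by simp)
    · rintro ⟨hmod, hmem, hk⟩
      refine Or.inl (Or.inr ⟨⟨m, s, k⟩, ⟨⟨hmem, hmod⟩, trivial, ?_⟩, rfl⟩)
      show k < n + 1
      omega
  | Wk m s x =>
    simp only [SQ, Finset.mem_union, Finset.mem_image, Finset.mem_product, Finset.mem_univ,
      Finset.mem_filter, Finset.mem_range, WfSt]
    constructor
    · rintro (((⟨⟨a, b, c⟩, _, heq⟩ | ⟨⟨a, b⟩, _, heq⟩) | ⟨⟨a, b, c⟩, _, heq⟩) |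
        ⟨⟨a, b, c⟩, ⟨⟨ha, hmod⟩, _⟩, heq⟩) <;> first
      | (cases heq; exact ⟨hmod, ha⟩)
      | (exfalso; cases heq)
    · rintro ⟨hmod, hmem⟩
      exact Or.inr ⟨⟨m, s, x⟩, ⟨⟨hmem, hmod⟩, trivial, trivial⟩, rfl⟩

noncomputable instance instQT (ψ : HSQF AP (Fin n)) : Fintype {q : St AP n // q ∈ SQ ψ} :=
  FinsetCoe.fintype _

/-- Number of states. -/
noncomputable def NQ (ψ : HSQF AP (Fin n)) : ℕ := Fintype.card {q : St AP n // q ∈ SQ ψ}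

noncomputable def eqv (ψ : HSQF AP (Fin n)) : {q : St AP n // q ∈ SQ ψ} ≃ Fin (NQ ψ) :=
  Fintype.equivFin _

/-- The underlying raw state of an index. -/
noncomputable def stOf (ψ : HSQF AP (Fin n)) (i : Fin (NQ ψ)) : St AP n :=
  ((eqv ψ).symm i).1

lemma stOf_wf (ψ : HSQF AP (Fin n)) (i : Fin (NQ ψ)) : WfSt ψ (stOf ψ i) :=
  mem_SQ.mp ((eqv ψ).symm i).2

lemma stOf_eqv (ψ : HSQF AP (Fin n)) (q : St AP n) (h : q ∈ SQ ψ) :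
    stOf ψ (eqv ψ ⟨q, h⟩) = q := by
  rw [stOf, Equiv.symm_apply_apply]

/-- Transport a positive Boolean formula to index states. -/
noncomputable def adapt (ψ : HSQF AP (Fin n)) :
    PosBool (St AP n × Fin n) → PosBool (Fin (NQ ψ) × Fin n)
  | .tt => .tt
  | .ff => .ff
  | .var v => if h : v.1 ∈ SQ ψ then .var (eqv ψ ⟨v.1, h⟩, v.2) else .ff
  | .por a b => .por (adapt ψ a) (adapt ψ b)
  | .pand a b => .pand (adapt ψ a) (adapt ψ b)

lemma satBy_adapt (ψ : HSQF AP (Fin n)) (M : Set (Fin (NQ ψ) × Fin n)) :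
    ∀ b : PosBool (St AP n × Fin n),
      PosBool.SatBy M (adapt ψ b) ↔
      PosBool.SatBy {v : St AP n × Fin n |
        ∃ h : v.1 ∈ SQ ψ, ((eqv ψ) ⟨v.1, h⟩, v.2) ∈ M} b := by
  intro b
  induction b with
  | tt => simp [adapt]
  | ff => simp [adapt]
  | var v =>
    simp only [adapt]
    split
    case isTrue h =>
      constructor
      · intro hm
        exact ⟨h, hm⟩
      · rintro ⟨h', hm'⟩
        exact hm'
    case isFalse h =>
      constructor
      · intro hm
        exact absurd hm (by simp)
      · rintro ⟨h', _⟩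
        exact absurd h' h
  | por a b iha ihb => simp only [adapt, satBy_por, iha, ihb]
  | pand a b iha ihb => simp only [adapt, satBy_pand, iha, ihb]

/-- The automaton for the matrix `ψ` (when `n > 0`). -/
noncomputable def mkA (hn : 0 < n) (ψ : HSQF AP (Fin n)) : AAWA (Set AP) n where
  n := NQ ψ
  init := eqv ψ ⟨St.H ψ true, mem_SQ.mpr (subH_self ψ)⟩
  trans := fun i σ => adapt ψ (transRaw hn (stOf ψ i) σ)
  acc := {i | sgSt (stOf ψ i) = false}

theorem mkA_complete (hn : 0 < n) (ψ : HSQF AP (Fin n)) (w : Fin n → ℕ → Set AP)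
    (h : HSQF.Sat ψ (fun x => ((w x : Trace AP), 0))) : w ∈ (mkA hn ψ).Lang := by
  apply masterComplete (mkA hn ψ) w
    (fun i p => SemRaw w (stOf ψ i) p)
    (fun i p => rnk ψ w (stOf ψ i) p)
    ((· < ·) : Lex4 → Lex4 → Prop) lex4_wf
  · intro q p hsem
    have hwf : WfSt ψ (stOf ψ q) := stOf_wf ψ q
    have hloc := localC hn ψ w (stOf ψ q) hwf p hsem
    -- transfer to index level
    set M : Set (Fin (NQ ψ) × Fin n) := {v' | SemRaw w (stOf ψ v'.1) (bump p v'.2) ∧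
      (v'.1 ∉ (mkA hn ψ).acc →
        rnk ψ w (stOf ψ v'.1) (bump p v'.2) < rnk ψ w (stOf ψ q) p)} with hMdef
    have hsat : PosBool.SatBy M ((mkA hn ψ).trans q (fun d => w d (p d))) := by
      show PosBool.SatBy M (adapt ψ (transRaw hn (stOf ψ q) (fun d => w d (p d))))
      rw [satBy_adapt]
      refine satBy_mono ?_ hloc
      rintro v ⟨hvwf, hvsem, _, _, hvrnk⟩
      have hmem : v.1 ∈ SQ ψ := mem_SQ.mpr hvwf
      refine ⟨hmem, ?_, ?_⟩
      · rw [stOf_eqv]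
        exact hvsem
      · intro hnacc
        rw [stOf_eqv]
        apply hvrnk
        have : ¬ sgSt (stOf ψ (eqv ψ ⟨v.1, hmem⟩)) = false := hnacc
        rw [stOf_eqv] at this
        cases hsg : sgSt v.1
        · exact absurd hsg this
        · rfl
    obtain ⟨k, c, hsub, hsatc⟩ := satBy_finite hsat
    refine ⟨k, c, hsatc, ?_⟩
    intro j
    have := hsub ⟨j, rfl⟩
    rw [hMdef] at this
    exact ⟨this.1, this.2⟩
  · show SemRaw w (stOf ψ ((mkA hn ψ).init)) (fun _ => 0)
    rw [show (mkA hn ψ).init = eqv ψ ⟨St.H ψ true, mem_SQ.mpr (subH_self ψ)⟩ from rfl,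
      stOf_eqv]
    exact h

theorem mkA_sound (hn : 0 < n) (ψ : HSQF AP (Fin n)) (w : Fin n → ℕ → Set AP)
    (h : ¬ HSQF.Sat ψ (fun x => ((w x : Trace AP), 0))) : w ∉ (mkA hn ψ).Lang := by
  apply masterSound (mkA hn ψ) w
    (fun i p => ¬ SemRaw w (stOf ψ i) p)
    (fun i => m0 ψ (stOf ψ i))
    (fun i => sgSt (stOf ψ i))
    (fun i => Iff.rfl)
    (fun i p => rnk ψ w (stOf ψ i) p)
    ((· < ·) : Lex4 → Lex4 → Prop) lex4_wf
  · intro q p hns k c hsatc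
    have hwf : WfSt ψ (stOf ψ q) := stOf_wf ψ q
    have hsatc' : PosBool.SatBy {v : St AP n × Fin n |
        ∃ h : v.1 ∈ SQ ψ, ((eqv ψ) ⟨v.1, h⟩, v.2) ∈ Set.range c}
        (transRaw hn (stOf ψ q) (fun d => w d (p d))) := by
      exact (satBy_adapt ψ (Set.range c) _).mp hsatc
    obtain ⟨v, ⟨hmem, hidx⟩, hsemv, hm0v, hsgv, hrnkv⟩ :=
      localS hn ψ w (stOf ψ q) hwf p hns _ hsatc'
    obtain ⟨j, hj⟩ := hidx
    refine ⟨j, ?_, ?_, ?_, ?_⟩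
    · rw [hj]
      show ¬ SemRaw w (stOf ψ (eqv ψ ⟨v.1, hmem⟩)) (bump p v.2)
      rw [stOf_eqv]
      exact hsemv
    · rw [hj]
      show m0 ψ (stOf ψ (eqv ψ ⟨v.1, hmem⟩)) ≤ _
      rw [stOf_eqv]
      exact hm0v
    · rw [hj]
      show m0 ψ (stOf ψ (eqv ψ ⟨v.1, hmem⟩)) = _ → sgSt (stOf ψ (eqv ψ ⟨v.1, hmem⟩)) = _
      rw [stOf_eqv]
      exact hsgv
    · rw [hj]
      show sgSt (stOf ψ (eqv ψ ⟨v.1, hmem⟩)) = false →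
        rnk ψ w (stOf ψ (eqv ψ ⟨v.1, hmem⟩)) (bump p v.2) < rnk ψ w (stOf ψ q) p
      rw [stOf_eqv]
      exact hrnkv
  · show ¬ SemRaw w (stOf ψ ((mkA hn ψ).init)) (fun _ => 0)
    rw [show (mkA hn ψ).init = eqv ψ ⟨St.H ψ true, mem_SQ.mpr (subH_self ψ)⟩ from rfl,
      stOf_eqv]
    exact h

end Assemble

/-! ### The degenerate case `n = 0` -/

section Zero

variable {AP : Type}

noncomputable def zeroA (ψ : HSQF AP (Fin 0)) : AAWA (Set AP) 0 where
  n := 1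
  init := ⟨0, Nat.one_pos⟩
  trans := fun _ _ =>
    if HSQF.Sat ψ (fun x => ((fun _ => (∅ : Set AP)), 0)) then .tt else .ff
  acc := ∅

lemma zero_asgn_eq (ψ : HSQF AP (Fin 0)) (w : Fin 0 → ℕ → Set AP) :
    HSQF.Sat ψ (fun x => ((w x : Trace AP), 0)) ↔
    HSQF.Sat ψ (fun x => ((fun _ => (∅ : Set AP)), 0)) := by
  have : (fun x : Fin 0 => ((w x : Trace AP), 0)) =
      (fun x : Fin 0 => ((fun _ => (∅ : Set AP)), (0 : ℕ))) := by
    funext x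
    exact x.elim0
  rw [this]

theorem zeroA_lang (ψ : HSQF AP (Fin 0)) :
    (zeroA ψ).Lang = {π : Fin 0 → (ℕ → Set AP) |
      HSQF.Sat ψ (fun x => ((π x : Trace AP), 0))} := by
  ext w
  by_cases hc : HSQF.Sat ψ (fun x => ((fun _ => (∅ : Set AP)), 0))
  · constructor
    · intro _
      exact (zero_asgn_eq ψ w).mpr hc
    · intro _
      refine ⟨⟨{τ | τ = []}, fun _ => (⟨0, Nat.one_pos⟩, fun _ => 0), rfl, ?_, rfl, ?_⟩, ?_⟩
      · intro τ hτ σ hpre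
        rw [Set.mem_setOf_eq] at hτ
        subst hτ
        exact List.prefix_nil.mp hpre
      · intro τ hτ
        refine ⟨0, Fin.elim0, ?_, ?_, fun j => j.elim0⟩
        · show PosBool.SatBy _ (if HSQF.Sat ψ _ then PosBool.tt else PosBool.ff)
          rw [if_pos hc]
          trivial
        · intro j
          constructor
          · intro hj
            rw [Set.mem_setOf_eq] at hj
            exact absurd hj (by simp)
          · omega
      · intro b hb N
        exfalso
        have h1 := hb 1
        rw [Set.mem_setOf_eq] at h1
        have : branchPrefix b 1 = [b 0] := by
          rw [branchPrefix_succ]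
          rfl
        rw [this] at h1
        exact absurd h1 (by simp)
  · constructor
    · rintro ⟨run, _⟩
      exfalso
      obtain ⟨k, c, hsat, _, _⟩ := run.step [] run.rootMem
      have : (zeroA ψ).trans (run.Lab []).1 (fun d => w d ((run.Lab []).2 d)) =
          PosBool.ff := by
        show (if HSQF.Sat ψ _ then PosBool.tt else PosBool.ff) = _
        rw [if_neg hc]
        rfl
      rw [this] at hsat
      exact absurd hsat (by simp)
    · intro hw
      exact absurd ((zero_asgn_eq ψ w).mp hw) hc

end Zero


end Stmt4

theorem stmt4 (AP : Type) [Fintype AP] (n : ℕ) (ψ : HSQF AP (Fin n)) :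
    ∃ A : AAWA (Set AP) n,
      A.Lang = {π : Fin n → (ℕ → Set AP) |
        HSQF.Sat ψ (fun x => ((π x : Trace AP), 0))} := by
  rcases Nat.eq_zero_or_pos n with rfl | hn
  · exact ⟨Stmt4.zeroA ψ, Stmt4.zeroA_lang ψ⟩
  · refine ⟨Stmt4.mkA hn ψ, ?_⟩
    ext w
    constructor
    · intro hw
      by_contra hns
      exact Stmt4.mkA_sound hn ψ w hns hw
    · intro hw
      exact Stmt4.mkA_complete hn ψ w hw
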